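/- arXiv:2104.05535 — 13 statements merged into one kernel-verified Lean document; each statement's English description precedes it below -/
import Mathlib

section
/- Let K be a nonempty compact Hausdorff space. Then C(K) has an L-orthogonal sequence if and only if there exist two sequences (C_n) and (D_n) of closed subsets of K with C_n ∩ D_n = ∅ for every n, such that for every nonempty open subset O of K there exists m ∈ ℕ with C_n ∩ O ≠ ∅ and D_n ∩ O ≠ ∅ for every n ≥ m. -/
/-!
If `(f n)` is L-orthogonal, testing it against a bump `u` of height one supported in a nonempty
open set `O` forces `‖u + f n‖ → 2`, which is only possible if `f n` eventually exceeds `1/2`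
somewhere in `O`; by symmetry it also drops below `-1/2` there. This gives `C n = {f n ≥ 1/2}`
and `D n = {f n ≤ -1/2}`. Conversely, Urysohn functions `f n` equal to `1` on `C n` and `-1` on
`D n` work: near a point where `|g|` attains `‖g‖`, eventually `f n` has the sign of `g`.
-/

open Filter Topology Set

def IsLOrthogonalSeq {X : Type*} [SeminormedAddCommGroup X] (f : ℕ → X) : Prop :=
  (∀ n, ‖f n‖ ≤ 1) ∧ ∀ g : X, Tendsto (fun n => ‖g + f n‖) atTop (𝓝 (1 + ‖g‖))

theorem IsLOrthogonalSeq.neg {X : Type*} [SeminormedAddCommGroup X] {f : ℕ → X}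
    (hf : IsLOrthogonalSeq f) : IsLOrthogonalSeq (-f) := by
  refine ⟨fun n => by simpa using hf.1 n, fun g => ?_⟩
  have h := hf.2 (-g)
  rw [norm_neg] at h
  exact h.congr fun n => by rw [← norm_neg, neg_add, neg_neg, Pi.neg_apply]

namespace ContinuousMap

variable {K : Type*} [TopologicalSpace K]

theorem exists_eq_one_eqOn_compl_zero [CompletelyRegularSpace K] {O : Set K} (hO : IsOpen O)
    {x₀ : K} (hx₀ : x₀ ∈ O) :
    ∃ u : C(K, ℝ), u x₀ = 1 ∧ EqOn u 0 Oᶜ ∧ ∀ x, u x ∈ Icc (0 : ℝ) 1 := by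
  obtain ⟨v, hv, hvx₀, hvO⟩ := CompletelyRegularSpace.completely_regular_isOpen x₀ O hO hx₀
  refine ⟨⟨fun x => 1 - v x, by fun_prop⟩, by simp [hvx₀], fun x hx => by simp [hvO hx],
    fun x => ⟨by simp [unitInterval.le_one], by simp [unitInterval.nonneg]⟩⟩

variable [CompactSpace K]

theorem norm_add_le_one_add_of_lt_on_support {u f : C(K, ℝ)} {t : ℝ} (ht : 0 ≤ t)
    (hf : ‖f‖ ≤ 1) (hu : ∀ x, u x ∈ Icc (0 : ℝ) 1) (hfu : ∀ x, u x ≠ 0 → f x < t) :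
    ‖u + f‖ ≤ 1 + t := by
  refine (norm_le _ (by linarith)).2 fun x => ?_
  have hfx : |f x| ≤ 1 := (f.norm_coe_le_norm x).trans hf
  rw [add_apply, Real.norm_eq_abs, abs_le]
  rw [abs_le] at hfx
  obtain ⟨hu₀, hu₁⟩ := hu x
  by_cases hux : u x = 0
  · constructor <;> linarith
  · have := hfu x hux
    constructor <;> linarith

theorem exists_norm_apply_eq_norm {E : Type*} [SeminormedAddCommGroup E] [Nonempty K]
    (g : C(K, E)) : ∃ x, ‖g x‖ = ‖g‖ := by
  obtain ⟨x, -, hx⟩ := isCompact_univ.exists_isMaxOn univ_nonempty g.continuous.norm.continuousOn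
  exact ⟨x, le_antisymm (g.norm_coe_le_norm x) ((norm_le _ (norm_nonneg _)).2 fun y => hx trivial)⟩

theorem tendsto_norm_add_of_apply_eq_norm {f : ℕ → C(K, ℝ)} (hf : ∀ n, ‖f n‖ ≤ 1)
    (hf_one : ∀ O : Set K, IsOpen O → O.Nonempty → ∀ᶠ n in atTop, ∃ x ∈ O, 1 ≤ f n x)
    {g : C(K, ℝ)} {x₀ : K} (hx₀ : g x₀ = ‖g‖) :
    Tendsto (fun n => ‖g + f n‖) atTop (𝓝 (1 + ‖g‖)) := by
  refine tendsto_order.2 ⟨fun a ha => ?_, fun a ha => Eventually.of_forall fun n => ?_⟩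
  · have hO : IsOpen {x | a - 1 < g x} := isOpen_lt continuous_const g.continuous
    filter_upwards [hf_one _ hO ⟨x₀, show a - 1 < g x₀ by linarith⟩]
      with n ⟨y, (hy : a - 1 < g y), hfy⟩
    calc a < g y + f n y := by linarith
      _ ≤ ‖(g + f n) y‖ := le_abs_self _
      _ ≤ ‖g + f n‖ := norm_coe_le_norm _ y
  · calc ‖g + f n‖ ≤ ‖g‖ + ‖f n‖ := norm_add_le _ _
      _ < a := by linarith [hf n]

end ContinuousMap

open ContinuousMap

theorem IsLOrthogonalSeq.eventually_exists_half_le {K : Type*} [TopologicalSpace K]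
    [CompactSpace K] [CompletelyRegularSpace K] {f : ℕ → C(K, ℝ)} (hf : IsLOrthogonalSeq f)
    {O : Set K} (hO : IsOpen O) (hne : O.Nonempty) :
    ∀ᶠ n in atTop, ∃ x ∈ O, 1 / 2 ≤ f n x := by
  obtain ⟨x₀, hx₀⟩ := hne
  obtain ⟨u, hux₀, huO, hu⟩ := exists_eq_one_eqOn_compl_zero hO hx₀
  have hu_norm : 1 ≤ ‖u‖ := by simpa [hux₀] using u.norm_coe_le_norm x₀
  have hlarge : ∀ᶠ n in atTop, 1 + 1 / 2 < ‖u + f n‖ :=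
    (hf.2 u).eventually (eventually_gt_nhds (by linarith))
  filter_upwards [hlarge] with n hn
  by_contra! hsmall
  refine hn.not_ge (norm_add_le_one_add_of_lt_on_support (by norm_num) (hf.1 n) hu fun x hx => ?_)
  exact hsmall x (by_contra fun h => hx (huO h))

theorem isLOrthogonalSeq_of_eventually_exists {K : Type*} [TopologicalSpace K] [CompactSpace K]
    [Nonempty K] {f : ℕ → C(K, ℝ)} (hf : ∀ n, ‖f n‖ ≤ 1)
    (hf_one : ∀ O : Set K, IsOpen O → O.Nonempty → ∀ᶠ n in atTop, ∃ x ∈ O, 1 ≤ f n x)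
    (hf_neg_one : ∀ O : Set K, IsOpen O → O.Nonempty → ∀ᶠ n in atTop, ∃ x ∈ O, f n x ≤ -1) :
    IsLOrthogonalSeq f := by
  refine ⟨hf, fun g => ?_⟩
  obtain ⟨x₀, hx₀⟩ := exists_norm_apply_eq_norm g
  rcases (abs_eq (norm_nonneg g)).1 hx₀ with hpos | hneg
  · exact tendsto_norm_add_of_apply_eq_norm hf hf_one hpos
  · have hf_neg_one' (O : Set K) (hO : IsOpen O) (hne : O.Nonempty) :
        ∀ᶠ n in atTop, ∃ x ∈ O, 1 ≤ (-f) n x :=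
      (hf_neg_one O hO hne).mono fun n ⟨x, hx, hfx⟩ => ⟨x, hx, by simpa [le_neg] using hfx⟩
    have := tendsto_norm_add_of_apply_eq_norm (fun n => by simpa using hf n) hf_neg_one'
      (g := -g) (x₀ := x₀) (by simp [hneg])
    rw [norm_neg] at this
    exact this.congr fun n => by rw [Pi.neg_apply, ← neg_add, norm_neg]

/-- Let `K` be a nonempty compact Hausdorff space. Then `C(K)` has an
`L`-orthogonal sequence if and only if there exist two sequences `(C n)`, `(D n)` of closed
subsets of `K` with `C n ∩ D n = ∅` for every `n`, such that for every nonempty open subset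
`O` of `K` there exists `m` with `C n ∩ O ≠ ∅` and `D n ∩ O ≠ ∅` for every `n ≥ m`. -/
theorem stmt1 (K : Type) [TopologicalSpace K] [CompactSpace K] [T2Space K] [Nonempty K] :
    (∃ f : ℕ → C(K, ℝ), (∀ n, ‖f n‖ ≤ 1) ∧
      ∀ g : C(K, ℝ), Filter.Tendsto (fun n => ‖g + f n‖) Filter.atTop (nhds (1 + ‖g‖))) ↔
    (∃ C D : ℕ → Set K, (∀ n, IsClosed (C n)) ∧ (∀ n, IsClosed (D n)) ∧
      (∀ n, C n ∩ D n = ∅) ∧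
      ∀ O : Set K, IsOpen O → O.Nonempty →
        ∃ m : ℕ, ∀ n ≥ m, (C n ∩ O).Nonempty ∧ (D n ∩ O).Nonempty) := by
  constructor
  · rintro ⟨f, hf⟩
    replace hf : IsLOrthogonalSeq f := hf
    refine ⟨fun n => {x | 1 / 2 ≤ f n x}, fun n => {x | f n x ≤ -(1 / 2)},
      fun n => isClosed_le continuous_const (f n).continuous,
      fun n => isClosed_le (f n).continuous continuous_const,
      fun n => eq_empty_of_forall_notMem fun x ⟨h₁, h₂⟩ => by
        simp only [mem_ofPred_eq] at h₁ h₂; linarith,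
      fun O hO hne => eventually_atTop.1 ?_⟩
    filter_upwards [hf.eventually_exists_half_le hO hne, hf.neg.eventually_exists_half_le hO hne]
      with n ⟨x, hxO, hx⟩ ⟨y, hyO, hy⟩
    exact ⟨⟨x, hx, hxO⟩, ⟨y, le_neg.1 hy, hyO⟩⟩
  · rintro ⟨C, D, hC, hD, hCD, hCD_meet⟩
    choose f hfD hfC hf using fun n => exists_bounded_mem_Icc_of_closed_of_le (hD n) (hC n)
      (disjoint_iff_inter_eq_empty.2 (inter_comm (C n) (D n) ▸ hCD n)) (by norm_num : (-1 : ℝ) ≤ 1)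
    refine ⟨fun n => (f n).toContinuousMap, isLOrthogonalSeq_of_eventually_exists
      (fun n => (norm_le _ zero_le_one).2 fun x => abs_le.2 (hf n x)) (fun O hO hne => ?_)
      (fun O hO hne => ?_)⟩
    all_goals filter_upwards [eventually_atTop.2 (hCD_meet O hO hne)] with n hn
    · obtain ⟨x, hxC, hxO⟩ := hn.1
      exact ⟨x, hxO, (hfC n hxC).ge⟩
    · obtain ⟨x, hxD, hxO⟩ := hn.2
      exact ⟨x, hxO, (hfD n hxD).le⟩
end

section
/- Let Y be a real Banach space which is sequentially almost square, i.e., there exists a sequence (y_n) in the unit sphere of Y such that ‖y + y_n‖ → 1 as n → ∞ for every y in the unit sphere of Y. Then the dual space Y* has an L-orthogonal sequence. -/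
/-!
Let `g n` be a norming functional of `y n`. Testing against unit vectors `z`, the almost-square
condition forces `y n → 0` weakly and `g n z → 0`. Hence, for a unit vector `z` almost norming
`φ`, `(φ + g n) (z + y n) / ‖z + y n‖ → φ z + 1`, which bounds `‖φ + g n‖` from below by almost
`‖φ‖ + 1`; the upper bound is the triangle inequality.
-/

open Filter Topology

variable {Y : Type*} [NormedAddCommGroup Y] [NormedSpace ℝ Y]

-- Only the limit condition; the normalization `‖y n‖ = 1` is kept as a separate hypothesis.
def IsAlmostSquareSeq (y : ℕ → Y) : Prop :=
  ∀ z : Y, ‖z‖ = 1 → Tendsto (fun n => ‖z + y n‖) atTop (𝓝 1)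

lemma StrongDual.apply_le_norm_mul_norm (φ : StrongDual ℝ Y) (x : Y) : φ x ≤ ‖φ‖ * ‖x‖ :=
  (Real.le_norm_self _).trans (φ.le_opNorm x)

lemma StrongDual.exists_norm_eq_one_lt_apply [Nontrivial Y] (φ : StrongDual ℝ Y) {r : ℝ}
    (hr : r < ‖φ‖) : ∃ z : Y, ‖z‖ = 1 ∧ r < φ z := by
  obtain ⟨x, hx, hrx⟩ : ∃ x : Y, ‖x‖ = 1 ∧ r < |φ x| := by
    rcases lt_or_ge r 0 with hr₀ | hr₀
    · obtain ⟨x, hx⟩ := exists_norm_eq Y zero_le_one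
      exact ⟨x, hx, hr₀.trans_le (abs_nonneg _)⟩
    · lift r to NNReal using hr₀
      obtain ⟨x, hx, hrx⟩ := φ.exists_nnnorm_eq_one_lt_apply_of_lt_opNNNorm (r := r) hr
      exact ⟨x, congrArg NNReal.toReal hx, hrx⟩
  rcases lt_abs.1 hrx with h | h
  · exact ⟨x, hx, h⟩
  · exact ⟨-x, by rwa [norm_neg], by rwa [map_neg]⟩

namespace IsAlmostSquareSeq

variable {y : ℕ → Y}

lemma eventually_apply_lt [Nontrivial Y] (hsq : IsAlmostSquareSeq y) (φ : StrongDual ℝ Y)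
    {ε : ℝ} (hε : 0 < ε) : ∀ᶠ n in atTop, φ (y n) < ε := by
  obtain ⟨z, hz, hφz⟩ := φ.exists_norm_eq_one_lt_apply (show ‖φ‖ - ε < ‖φ‖ by linarith)
  have hbound : Tendsto (fun n => ‖φ‖ * ‖z + y n‖ - φ z) atTop (𝓝 (‖φ‖ * 1 - φ z)) :=
    ((hsq z hz).const_mul ‖φ‖).sub_const (φ z)
  filter_upwards [hbound.eventually (eventually_lt_nhds (show ‖φ‖ * 1 - φ z < ε by linarith))] with n hn
  calc φ (y n) = φ (z + y n) - φ z := by rw [map_add]; ring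
    _ ≤ ‖φ‖ * ‖z + y n‖ - φ z := by gcongr; exact φ.apply_le_norm_mul_norm _
    _ < ε := hn

lemma tendsto_apply_zero [Nontrivial Y] (hsq : IsAlmostSquareSeq y) (φ : StrongDual ℝ Y) :
    Tendsto (fun n => φ (y n)) atTop (𝓝 0) := by
  refine tendsto_order.2 ⟨fun a ha => ?_, fun a ha => hsq.eventually_apply_lt φ ha⟩
  filter_upwards [hsq.eventually_apply_lt (-φ) (neg_pos.2 ha)] with n hn
  simp only [neg_apply] at hn
  linarith

lemma tendsto_norming_apply_zero (hsq : IsAlmostSquareSeq y) {g : ℕ → StrongDual ℝ Y}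
    (hg : ∀ n, ‖g n‖ ≤ 1) (hgy : ∀ n, g n (y n) = 1) {z : Y} (hz : ‖z‖ = 1) :
    Tendsto (fun n => g n z) atTop (𝓝 0) := by
  have hle : ∀ n x, g n x ≤ ‖x‖ := fun n x =>
    ((g n).apply_le_norm_mul_norm x).trans (mul_le_of_le_one_left (norm_nonneg x) (hg n))
  have hlower : Tendsto (fun n => 1 - ‖-z + y n‖) atTop (𝓝 0) := by
    simpa using (hsq (-z) (by rwa [norm_neg])).const_sub 1
  have hupper : Tendsto (fun n => ‖z + y n‖ - 1) atTop (𝓝 0) := by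
    simpa using (hsq z hz).sub_const 1
  refine tendsto_of_tendsto_of_tendsto_of_le_of_le hlower hupper (fun n => ?_) (fun n => ?_)
  · have := hle n (-z + y n)
    rw [map_add, map_neg, hgy n] at this
    linarith
  · have := hle n (z + y n)
    rw [map_add, hgy n] at this
    linarith

lemma tendsto_norm_add_norming [Nontrivial Y] (hsq : IsAlmostSquareSeq y)
    {g : ℕ → StrongDual ℝ Y} (hg : ∀ n, ‖g n‖ ≤ 1) (hgy : ∀ n, g n (y n) = 1)
    (φ : StrongDual ℝ Y) : Tendsto (fun n => ‖φ + g n‖) atTop (𝓝 (1 + ‖φ‖)) := by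
  refine tendsto_order.2 ⟨fun c hc => ?_, fun c hc => Eventually.of_forall fun n => ?_⟩
  · obtain ⟨z, hz, hcz⟩ := φ.exists_norm_eq_one_lt_apply (show c - 1 < ‖φ‖ by linarith)
    have hnum : Tendsto (fun n => (φ + g n) (z + y n)) atTop (𝓝 (φ z + 0 + 0 + 1)) := by
      have heval : ∀ n, (φ + g n) (z + y n) = φ z + φ (y n) + g n z + 1 := fun n => by
        simp only [add_apply, map_add, hgy n]; ring
      simp only [heval]
      exact ((tendsto_const_nhds.add (hsq.tendsto_apply_zero φ)).add
        (hsq.tendsto_norming_apply_zero hg hgy hz)).add tendsto_const_nhds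
    have hratio := hnum.div (hsq z hz) one_ne_zero
    filter_upwards [hratio.eventually (eventually_gt_nhds (show c < (φ z + 0 + 0 + 1) / 1 by linarith))] with n hn
    exact hn.trans_le (div_le_of_le_mul₀ (norm_nonneg _) (norm_nonneg _)
      ((φ + g n).apply_le_norm_mul_norm _))
  · calc ‖φ + g n‖ ≤ ‖φ‖ + ‖g n‖ := norm_add_le _ _
      _ < c := by linarith [hg n]

end IsAlmostSquareSeq

theorem stmt2_general (Y : Type) [NormedAddCommGroup Y] [NormedSpace ℝ Y]
    (y : ℕ → Y) (hy : ∀ n, ‖y n‖ = 1)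
    (hsq : ∀ z : Y, ‖z‖ = 1 →
      Filter.Tendsto (fun n => ‖z + y n‖) Filter.atTop (nhds 1)) :
    ∃ g : ℕ → StrongDual ℝ Y, (∀ n, ‖g n‖ ≤ 1) ∧
      ∀ φ : StrongDual ℝ Y,
        Filter.Tendsto (fun n => ‖φ + g n‖) Filter.atTop (nhds (1 + ‖φ‖)) := by
  have : Nontrivial Y := ⟨⟨y 0, 0, by simp [← norm_ne_zero_iff, hy 0]⟩⟩
  choose g hg hgy using fun n => exists_dual_vector'' ℝ (y n)
  exact ⟨g, hg, IsAlmostSquareSeq.tendsto_norm_add_norming hsq hg fun n => by simp [hgy n, hy n]⟩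

/-- If a real Banach space `Y` is sequentially almost square (there is a
sequence `(y n)` in the unit sphere of `Y` with `‖y + y n‖ → 1` for every `y` in the unit
sphere), then the dual `Y*` has an `L`-orthogonal sequence: a sequence `(g n)` in the closed
unit ball of `Y*` with `‖φ + g n‖ → 1 + ‖φ‖` for every `φ ∈ Y*`. -/
theorem stmt2 (Y : Type) [NormedAddCommGroup Y] [NormedSpace ℝ Y] [CompleteSpace Y]
    (y : ℕ → Y) (hy : ∀ n, ‖y n‖ = 1)
    (hsq : ∀ z : Y, ‖z‖ = 1 →
      Filter.Tendsto (fun n => ‖z + y n‖) Filter.atTop (nhds 1)) :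
    ∃ g : ℕ → StrongDual ℝ Y, (∀ n, ‖g n‖ ≤ 1) ∧
      ∀ φ : StrongDual ℝ Y,
        Filter.Tendsto (fun n => ‖φ + g n‖) Filter.atTop (nhds (1 + ‖φ‖)) :=
  stmt2_general Y y hy hsq
end

section
/- Let X be a real Banach space and let (x_n) be an L-orthogonal sequence in X. Then for every finite-dimensional subspace F of X and every ε > 0 there exists m ∈ ℕ such that ‖y + λ x_n‖ ≥ (1 − ε)(‖y‖ + |λ|) for every y ∈ F, every λ ∈ ℝ and every n ≥ m. -/
open Filter Topology

/-- Pointwise convergence: for any `y` and `l`, `‖y + l • x n‖ → ‖y‖ + |l|`. -/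
lemma stmt3_ptwise {X : Type} [NormedAddCommGroup X] [NormedSpace ℝ X]
    (x : ℕ → X)
    (hL : ∀ z : X, Filter.Tendsto (fun n => ‖z + x n‖) Filter.atTop (nhds (1 + ‖z‖)))
    (y : X) (l : ℝ) :
    Tendsto (fun n => ‖y + l • x n‖) atTop (nhds (‖y‖ + |l|)) := by
  rcases eq_or_ne l 0 with rfl | hl
  · simpa using tendsto_const_nhds
  · have h := (hL (l⁻¹ • y)).const_mul |l|
    have heq : ∀ n, |l| * ‖l⁻¹ • y + x n‖ = ‖y + l • x n‖ := by
      intro n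
      rw [← Real.norm_eq_abs, ← norm_smul, smul_add, smul_inv_smul₀ hl]
    have hval : |l| * (1 + ‖l⁻¹ • y‖) = ‖y‖ + |l| := by
      rw [norm_smul, Real.norm_eq_abs, abs_inv]
      have hla : |l| ≠ 0 := abs_ne_zero.mpr hl
      field_simp
      ring
    rw [← hval]
    exact h.congr heq

/-- Let `X` be a real Banach space and `(x n)` an `L`-orthogonal sequence
in `X`. Then for every finite-dimensional subspace `F` of `X` and every `ε > 0` there is
`m ∈ ℕ` such that `‖y + l • x n‖ ≥ (1 - ε) * (‖y‖ + |l|)` for every `y ∈ F`, every `l ∈ ℝ`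
and every `n ≥ m`. -/
theorem stmt3 (X : Type) [NormedAddCommGroup X] [NormedSpace ℝ X] [CompleteSpace X]
    (x : ℕ → X) (hx : ∀ n, ‖x n‖ ≤ 1)
    (hL : ∀ z : X, Filter.Tendsto (fun n => ‖z + x n‖) Filter.atTop (nhds (1 + ‖z‖)))
    (F : Subspace ℝ X) (hF : FiniteDimensional ℝ F) (ε : ℝ) (hε : 0 < ε) :
    ∃ m : ℕ, ∀ y ∈ F, ∀ l : ℝ, ∀ n ≥ m, (1 - ε) * (‖y‖ + |l|) ≤ ‖y + l • x n‖ := by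
  classical
  haveI : ProperSpace (F × ℝ) := FiniteDimensional.proper ℝ (F × ℝ)
  set f : ℕ → F × ℝ → ℝ := fun n p => ‖(p.1 : X) + p.2 • x n‖ with hf
  set g : F × ℝ → ℝ := fun p => ‖p.1‖ + |p.2| with hg
  -- Lipschitz-type estimates
  have hfLip : ∀ n (p q : F × ℝ), f n p ≤ f n q + 2 * dist p q := by
    intro n p q
    have h1 : ((p.1 : X) + p.2 • x n) - ((q.1 : X) + q.2 • x n)
        = ((p.1 : X) - (q.1 : X)) + (p.2 - q.2) • x n := by
      rw [sub_smul]; abel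
    have h2 : f n p - f n q ≤ ‖((p.1 : X) - (q.1 : X)) + (p.2 - q.2) • x n‖ := by
      rw [← h1]; exact norm_sub_norm_le _ _
    have h3 : ‖((p.1 : X) - (q.1 : X)) + (p.2 - q.2) • x n‖
        ≤ ‖(p.1 : X) - (q.1 : X)‖ + |p.2 - q.2| * ‖x n‖ := by
      refine (norm_add_le _ _).trans ?_
      rw [norm_smul, Real.norm_eq_abs]
    have h4 : ‖(p.1 : X) - (q.1 : X)‖ = dist p.1 q.1 := by
      rw [Subtype.dist_eq, dist_eq_norm]
    have h5 : |p.2 - q.2| = dist p.2 q.2 := (Real.dist_eq _ _).symm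
    have h6 : dist p.1 q.1 ≤ dist p q := le_max_left _ _
    have h7 : dist p.2 q.2 ≤ dist p q := le_max_right _ _
    have h8 : |p.2 - q.2| * ‖x n‖ ≤ |p.2 - q.2| * 1 :=
      mul_le_mul_of_nonneg_left (hx n) (abs_nonneg _)
    nlinarith [h2, h3, h8, h4, h5, h6, h7]
  have hgLip : ∀ p q : F × ℝ, g p ≤ g q + 2 * dist p q := by
    intro p q
    have h1 : ‖p.1‖ - ‖q.1‖ ≤ dist p.1 q.1 := by
      rw [dist_eq_norm]; exact norm_sub_norm_le _ _
    have h2 : |p.2| - |q.2| ≤ dist p.2 q.2 := by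
      rw [Real.dist_eq]; exact abs_sub_abs_le_abs_sub _ _
    have h6 : dist p.1 q.1 ≤ dist p q := le_max_left _ _
    have h7 : dist p.2 q.2 ≤ dist p q := le_max_right _ _
    simp only [hg]
    linarith
  -- the "sphere" is compact
  set S : Set (F × ℝ) := {p | g p = 1} with hSdef
  have hgcont : Continuous g := by
    simp only [hg]
    exact (continuous_fst.norm).add (continuous_snd.abs)
  have hSclosed : IsClosed S := isClosed_eq hgcont continuous_const
  have hSsub : S ⊆ Metric.closedBall 0 1 := by
    intro p hp
    have hp1 : ‖p.1‖ + |p.2| = 1 := hp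
    rw [Metric.mem_closedBall, dist_zero_right]
    have : ‖p‖ = max ‖p.1‖ ‖p.2‖ := rfl
    rw [this, Real.norm_eq_abs]
    have h0 : 0 ≤ ‖p.1‖ := norm_nonneg _
    have h0' : 0 ≤ |p.2| := abs_nonneg _
    exact max_le (by linarith) (by linarith)
  have hS : IsCompact S :=
    (isCompact_closedBall (0 : F × ℝ) 1).of_isClosed_subset hSclosed hSsub
  -- finite subcover by small balls
  have hε5 : (0:ℝ) < ε / 5 := by positivity
  obtain ⟨t, ht⟩ := hS.elim_finite_subcover (fun p : F × ℝ => Metric.ball p (ε/5))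
    (fun p => Metric.isOpen_ball)
    (fun p hp => Set.mem_iUnion.2 ⟨p, Metric.mem_ball_self hε5⟩)
  -- eventual closeness at the net points
  have hev : ∀ᶠ n in atTop, ∀ p ∈ t, |f n p - g p| < ε/5 := by
    rw [Filter.eventually_all_finset]
    intro p hp
    have hpt : Tendsto (fun n => f n p) atTop (nhds (g p)) := by
      have := stmt3_ptwise x hL (p.1 : X) p.2
      simpa [hf, hg] using this
    have := Metric.tendsto_atTop.mp hpt (ε/5) hε5
    obtain ⟨N, hN⟩ := this
    filter_upwards [Filter.eventually_ge_atTop N] with n hn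
    have := hN n hn
    rwa [Real.dist_eq] at this
  obtain ⟨m, hm⟩ := Filter.eventually_atTop.mp hev
  refine ⟨m, ?_⟩
  intro y hy l n hn
  set T : ℝ := ‖y‖ + |l| with hT
  have hT0 : 0 ≤ T := by positivity
  rcases eq_or_lt_of_le hT0 with hTz | hTpos
  · rw [← hTz, mul_zero]; exact norm_nonneg _
  -- rescale to the sphere
  set p : F × ℝ := (T⁻¹ • (⟨y, hy⟩ : F), T⁻¹ * l) with hpdef
  have hnormy : ‖(⟨y, hy⟩ : F)‖ = ‖y‖ := rfl
  have hpS : p ∈ S := by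
    have : g p = T⁻¹ * ‖y‖ + T⁻¹ * |l| := by
      simp only [hg, hpdef, norm_smul, Real.norm_eq_abs, abs_mul, hnormy,
        abs_inv, abs_of_pos hTpos]
    simp only [hSdef, Set.mem_setOf_eq, this]
    field_simp
    exact hT.symm
  obtain ⟨q, hq, hpq⟩ := Set.mem_iUnion₂.mp (ht hpS)
  have hd : dist p q < ε/5 := Metric.mem_ball.mp hpq
  have h1 : |f n q - g q| < ε/5 := hm n hn q hq
  have h2 : f n q ≤ f n p + 2 * dist q p := hfLip n q p
  have h3 : g p ≤ g q + 2 * dist p q := hgLip p q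
  have hgp1 : g p = 1 := hpS
  have hdc : dist q p = dist p q := dist_comm q p
  have hfnp : 1 - ε ≤ f n p := by
    rw [← hgp1]
    obtain ⟨ha, hb⟩ := abs_lt.mp h1
    rw [dist_comm q p] at h2
    have e1 : f n q - 2 * dist p q ≤ f n p := by linarith [h2]
    have e2 : g q - ε/5 < f n q := by linarith [ha]
    have e3 : g p - 2 * dist p q ≤ g q := by linarith [h3]
    have e4 : dist p q < ε/5 := hd
    clear_value f g S T p
    have s1 : g p - 2 * dist p q - ε/5 < f n q := by linarith [e2, e3]
    have s2 : g p - 4 * dist p q - ε/5 < f n p := by linarith [s1, e1]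
    have s3 : g p - ε < f n p := by linarith [s2, e4]
    linarith [s3]
  -- unscale
  have hfp : f n p = T⁻¹ * ‖y + l • x n‖ := by
    have hc : ((T⁻¹ • (⟨y, hy⟩ : F) : F) : X) = T⁻¹ • y := rfl
    simp only [hf, hpdef, hc, mul_smul, ← smul_add, norm_smul, Real.norm_eq_abs,
      abs_inv, abs_of_pos hTpos]
  rw [hfp] at hfnp
  have := mul_le_mul_of_nonneg_left hfnp (le_of_lt hTpos)
  have hTne : T ≠ 0 := ne_of_gt hTpos
  calc (1 - ε) * T = T * (1 - ε) := by ring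
    _ ≤ T * (T⁻¹ * ‖y + l • x n‖) := this
    _ = ‖y + l • x n‖ := by field_simp
end

section
/- Let X be a real Banach space with an L-orthogonal sequence (x_n). Let (F_n) be an increasing sequence of finite-dimensional subspaces of X and let (ε_n) be a sequence of real numbers with 0 < ε_n < 1 for all n. Then there exists a subsequence (y_n) of (x_n) (i.e., y_n = x_{φ(n)} for some strictly increasing φ : ℕ → ℕ) such that for every n ∈ ℕ, every x ∈ F_n and every sequence (α_j)_{j>n} of nonnegative reals with ∑_{j=n+1}^∞ α_j = 1, one has (1 − ε_n)(1 + ‖x‖) ≤ ‖x + ∑_{j=n+1}^∞ α_j y_j‖. -/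
open Filter Finset Metric

lemma unif_on_compact {X : Type} [NormedAddCommGroup X] [NormedSpace ℝ X]
    (x : ℕ → X)
    (hL : ∀ z : X, Tendsto (fun n => ‖z + x n‖) atTop (nhds (1 + ‖z‖)))
    (K : Set X) (hK : IsCompact K) (δ : ℝ) (hδ : 0 < δ) :
    ∃ N, ∀ k ≥ N, ∀ v ∈ K, 1 + ‖v‖ - δ ≤ ‖v + x k‖ := by
  obtain ⟨t, htf, htcov⟩ := (Metric.totallyBounded_iff.1 hK.totallyBounded) (δ/3) (by linarith)
  have hev : ∀ᶠ k in atTop, ∀ z ∈ t, 1 + ‖z‖ - δ/3 ≤ ‖z + x k‖ := by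
    rw [htf.eventually_all]
    intro z _
    exact (hL z).eventually (eventually_ge_nhds (by linarith))
  obtain ⟨N, hN⟩ := eventually_atTop.1 hev
  refine ⟨N, fun k hk v hv => ?_⟩
  obtain ⟨w, hwt, hvw⟩ := Set.mem_iUnion₂.1 (htcov hv)
  have h1 := hN k hk w hwt
  have hd : ‖v - w‖ < δ/3 := by rw [← dist_eq_norm]; exact hvw
  have h2 : ‖w + x k‖ - ‖v + x k‖ ≤ ‖w - v‖ := by
    have := norm_sub_norm_le (w + x k) (v + x k)
    simpa [add_sub_add_right_eq_sub] using this
  have h3 : ‖v‖ - ‖w‖ ≤ ‖v - w‖ := norm_sub_norm_le v w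
  have h4 : ‖w - v‖ = ‖v - w‖ := norm_sub_rev w v
  linarith

lemma unif_on_subspace {X : Type} [NormedAddCommGroup X] [NormedSpace ℝ X]
    (x : ℕ → X) (hx : ∀ n, ‖x n‖ ≤ 1)
    (hL : ∀ z : X, Tendsto (fun n => ‖z + x n‖) atTop (nhds (1 + ‖z‖)))
    (G : Submodule ℝ X) (hG : FiniteDimensional ℝ G) (δ : ℝ) (hδ : 0 < δ) :
    ∃ N, ∀ k ≥ N, ∀ v ∈ G, (1 - δ) * (1 + ‖v‖) ≤ ‖v + x k‖ := by
  have hK : IsCompact ((Subtype.val : G → X) '' (Metric.closedBall (0 : G) (2/δ))) :=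
    (isCompact_closedBall (0:G) (2/δ)).image continuous_subtype_val
  obtain ⟨N, hN⟩ := unif_on_compact x hL _ hK δ hδ
  refine ⟨N, fun k hk v hv => ?_⟩
  by_cases h : ‖v‖ ≤ 2/δ
  · have hvK : v ∈ (Subtype.val : G → X) '' (Metric.closedBall (0 : G) (2/δ)) := by
      refine ⟨⟨v, hv⟩, ?_, rfl⟩
      simpa [Metric.mem_closedBall, dist_zero_right] using h
    have := hN k hk v hvK
    nlinarith [norm_nonneg v]
  · push_neg at h
    have h1 : ‖v‖ - ‖x k‖ ≤ ‖v + x k‖ := by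
      have := norm_sub_norm_le v (-(x k))
      simpa [sub_neg_eq_add] using this
    have h2 : 2 < δ * ‖v‖ := by
      have := (div_lt_iff₀ hδ).1 h
      linarith [this]
    have h3 := hx k
    nlinarith [norm_nonneg v]

noncomputable def buildSeq (step : ℕ → (ℕ → ℕ) → ℕ) : ℕ → ℕ
  | m => step m (fun k => if _ : k < m then buildSeq step k else 0)
termination_by m => m
decreasing_by omega

lemma buildSeq_eq (step : ℕ → (ℕ → ℕ) → ℕ) (m : ℕ) :
    buildSeq step m = step m (fun k => if _ : k < m then buildSeq step k else 0) := by
  rw [buildSeq]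

/-- Let `X` be a real Banach space with an `L`-orthogonal sequence `(x n)`.
Let `(F n)` be an increasing sequence of finite-dimensional subspaces of `X` and `(ε n)` a
sequence of reals with `0 < ε n < 1`. Then there is a subsequence `(x (φ n))` such that for
every `n`, every `z ∈ F n` and every sequence `(α j)` of nonnegative reals supported on
`{j : j > n}` with `∑_{j>n} α j = 1`, one has
`(1 - ε n) * (1 + ‖z‖) ≤ ‖z + ∑_{j>n} α j • x (φ j)‖`. -/
theorem stmt4 (X : Type) [NormedAddCommGroup X] [NormedSpace ℝ X] [CompleteSpace X]
    (x : ℕ → X) (hx : ∀ n, ‖x n‖ ≤ 1)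
    (hL : ∀ z : X, Filter.Tendsto (fun n => ‖z + x n‖) Filter.atTop (nhds (1 + ‖z‖)))
    (F : ℕ → Subspace ℝ X) (hmono : Monotone F) (hfd : ∀ n, FiniteDimensional ℝ (F n))
    (ε : ℕ → ℝ) (hε : ∀ n, 0 < ε n ∧ ε n < 1) :
    ∃ φ : ℕ → ℕ, StrictMono φ ∧
      ∀ (n : ℕ) (z : X), z ∈ F n → ∀ α : ℕ → ℝ, (∀ j, 0 ≤ α j) → (∀ j ≤ n, α j = 0) →
        Summable α → (∑' j, α j) = 1 →
        (1 - ε n) * (1 + ‖z‖) ≤ ‖z + ∑' j, α j • x (φ j)‖ := by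
  -- tolerance sequence
  set δf : ℕ → ℝ := fun j => ((Finset.range (j+1)).inf' Finset.nonempty_range_add_one ε) / 2^(j+2)
    with hδf_def
  have hδf_pos : ∀ j, 0 < δf j := by
    intro j
    apply div_pos _ (by positivity)
    rw [Finset.lt_inf'_iff]
    exact fun i _ => (hε i).1
  have hδf_le : ∀ n j, n ≤ j → δf j ≤ ε n / 2^(j+2) := by
    intro n j hnj
    apply div_le_div_of_nonneg_right ?_ (by positivity)
    exact Finset.inf'_le ε (Finset.mem_range_succ_iff.2 hnj)
  -- choice of the next index
  have key : ∀ (m : ℕ) (prev : ℕ → ℕ), ∃ p : ℕ,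
      (∀ k < m, prev k < p) ∧
      ∀ v ∈ (F m ⊔ Submodule.span ℝ (x '' (prev '' Set.Iio m)) : Submodule ℝ X),
        (1 - δf m) * (1 + ‖v‖) ≤ ‖v + x p‖ := by
    intro m prev
    haveI := hfd m
    haveI : FiniteDimensional ℝ (Submodule.span ℝ (x '' (prev '' Set.Iio m))) :=
      FiniteDimensional.span_of_finite ℝ (((Set.finite_Iio m).image prev).image x)
    obtain ⟨N, hN⟩ := unif_on_subspace x hx hL
      (F m ⊔ Submodule.span ℝ (x '' (prev '' Set.Iio m))) inferInstance (δf m) (hδf_pos m)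
    refine ⟨max N (((Finset.range m).sup prev) + 1), fun k hk => ?_, fun v hv => ?_⟩
    · calc prev k ≤ (Finset.range m).sup prev := Finset.le_sup (Finset.mem_range.2 hk)
        _ < ((Finset.range m).sup prev) + 1 := Nat.lt_succ_self _
        _ ≤ _ := le_max_right _ _
    · exact hN _ (le_max_left _ _) v hv
  choose step hstep1 hstep2 using key
  set φ : ℕ → ℕ := buildSeq step with hφ_def
  have hφeq : ∀ m, φ m = step m (fun k => if _ : k < m then φ k else 0) :=
    fun m => buildSeq_eq step m
  have hφmono : StrictMono φ := by
    intro a b hab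
    have h := hstep1 b (fun k => if _ : k < b then φ k else 0) a hab
    simp only [dif_pos hab] at h
    rwa [← hφeq b] at h
  have keyQ : ∀ m, ∀ v ∈ (F m ⊔ Submodule.span ℝ (x '' (φ '' Set.Iio m)) : Submodule ℝ X),
      (1 - δf m) * (1 + ‖v‖) ≤ ‖v + x (φ m)‖ := by
    intro m
    have h2 := hstep2 m (fun k => if _ : k < m then φ k else 0)
    have himg : (fun k => if _ : k < m then φ k else 0) '' Set.Iio m = φ '' Set.Iio m :=
      Set.image_congr (fun k hk => dif_pos hk)
    rw [himg, ← hφeq m] at h2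
    exact h2
  refine ⟨φ, hφmono, ?_⟩
  intro n z hzF α hα0 hαsupp hαs hα1
  have hterm_norm : ∀ j, ‖α j • x (φ j)‖ ≤ α j := by
    intro j
    rw [norm_smul, Real.norm_eq_abs, abs_of_nonneg (hα0 j)]
    calc α j * ‖x (φ j)‖ ≤ α j * 1 := mul_le_mul_of_nonneg_left (hx _) (hα0 j)
      _ = α j := mul_one _
  have hsmul_sum : Summable (fun j => α j • x (φ j)) :=
    Summable.of_norm_bounded hαs hterm_norm
  have hαle1 : ∀ j, α j ≤ 1 := by
    intro j
    rw [← hα1]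
    exact Summable.le_tsum hαs j (fun i _ => hα0 i)
  have hAle1 : ∀ s : Finset ℕ, ∑ j ∈ s, α j ≤ 1 := by
    intro s; rw [← hα1]; exact Summable.sum_le_tsum s (fun i _ => hα0 i) hαs
  have hSle : ∀ m, ‖z + ∑ j ∈ Finset.Ioc n m, α j • x (φ j)‖ ≤ ‖z‖ + 1 := by
    intro m
    calc ‖z + ∑ j ∈ Finset.Ioc n m, α j • x (φ j)‖
        ≤ ‖z‖ + ‖∑ j ∈ Finset.Ioc n m, α j • x (φ j)‖ := norm_add_le _ _
      _ ≤ ‖z‖ + ∑ j ∈ Finset.Ioc n m, ‖α j • x (φ j)‖ := by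
          gcongr
          exact norm_sum_le _ _
      _ ≤ ‖z‖ + ∑ j ∈ Finset.Ioc n m, α j := by
          gcongr with j hj
          exact hterm_norm j
      _ ≤ ‖z‖ + 1 := by
          have := hAle1 (Finset.Ioc n m)
          linarith
  -- the key finite estimate
  have main : ∀ m, ‖z‖ + (∑ j ∈ Finset.Ioc n m, α j)
      - (‖z‖+2) * (∑ j ∈ Finset.Ioc n m, δf j)
      ≤ ‖z + ∑ j ∈ Finset.Ioc n m, α j • x (φ j)‖ := by
    intro m
    induction m with
    | zero => simp [Finset.Ioc_eq_empty (Nat.not_lt_zero n)]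
    | succ m ih =>
      by_cases hnm : n ≤ m
      · rw [Finset.sum_Ioc_succ_top hnm, Finset.sum_Ioc_succ_top hnm,
          Finset.sum_Ioc_succ_top hnm]
        set S := z + ∑ j ∈ Finset.Ioc n m, α j • x (φ j) with hS_def
        have hSG : S ∈ (F (m+1) ⊔ Submodule.span ℝ (x '' (φ '' Set.Iio (m+1))) :
            Submodule ℝ X) := by
          apply Submodule.add_mem
          · exact Submodule.mem_sup_left (hmono (Nat.le_succ_of_le hnm) hzF)
          · apply Submodule.sum_mem
            intro j hj
            apply Submodule.smul_mem
            apply Submodule.mem_sup_right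
            apply Submodule.subset_span
            exact ⟨φ j, ⟨j, Nat.lt_succ_of_le (Finset.mem_Ioc.1 hj).2, rfl⟩, rfl⟩
        have hexp : (‖z‖+2) * ((∑ j ∈ Finset.Ioc n m, δf j) + δf (m+1))
            = (‖z‖+2) * (∑ j ∈ Finset.Ioc n m, δf j) + (‖z‖+2) * δf (m+1) :=
          mul_add _ _ _
        rcases (hα0 (m+1)).eq_or_lt with ha | ha
        · have hz0 : α (m+1) • x (φ (m+1)) = 0 := by rw [← ha, zero_smul]
          rw [hz0, add_zero, ← hS_def, ← ha]
          have hpos : 0 ≤ (‖z‖+2) * δf (m+1) :=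
            mul_nonneg (by linarith [norm_nonneg z]) (hδf_pos (m+1)).le
          linarith [ih, hexp]
        · set a := α (m+1) with ha_def
          have hka := keyQ (m+1) (a⁻¹ • S) (Submodule.smul_mem _ _ hSG)
          have hsplit : S + a • x (φ (m+1)) = a • (a⁻¹ • S + x (φ (m+1))) := by
            rw [smul_add, smul_inv_smul₀ (ne_of_gt ha)]
          have hnorm1 : ‖S + a • x (φ (m+1))‖ = a * ‖a⁻¹ • S + x (φ (m+1))‖ := by
            rw [hsplit, norm_smul, Real.norm_eq_abs, abs_of_pos ha]
          have hnorm2 : ‖a⁻¹ • S‖ = a⁻¹ * ‖S‖ := by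
            rw [norm_smul, Real.norm_eq_abs, abs_of_pos (inv_pos.2 ha)]
          rw [hnorm2] at hka
          have hx1 : a * (1 + a⁻¹ * ‖S‖) = a + ‖S‖ := by
            field_simp
          have h5 : (1 - δf (m+1)) * (a + ‖S‖) ≤ ‖S + a • x (φ (m+1))‖ := by
            rw [hnorm1]
            have hmul := mul_le_mul_of_nonneg_left hka ha.le
            calc (1 - δf (m+1)) * (a + ‖S‖)
                = (1 - δf (m+1)) * (a * (1 + a⁻¹ * ‖S‖)) := by rw [hx1]
              _ = a * ((1 - δf (m+1)) * (1 + a⁻¹ * ‖S‖)) := by ring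
              _ ≤ a * ‖a⁻¹ • S + x (φ (m+1))‖ := hmul
          have hassoc : z + ((∑ j ∈ Finset.Ioc n m, α j • x (φ j)) + a • x (φ (m+1)))
              = S + a • x (φ (m+1)) := by
            rw [hS_def]
            exact (add_assoc z _ _).symm
          rw [hassoc]
          have hδ1 := hδf_pos (m+1)
          have hS1 : ‖S‖ ≤ ‖z‖ + 1 := by rw [hS_def]; exact hSle m
          have ha1 : a ≤ 1 := hαle1 (m+1)
          have hSpos := norm_nonneg S
          nlinarith [ih, h5, hexp,
            mul_nonneg hδ1.le (by linarith [norm_nonneg z] : (0:ℝ) ≤ ‖z‖ + 2 - a - ‖S‖)]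
      · push_neg at hnm
        have he : Finset.Ioc n (m+1) = ∅ := Finset.Ioc_eq_empty (by omega)
        rw [he]
        simp
  -- replace Ioc sums by range sums
  have hrange : ∀ m, ∑ j ∈ Finset.Ioc n m, α j • x (φ j)
      = ∑ j ∈ Finset.range (m+1), α j • x (φ j) := by
    intro m
    apply Finset.sum_subset
    · intro j hj
      rw [Finset.mem_range]
      exact Nat.lt_succ_of_le (Finset.mem_Ioc.1 hj).2
    · intro j hj hj2
      have hjn : j ≤ n := by
        rw [Finset.mem_range] at hj
        rw [Finset.mem_Ioc] at hj2
        omega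
      rw [hαsupp j hjn, zero_smul]
  have hrangeα : ∀ m, ∑ j ∈ Finset.Ioc n m, α j = ∑ j ∈ Finset.range (m+1), α j := by
    intro m
    apply Finset.sum_subset
    · intro j hj
      rw [Finset.mem_range]
      exact Nat.lt_succ_of_le (Finset.mem_Ioc.1 hj).2
    · intro j hj hj2
      have hjn : j ≤ n := by
        rw [Finset.mem_range] at hj
        rw [Finset.mem_Ioc] at hj2
        omega
      exact hαsupp j hjn
  -- bound on the sum of tolerances
  have hΔ : ∀ m, ∑ j ∈ Finset.Ioc n m, δf j ≤ ε n / 2 := by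
    intro m
    calc ∑ j ∈ Finset.Ioc n m, δf j
        ≤ ∑ j ∈ Finset.Ioc n m, ε n / 2^(j+2) := by
          apply Finset.sum_le_sum
          intro j hj
          exact hδf_le n j (le_of_lt (Finset.mem_Ioc.1 hj).1)
      _ ≤ ∑ j ∈ Finset.range (m+1), ε n / 2^(j+2) := by
          apply Finset.sum_le_sum_of_subset_of_nonneg
          · intro j hj
            rw [Finset.mem_range]
            exact Nat.lt_succ_of_le (Finset.mem_Ioc.1 hj).2
          · intro j _ _
            exact div_nonneg (hε n).1.le (by positivity)
      _ = (ε n / 4) * ∑ j ∈ Finset.range (m+1), (1/2 : ℝ)^j := by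
          rw [Finset.mul_sum]
          apply Finset.sum_congr rfl
          intro j _
          rw [div_pow, one_pow, pow_add]
          ring
      _ ≤ (ε n / 4) * 2 := by
          have h4 : (0:ℝ) ≤ ε n / 4 := div_nonneg (hε n).1.le (by norm_num)
          exact mul_le_mul_of_nonneg_left (sum_geometric_two_le _) h4
      _ = ε n / 2 := by ring
  -- the tail estimate
  have htail : ∀ m, ‖z‖ + 2 * (∑ j ∈ Finset.range (m+1), α j) - 1
      - (‖z‖+2) * (ε n / 2) ≤ ‖z + ∑' j, α j • x (φ j)‖ := by
    intro m
    have h1 := main m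
    rw [hrange m, hrangeα m] at h1
    have hΔm := hΔ m
    have hsa : Summable (fun j => α (j+(m+1))) := (summable_nat_add_iff (m+1)).2 hαs
    have hsplitT := Summable.sum_add_tsum_nat_add (f := fun j => α j • x (φ j)) (m+1) hsmul_sum
    have hRnorm : ‖∑' j, α (j+(m+1)) • x (φ (j+(m+1)))‖
        ≤ 1 - ∑ j ∈ Finset.range (m+1), α j := by
      have h2 : ‖∑' j, α (j+(m+1)) • x (φ (j+(m+1)))‖ ≤ ∑' j, α (j+(m+1)) :=
        tsum_of_norm_bounded hsa.hasSum (fun j => hterm_norm (j+(m+1)))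
      have h3 := Summable.sum_add_tsum_nat_add (f := α) (m+1) hαs
      rw [hα1] at h3
      linarith
    have hdecomp : z + ∑' j, α j • x (φ j)
        = (z + ∑ j ∈ Finset.range (m+1), α j • x (φ j))
          + ∑' j, α (j+(m+1)) • x (φ (j+(m+1))) := by
      rw [← hsplitT]
      abel
    have hlow : ‖z + ∑ j ∈ Finset.range (m+1), α j • x (φ j)‖
        - ‖∑' j, α (j+(m+1)) • x (φ (j+(m+1)))‖ ≤ ‖z + ∑' j, α j • x (φ j)‖ := by
      rw [hdecomp]
      have := norm_le_add_norm_add (z + ∑ j ∈ Finset.range (m+1), α j • x (φ j))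
        (∑' j, α (j+(m+1)) • x (φ (j+(m+1))))
      linarith
    have hmulΔ : (‖z‖+2) * (∑ j ∈ Finset.Ioc n m, δf j) ≤ (‖z‖+2) * (ε n / 2) :=
      mul_le_mul_of_nonneg_left hΔm (by linarith [norm_nonneg z])
    linarith
  -- take the limit in m
  have hA : Tendsto (fun m => ∑ j ∈ Finset.range (m+1), α j) atTop (nhds 1) := by
    have h := hαs.hasSum.tendsto_sum_nat
    rw [hα1] at h
    exact h.comp (tendsto_add_atTop_nat 1)
  have hlim : Tendsto (fun m => ‖z‖ + 2 * (∑ j ∈ Finset.range (m+1), α j) - 1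
      - (‖z‖+2) * (ε n / 2)) atTop
      (nhds (‖z‖ + 2 * 1 - 1 - (‖z‖+2) * (ε n / 2))) := by
    apply Tendsto.sub_const
    apply Tendsto.sub_const
    exact (hA.const_mul 2).const_add ‖z‖
  have hfinal : ‖z‖ + 2 * 1 - 1 - (‖z‖+2) * (ε n / 2) ≤ ‖z + ∑' j, α j • x (φ j)‖ :=
    le_of_tendsto' hlim htail
  have hεn := (hε n).1
  nlinarith [norm_nonneg z, mul_nonneg hεn.le (norm_nonneg z)]
end

section
/- Let X be a real Banach space with an L-orthogonal sequence (x_n), let Z be a separable subspace of X, and let (F_n) be an increasing sequence of finite-dimensional subspaces of X whose union is dense in Z. Let (ε_n) be a sequence of positive reals converging to zero, and let (y_n) be a subsequence of (x_n) satisfying: for every n ∈ ℕ, every x ∈ F_n and every sequence (α_j)_{j>n} of nonnegative reals with ∑_{j=n+1}^∞ α_j = 1, one has (1 − ε_n)(1 + ‖x‖) ≤ ‖x + ∑_{j=n+1}^∞ α_j y_j‖. Then every element u of the bidual X** belonging to ⋂_n (weak*-closure of the convex hull of {ι(y_j) : j > n}) satisfies ‖ι(x) + u‖ = 1 + ‖x‖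 for every x ∈ Z, where ι : X → X** is the canonical embedding. -/
/-!
For `z ∈ F n` the hypothesis on `(y j)` says that `z + conv {y j : j > n}` misses the open ball of
radius `c = (1 - ε n) (1 + ‖z‖)`. Hahn–Banach separates them by a functional `f` of norm at most
one with `f ≥ c` on the translate; evaluation at `f` is weak*-continuous and affine, so this bound
passes to `ι z + u`, whence `c ≤ (ι z + u) f ≤ ‖ι z + u‖`. Letting `n → ∞` gives
`1 + ‖z‖ ≤ ‖ι z + u‖` on `⋃ F n`, the reverse inequality holds because `‖u‖ ≤ 1`, and both sides
are continuous in `z`, so the equality extends to the closure, which contains `Z`.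
-/


open NormedSpace Filter Set Metric

theorem StrongDual.mem_of_toWeakDual_mem_closure_convexHull {E : Type*} [NormedAddCommGroup E]
    [NormedSpace ℝ E] {s C : Set (StrongDual ℝ E)} (hC : Convex ℝ C)
    (hC_closed : IsClosed (WeakDual.toStrongDual ⁻¹' C)) (hsC : s ⊆ C) {v : StrongDual ℝ E}
    (hv : StrongDual.toWeakDual v ∈ closure (StrongDual.toWeakDual '' convexHull ℝ s)) :
    v ∈ C :=
  closure_minimal (t := WeakDual.toStrongDual ⁻¹' C)
    (image_subset_iff.2 (convexHull_min hsC hC)) hC_closed hv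

theorem exists_hasSum_of_mem_convexHull_image {ι X : Type*} [AddCommMonoid X] [Module ℝ X]
    [TopologicalSpace X] [ContinuousAdd X] [ContinuousConstSMul ℝ X] {y : ι → X} {s : Set ι}
    {w : X} (hw : w ∈ convexHull ℝ (y '' s)) :
    ∃ α : ι → ℝ, (∀ j, 0 ≤ α j) ∧ (∀ j ∉ s, α j = 0) ∧ HasSum α 1 ∧
      HasSum (fun j => α j • y j) w := by
  classical
  suffices convexHull ℝ (y '' s) ⊆ {w | ∃ α : ι → ℝ, (∀ j, 0 ≤ α j) ∧ (∀ j ∉ s, α j = 0) ∧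
      HasSum α 1 ∧ HasSum (fun j => α j • y j) w} from this hw
  refine convexHull_min ?_ ?_
  · rintro _ ⟨j, hj, rfl⟩
    refine ⟨fun i => if i = j then 1 else 0, fun i => ?_, fun i hi => ?_, hasSum_ite_eq j 1, ?_⟩
    · dsimp only; split_ifs <;> norm_num
    · simp [show i ≠ j by rintro rfl; exact hi hj]
    · convert hasSum_single (f := fun i => (if i = j then (1 : ℝ) else 0) • y i) j
        fun i hi => by simp [hi] using 1
      simp
  · rintro _ ⟨α, hα0, hαs, hα1, hαw⟩ _ ⟨β, hβ0, hβs, hβ1, hβw⟩ a b ha hb hab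
    refine ⟨fun j => a * α j + b * β j, fun j => ?_, fun j hj => ?_, ?_, ?_⟩
    · exact add_nonneg (mul_nonneg ha (hα0 j)) (mul_nonneg hb (hβ0 j))
    · simp [hαs j hj, hβs j hj]
    · simpa [hab] using (hα1.const_smul a).add (hβ1.const_smul b)
    · simpa [add_smul, mul_smul] using (hαw.const_smul a).add (hβw.const_smul b)

section Separation

variable {X : Type*} [NormedAddCommGroup X] [NormedSpace ℝ X]

theorem exists_norm_le_one_forall_le_apply {A : Set X} (hA : Convex ℝ A) {c : ℝ} (hc : 0 < c)
    (h : ∀ a ∈ A, c ≤ ‖a‖) : ∃ f : StrongDual ℝ X, ‖f‖ ≤ 1 ∧ ∀ a ∈ A, c ≤ f a := by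
  have hdisj : Disjoint (ball (0 : X) c) A :=
    disjoint_left.2 fun a ha haA => (mem_ball_zero_iff.1 ha).not_ge (h a haA)
  obtain ⟨f, r, hf_ball, hf_A⟩ :=
    geometric_hahn_banach_open (convex_ball 0 c) isOpen_ball hA hdisj
  have hr : 0 < r := by simpa using hf_ball 0 (mem_ball_self hc)
  have hf_closedBall : closedBall (0 : X) c ⊆ {b | ‖f b‖ ≤ r} := by
    rw [← closure_ball 0 hc.ne']
    refine closure_minimal (fun b hb => abs_le.2 ⟨?_, (hf_ball b hb).le⟩)
      (isClosed_le (by fun_prop) continuous_const)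
    have := hf_ball (-b) (by simpa using hb)
    rw [map_neg] at this
    linarith
  have hf_norm : ‖f‖ ≤ r / c := f.opNorm_bound_of_ball_bound hc r hf_closedBall
  refine ⟨(c / r) • f, ?_, fun a ha => ?_⟩
  · calc ‖(c / r) • f‖ = c / r * ‖f‖ := by rw [norm_smul, Real.norm_of_nonneg (by positivity)]
      _ ≤ c / r * (r / c) := by gcongr
      _ = 1 := by field_simp
  · calc c = c / r * r := by field_simp
      _ ≤ c / r * f a := by gcongr; exact hf_A a ha
      _ = ((c / r) • f) a := rfl

theorem le_norm_inclusionInDoubleDual_add {ι : Type*} {y : ι → X} {s : Set ι} {z : X} {c : ℝ}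
    {u : StrongDual ℝ (StrongDual ℝ X)}
    (hu : StrongDual.toWeakDual u ∈ closure (StrongDual.toWeakDual ''
      convexHull ℝ ((fun j => inclusionInDoubleDual ℝ X (y j)) '' s)))
    (h : ∀ w ∈ convexHull ℝ (y '' s), c ≤ ‖z + w‖) :
    c ≤ ‖inclusionInDoubleDual ℝ X z + u‖ := by
  set v := inclusionInDoubleDual ℝ X z + u with hv
  rcases le_or_gt c 0 with hc | hc
  · exact hc.trans (norm_nonneg v)
  obtain ⟨f, hf_norm, hf⟩ := exists_norm_le_one_forall_le_apply
    ((convex_convexHull ℝ _).translate z) hc (forall_mem_image.2 h)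
  have hu_f : c - f z ≤ u f := by
    refine StrongDual.mem_of_toWeakDual_mem_closure_convexHull (C := {w | c - f z ≤ w f})
      (convex_halfSpace_ge ⟨fun _ _ => rfl, fun _ _ => rfl⟩ _)
      (isClosed_le continuous_const (WeakDual.eval_continuous f)) ?_ hu
    rintro _ ⟨j, hj, rfl⟩
    have := hf _ ⟨y j, subset_convexHull ℝ _ ⟨j, hj, rfl⟩, rfl⟩
    simp only [map_add] at this
    simp only [mem_ofPred_eq, dual_def]
    linarith
  calc c ≤ v f := by rw [hv, add_apply, dual_def]; linarith
    _ ≤ ‖v f‖ := Real.le_norm_self _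
    _ ≤ ‖v‖ * ‖f‖ := v.le_opNorm f
    _ ≤ ‖v‖ := mul_le_of_le_one_right (norm_nonneg v) hf_norm

end Separation

theorem le_of_eventually_one_sub_mul_le {ε : ℕ → ℝ} (hε : Tendsto ε atTop (nhds 0)) {a b : ℝ}
    (h : ∀ᶠ n in atTop, (1 - ε n) * a ≤ b) : a ≤ b :=
  le_of_tendsto (by simpa using (tendsto_const_nhds (x := (1 : ℝ)).sub hε).mul_const a) h

theorem stmt5_general (X : Type) [NormedAddCommGroup X] [NormedSpace ℝ X]
    (x : ℕ → X) (hx : ∀ n, ‖x n‖ ≤ 1)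
    (Z : Subspace ℝ X)
    (F : ℕ → Subspace ℝ X) (hmono : Monotone F)
    (hdense : (Z : Set X) ⊆ closure (⋃ n, (F n : Set X)))
    (ε : ℕ → ℝ)
    (hε0 : Filter.Tendsto ε Filter.atTop (nhds 0))
    (φ : ℕ → ℕ)
    (hy : ∀ (n : ℕ) (z : X), z ∈ F n → ∀ α : ℕ → ℝ, (∀ j, 0 ≤ α j) → (∀ j ≤ n, α j = 0) →
      Summable α → (∑' j, α j) = 1 →
      (1 - ε n) * (1 + ‖z‖) ≤ ‖z + ∑' j, α j • x (φ j)‖)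
    (u : StrongDual ℝ (StrongDual ℝ X))
    (hu : ∀ n : ℕ, StrongDual.toWeakDual u ∈
      closure (StrongDual.toWeakDual ''
        (convexHull ℝ ((fun j => inclusionInDoubleDual ℝ X (x (φ j))) '' {j | n < j})))) :
    ∀ z ∈ Z, ‖inclusionInDoubleDual ℝ X z + u‖ = 1 + ‖z‖ := by
  set J := inclusionInDoubleDual ℝ X
  have hu_norm : ‖u‖ ≤ 1 := by
    refine mem_closedBall_zero_iff.1 <| StrongDual.mem_of_toWeakDual_mem_closure_convexHull
      (convex_closedBall 0 1) (WeakDual.isClosed_closedBall 0 1) ?_ (hu 0)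
    rintro _ ⟨j, -, rfl⟩
    simpa using (double_dual_bound ℝ X _).trans (hx (φ j))
  have h_lower : ∀ n, ∀ z ∈ F n, (1 - ε n) * (1 + ‖z‖) ≤ ‖J z + u‖ := fun n z hz =>
    le_norm_inclusionInDoubleDual_add (hu n) fun w hw => by
      obtain ⟨α, hα0, hα_supp, hα1, hαw⟩ := exists_hasSum_of_mem_convexHull_image hw
      simpa [hαw.tsum_eq] using hy n z hz α hα0 (fun j hj => hα_supp j hj.not_gt)
        hα1.summable hα1.tsum_eq
  have h_eq : ∀ z ∈ ⋃ n, (F n : Set X), ‖J z + u‖ = 1 + ‖z‖ := by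
    intro z hz
    obtain ⟨m, hzm⟩ := mem_iUnion.1 hz
    refine le_antisymm ?_ (le_of_eventually_one_sub_mul_le hε0
      (eventually_atTop.2 ⟨m, fun n hn => h_lower n z (hmono hn hzm)⟩))
    calc ‖J z + u‖ ≤ ‖J z‖ + ‖u‖ := norm_add_le (J z) u
      _ ≤ 1 + ‖z‖ := by linarith [double_dual_bound ℝ X z]
  have h_closed : IsClosed {z : X | ‖J z + u‖ = 1 + ‖z‖} :=
    isClosed_eq (Continuous.norm (f := fun w => J w + u) (by fun_prop)) (by fun_prop)
  exact fun z hz => closure_minimal h_eq h_closed (hdense hz)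

/-- Let `X` be a real Banach space with an `L`-orthogonal sequence `(x n)`,
`Z` a separable subspace of `X`, `(F n)` an increasing sequence of finite-dimensional
subspaces of `X` whose union is dense in `Z`, `(ε n)` a sequence of positive reals converging
to zero, and `(x (φ n))` a subsequence satisfying the conclusion of Lemma `previmaure`
(Statement 4). Then every `u` in the bidual `X**` belonging, for every `n`, to the
weak*-closure of the convex hull of `{ι (x (φ j)) : j > n}` satisfies
`‖ι z + u‖ = 1 + ‖z‖` for every `z ∈ Z`. -/
theorem stmt5 (X : Type) [NormedAddCommGroup X] [NormedSpace ℝ X] [CompleteSpace X]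
    (x : ℕ → X) (hx : ∀ n, ‖x n‖ ≤ 1)
    (hL : ∀ z : X, Filter.Tendsto (fun n => ‖z + x n‖) Filter.atTop (nhds (1 + ‖z‖)))
    (Z : Subspace ℝ X) (hZsep : TopologicalSpace.IsSeparable (Z : Set X))
    (F : ℕ → Subspace ℝ X) (hmono : Monotone F) (hfd : ∀ n, FiniteDimensional ℝ (F n))
    (hdense : (Z : Set X) ⊆ closure (⋃ n, (F n : Set X)))
    (ε : ℕ → ℝ) (hεpos : ∀ n, 0 < ε n)
    (hε0 : Filter.Tendsto ε Filter.atTop (nhds 0))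
    (φ : ℕ → ℕ) (hφ : StrictMono φ)
    (hy : ∀ (n : ℕ) (z : X), z ∈ F n → ∀ α : ℕ → ℝ, (∀ j, 0 ≤ α j) → (∀ j ≤ n, α j = 0) →
      Summable α → (∑' j, α j) = 1 →
      (1 - ε n) * (1 + ‖z‖) ≤ ‖z + ∑' j, α j • x (φ j)‖)
    (u : StrongDual ℝ (StrongDual ℝ X))
    (hu : ∀ n : ℕ, StrongDual.toWeakDual u ∈
      closure (StrongDual.toWeakDual ''
        (convexHull ℝ ((fun j => inclusionInDoubleDual ℝ X (x (φ j))) '' {j | n < j})))) :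
    ∀ z ∈ Z, ‖inclusionInDoubleDual ℝ X z + u‖ = 1 + ‖z‖ :=
  stmt5_general X x hx Z F hmono hdense ε hε0 φ hy u hu
end

section
/- Let X be a real Banach space whose density character dens(X) is at most the pseudointersection number 𝔭, and suppose (x_n) is an L-orthogonal sequence in X. Then there exists u ∈ X** which is a weak*-cluster point of the sequence (ι(x_n)) (i.e., every weak*-neighborhood of u contains ι(x_n) for infinitely many n) and which is an L-orthogonal element of X**. -/
open NormedSpace

/-- The pseudointersection number `𝔭`: the least cardinality of a family `F` of infinite
subsets of `ℕ` such that every finite intersection of members of `F` is infinite, but no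
infinite `A ⊆ ℕ` is a pseudointersection of `F` (i.e. satisfies that `A \ B` is finite for
every `B ∈ F`). -/
noncomputable def pseudointersectionNumber : Cardinal :=
  sInf { c : Cardinal | ∃ F : Set (Set ℕ), Cardinal.mk ↥F = c ∧
    (∀ A ∈ F, A.Infinite) ∧
    (∀ G : Finset (Set ℕ), ↑G ⊆ F → (⋂ B ∈ G, B).Infinite) ∧
    ¬ ∃ A : Set ℕ, A.Infinite ∧ ∀ B ∈ F, (A \ B).Finite }

/-- The density character of a topological space: the least cardinality of a dense subset. -/
noncomputable def densityCharacter (X : Type) [TopologicalSpace X] : Cardinal :=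
  sInf { c : Cardinal | ∃ s : Set X, Cardinal.mk ↥s = c ∧ Dense s }

open Filter Set

namespace Stmt6Aux

def pSet : Set Cardinal :=
  { c : Cardinal | ∃ F : Set (Set ℕ), Cardinal.mk ↥F = c ∧
    (∀ A ∈ F, A.Infinite) ∧
    (∀ G : Finset (Set ℕ), ↑G ⊆ F → (⋂ B ∈ G, B).Infinite) ∧
    ¬ ∃ A : Set ℕ, A.Infinite ∧ ∀ B ∈ F, (A \ B).Finite }

lemma pNum_eq : pseudointersectionNumber = sInf pSet := rfl

lemma pSet_nonempty : pSet.Nonempty := by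
  classical
  set U : Ultrafilter ℕ := Ultrafilter.of (cofinite : Filter ℕ) with hUdef
  have hUle : (U : Filter ℕ) ≤ cofinite := Ultrafilter.of_le _
  have hmemInf : ∀ s : Set ℕ, s ∈ U → s.Infinite := by
    intro s hs
    by_contra hfin
    rw [Set.not_infinite] at hfin
    have h2 : sᶜ ∈ U := hUle hfin.compl_mem_cofinite
    have : s ∩ sᶜ ∈ U := Filter.inter_mem hs h2
    simp at this
  refine ⟨Cardinal.mk ↥{s : Set ℕ | s ∈ U}, {s : Set ℕ | s ∈ U}, rfl, ?_, ?_, ?_⟩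
  · exact fun A hA => hmemInf A hA
  · intro G hG
    refine hmemInf _ ?_
    exact (Filter.biInter_mem (f := (U : Filter ℕ)) (is := (G : Set (Set ℕ)))
      (s := fun B => B) G.finite_toSet).mpr (fun B hB => hG hB)
  · rintro ⟨A, hAinf, hA⟩
    obtain ⟨emb⟩ : Nonempty (ℕ ↪ ↥A) := ⟨hAinf.natEmbedding A⟩
    set A1 : Set ℕ := Set.range (fun k => (emb (2 * k) : ℕ)) with hA1
    set A2 : Set ℕ := Set.range (fun k => (emb (2 * k + 1) : ℕ)) with hA2
    have hinj : Function.Injective (fun k : ℕ => (emb k : ℕ)) := by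
      intro a b hab
      exact emb.injective (Subtype.ext hab)
    have hA1inf : A1.Infinite :=
      Set.infinite_range_of_injective (fun a b hab => by
        have := hinj hab; omega)
    have hA2inf : A2.Infinite :=
      Set.infinite_range_of_injective (fun a b hab => by
        have := hinj hab; omega)
    have hA1sub : A1 ⊆ A := by rintro - ⟨k, rfl⟩; exact (emb (2 * k)).2
    have hA2sub : A2 ⊆ A := by rintro - ⟨k, rfl⟩; exact (emb (2 * k + 1)).2
    have hdisj : Disjoint A1 A2 := by
      rw [Set.disjoint_left]
      rintro - ⟨k, rfl⟩ ⟨j, hj⟩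
      have := hinj hj; omega
    rcases U.mem_or_compl_mem A1 with h1 | h1
    · have := hA A1 h1
      exact (hA2inf.mono (fun n hn => ⟨hA2sub hn, hdisj.subset_compl_left hn⟩ :
        A2 ⊆ A \ A1)) this
    · have := hA A1ᶜ h1
      have heq : A \ A1ᶜ = A1 := by
        ext n; simp only [Set.mem_diff, Set.mem_compl_iff, not_not]
        exact ⟨fun h => h.2, fun h => ⟨hA1sub h, h⟩⟩
      rw [heq] at this
      exact hA1inf this

lemma aleph0_le_pNum : Cardinal.aleph0 ≤ pseudointersectionNumber := by
  rw [pNum_eq]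
  refine le_csInf pSet_nonempty ?_
  rintro c ⟨F, rfl, hinf, hSFIP, hnops⟩
  by_contra hlt
  push_neg at hlt
  have hFfin : F.Finite := by
    rw [← Set.finite_coe_iff]
    exact Cardinal.lt_aleph0_iff_finite.mp hlt
  refine hnops ⟨⋂ B ∈ hFfin.toFinset, B, hSFIP _ (by simp), ?_⟩
  intro B hB
  have hsub : (⋂ B ∈ hFfin.toFinset, B) ⊆ B := by
    intro n hn
    simp only [Set.mem_iInter] at hn
    exact hn B (by simpa using hB)
  rw [Set.diff_eq_empty.mpr hsub]
  exact Set.finite_empty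

lemma exists_pseudointersection (F : Set (Set ℕ))
    (hcard : Cardinal.mk ↥F < pseudointersectionNumber)
    (hinf : ∀ A ∈ F, A.Infinite)
    (hSFIP : ∀ G : Finset (Set ℕ), ↑G ⊆ F → (⋂ B ∈ G, B).Infinite) :
    ∃ A : Set ℕ, A.Infinite ∧ ∀ B ∈ F, (A \ B).Finite := by
  by_contra h
  have : Cardinal.mk ↥F ∈ pSet := ⟨F, rfl, hinf, hSFIP, h⟩
  exact absurd (csInf_le' this) (not_le.mpr (by rw [pNum_eq] at hcard; exact hcard))

variable {X : Type} [NormedAddCommGroup X] [NormedSpace ℝ X]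

lemma exists_norming (x : ℕ → X) (hx : ∀ n, ‖x n‖ ≤ 1)
    (hL : ∀ z : X, Tendsto (fun n => ‖z + x n‖) atTop (nhds (1 + ‖z‖)))
    (z : X) {ε : ℝ} (hε : 0 < ε) (hε1 : ε ≤ 1) {A : Set ℕ} (hA : A.Infinite) :
    ∃ f : StrongDual ℝ X, ‖f‖ ≤ 1 ∧ ‖z‖ - ε ≤ f z ∧
      {m | m ∈ A ∧ 1 - ε ≤ f (x m)}.Infinite := by
  classical
  have key : ∀ (m : ℕ) (S : X) (δ : ℝ), 0 < δ →
      ∃ k, m < k ∧ k ∈ A ∧ 1 + ‖S‖ - δ ≤ ‖S + x k‖ := by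
    intro m S δ hδ
    have h1 : ∀ᶠ k in atTop, 1 + ‖S‖ - δ < ‖S + x k‖ :=
      (hL S).eventually (eventually_gt_nhds (by linarith))
    have h2 : ∀ᶠ k in atTop, m < k := eventually_gt_atTop m
    have h3 : ∃ᶠ k in atTop, k ∈ A := by
      rw [← Nat.cofinite_eq_atTop]; exact hA.frequently_cofinite
    obtain ⟨k, hk⟩ := ((h1.and h2).and_frequently h3).exists
    exact ⟨k, hk.1.2, hk.2, le_of_lt hk.1.1⟩
  set δ : ℕ → ℝ := fun i => ε / 2 ^ (i + 2) with hδdef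
  have hδ : ∀ i, 0 < δ i := fun i => by positivity
  set step : ℕ → ℕ × X → ℕ × X := fun i p =>
    ((key p.1 p.2 (δ i) (hδ i)).choose, p.2 + x (key p.1 p.2 (δ i) (hδ i)).choose)
    with hstepdef
  set s : ℕ → ℕ × X := fun i => Nat.rec (0, z) step i with hsdef
  set n : ℕ → ℕ := fun i => (s (i + 1)).1 with hndef
  have hspec : ∀ i, (s i).1 < n i ∧ n i ∈ A ∧
      1 + ‖(s i).2‖ - δ i ≤ ‖(s i).2 + x (n i)‖ :=
    fun i => (key (s i).1 (s i).2 (δ i) (hδ i)).choose_spec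
  have hsx : ∀ i, (s (i + 1)).2 = (s i).2 + x (n i) := fun i => rfl
  have hmono : StrictMono n := strictMono_nat_of_lt_succ (fun i => (hspec (i + 1)).1)
  have hnorm : ∀ i : ℕ, (i : ℝ) + ‖z‖ - ε / 2 + ε / 2 ^ (i + 1) ≤ ‖(s i).2‖ := by
    intro i
    induction i with
    | zero =>
      have h0 : (s 0).2 = z := rfl
      rw [h0]; norm_num
    | succ i ih =>
      have h3 := (hspec i).2.2
      have hδi : δ i = ε / 2 ^ (i + 2) := rfl
      rw [hδi] at h3
      rw [hsx i]
      have hexp : i + 1 + 1 = i + 2 := by omega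
      have hhalf : ε / 2 ^ (i + 1) = 2 * (ε / 2 ^ (i + 2)) := by
        rw [show (2:ℝ) ^ (i + 2) = 2 * 2 ^ (i + 1) by ring]
        have h2pos : (0:ℝ) < 2 ^ (i + 1) := by positivity
        field_simp
      push_cast
      rw [hexp]
      linarith
  have hsum : ∀ i, (s i).2 = z + ∑ j ∈ Finset.range i, x (n j) := by
    intro i
    induction i with
    | zero => simp; rfl
    | succ i ih => rw [hsx i, ih, Finset.sum_range_succ]; abel
  -- norming functionals
  have hvne : ∀ k, (s (k + 1)).2 ≠ 0 := by
    intro k h0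
    have := hnorm (k + 1)
    rw [h0] at this
    simp only [norm_zero] at this
    have h1 : (0:ℝ) < ε / 2 ^ (k + 2) := by positivity
    have : (k : ℝ) + 1 + ‖z‖ - ε / 2 + ε / 2 ^ (k + 1 + 1) ≤ 0 := by push_cast at this ⊢; linarith
    have hz : (0:ℝ) ≤ ‖z‖ := norm_nonneg _
    have hk0 : (0:ℝ) ≤ (k:ℝ) := Nat.cast_nonneg k
    have hε2 : (0:ℝ) < ε / 2 ^ (k + 2) := by positivity
    nlinarith
  have hf := fun k => exists_dual_vector ℝ ((s (k + 1)).2) (norm_ne_zero_iff.mpr (hvne k))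
  choose f hfnorm hfval0 using hf
  have hfval : ∀ k, f k ((s (k + 1)).2) = ‖(s (k + 1)).2‖ := by
    intro k
    have := hfval0 k
    simpa using this
  have happle : ∀ (g : StrongDual ℝ X), ‖g‖ = 1 → ∀ y : X, ‖y‖ ≤ 1 → g y ≤ 1 := by
    intro g hg y hy
    calc g y ≤ ‖g y‖ := le_abs_self _
      _ ≤ ‖g‖ * ‖y‖ := g.le_opNorm y
      _ ≤ 1 := by rw [hg]; linarith
  have happz : ∀ (g : StrongDual ℝ X), ‖g‖ = 1 → g z ≤ ‖z‖ := by
    intro g hg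
    calc g z ≤ ‖g z‖ := le_abs_self _
      _ ≤ ‖g‖ * ‖z‖ := g.le_opNorm z
      _ = ‖z‖ := by rw [hg]; ring
  have hexpand : ∀ k, f k ((s (k+1)).2) = f k z + ∑ j ∈ Finset.range (k+1), f k (x (n j)) := by
    intro k
    rw [hsum (k+1), map_add, map_sum]
  have hlow : ∀ k : ℕ, (k : ℝ) + 1 + ‖z‖ - ε / 2 ≤ f k ((s (k+1)).2) := by
    intro k
    rw [hfval k]
    have := hnorm (k + 1)
    have h1 : (0:ℝ) < ε / 2 ^ (k + 1 + 1) := by positivity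
    push_cast at this ⊢
    linarith
  have hbound1 : ∀ k, ‖z‖ - ε / 2 ≤ f k z := by
    intro k
    have hsumle : ∑ j ∈ Finset.range (k+1), f k (x (n j)) ≤ (k + 1 : ℝ) := by
      calc ∑ j ∈ Finset.range (k+1), f k (x (n j))
          ≤ ∑ _j ∈ Finset.range (k+1), (1:ℝ) :=
            Finset.sum_le_sum (fun j _ => happle (f k) (hfnorm k) _ (hx _))
        _ = (k + 1 : ℝ) := by simp
    have := hlow k
    rw [hexpand k] at this
    linarith
  have hbound2 : ∀ j k, j < k + 1 → 1 - ε / 2 ≤ f k (x (n j)) := by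
    intro j k hj
    have hmem : j ∈ Finset.range (k+1) := Finset.mem_range.mpr hj
    have hsplit := Finset.add_sum_erase (Finset.range (k+1)) (fun j' => f k (x (n j'))) hmem
    have hsumle : ∑ j' ∈ (Finset.range (k+1)).erase j, f k (x (n j')) ≤ (k : ℝ) := by
      calc ∑ j' ∈ (Finset.range (k+1)).erase j, f k (x (n j'))
          ≤ ∑ _j' ∈ (Finset.range (k+1)).erase j, (1:ℝ) :=
            Finset.sum_le_sum (fun j' _ => happle (f k) (hfnorm k) _ (hx _))
        _ = (k : ℝ) := by
            rw [Finset.sum_const, Finset.card_erase_of_mem hmem]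
            simp
    have hl := hlow k
    rw [hexpand k, ← hsplit] at hl
    have hz := happz (f k) (hfnorm k)
    linarith
  -- weak* cluster point of the f k
  set V : Ultrafilter ℕ := Ultrafilter.of atTop with hVdef
  have hVle : (V : Filter ℕ) ≤ atTop := Ultrafilter.of_le _
  have hK : IsCompact (WeakDual.toStrongDual ⁻¹' Metric.closedBall (0 : StrongDual ℝ X) 1) :=
    WeakDual.isCompact_closedBall (𝕜 := ℝ) (E := X) 0 1
  have hmem : ∀ k, (StrongDual.toWeakDual (f k) : WeakDual ℝ X) ∈
      WeakDual.toStrongDual ⁻¹' Metric.closedBall (0 : StrongDual ℝ X) 1 := by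
    intro k
    simp only [Set.mem_preimage, Metric.mem_closedBall, dist_zero_right]
    rw [show WeakDual.toStrongDual (StrongDual.toWeakDual (f k)) = f k from rfl, hfnorm k]
  obtain ⟨φ, hφmem, hφlim⟩ := hK.ultrafilter_le_nhds
    (V.map (fun k => StrongDual.toWeakDual (f k)))
    (by
      rw [Filter.le_principal_iff]
      exact Filter.mem_map.mpr (Filter.Eventually.of_forall hmem))
  have hφnorm : ‖WeakDual.toStrongDual φ‖ ≤ 1 := by
    have := hφmem
    simp only [Set.mem_preimage, Metric.mem_closedBall, dist_zero_right] at this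
    exact this
  have heval : ∀ y : X, Tendsto (fun k => f k y) (V : Filter ℕ) (nhds (φ y)) := by
    intro y
    have h1 : Tendsto (fun k => StrongDual.toWeakDual (f k)) (V : Filter ℕ) (nhds φ) := hφlim
    exact (WeakDual.eval_continuous y).continuousAt.tendsto.comp h1
  have hval1 : ‖z‖ - ε / 2 ≤ φ z :=
    ge_of_tendsto (heval z) (Filter.Eventually.of_forall hbound1)
  have hval2 : ∀ j, 1 - ε / 2 ≤ φ (x (n j)) := by
    intro j
    refine ge_of_tendsto (heval (x (n j))) ?_
    refine hVle ?_
    filter_upwards [eventually_ge_atTop j] with k hk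
    exact hbound2 j k (by omega)
  refine ⟨WeakDual.toStrongDual φ, hφnorm, ?_, ?_⟩
  · rw [WeakDual.toStrongDual_apply]; linarith [hval1]
  have hsub : Set.range n ⊆ {m | m ∈ A ∧ 1 - ε ≤ (WeakDual.toStrongDual φ) (x m)} := by
    rintro - ⟨j, rfl⟩
    exact ⟨(hspec j).2.1, by have := hval2 j; rw [WeakDual.toStrongDual_apply]; linarith⟩
  exact ((Set.infinite_range_of_injective hmono.injective).mono hsub)

lemma exists_system (x : ℕ → X) (hx : ∀ n, ‖x n‖ ≤ 1)
    (hL : ∀ z : X, Tendsto (fun n => ‖z + x n‖) atTop (nhds (1 + ‖z‖)))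
    {D : Set X} (hDcard : Cardinal.mk ↥D ≤ pseudointersectionNumber) :
    ∃ g : ↥D × ℕ → Set ℕ × StrongDual ℝ X,
      (∀ i, (g i).1.Infinite) ∧
      (∀ i, ‖(g i).2‖ ≤ 1) ∧
      (∀ i : ↥D × ℕ, ‖(i.1 : X)‖ - 1 / (i.2 + 1) ≤ (g i).2 (i.1 : X)) ∧
      (∀ i : ↥D × ℕ, ∀ n ∈ (g i).1, 1 - 1 / ((i.2 : ℝ) + 1) ≤ (g i).2 (x n)) ∧
      (∀ i j, ((g i).1 \ (g j).1).Finite ∨ ((g j).1 \ (g i).1).Finite) := by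
  classical
  set I := ↥D × ℕ with hIdef
  set W := (Cardinal.ord pseudointersectionNumber).ToType with hWdef
  have hcard' : Cardinal.mk I ≤ pseudointersectionNumber := by
    have h1 : Cardinal.mk I = Cardinal.mk ↥D * Cardinal.mk ℕ := by
      rw [hIdef, Cardinal.mk_prod, Cardinal.lift_id, Cardinal.lift_id]
    rw [h1, Cardinal.mk_nat]
    calc Cardinal.mk ↥D * Cardinal.aleph0
        ≤ pseudointersectionNumber * pseudointersectionNumber :=
          mul_le_mul' hDcard aleph0_le_pNum
      _ = pseudointersectionNumber := Cardinal.mul_eq_self aleph0_le_pNum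
  have hmkW : Cardinal.mk W = pseudointersectionNumber := Cardinal.mk_ord_toType _
  obtain ⟨e⟩ : Nonempty (I ↪ W) := by
    rw [← Cardinal.le_def, hmkW]; exact hcard'
  set r : I → I → Prop := fun a b => e a < e b with hrdef
  have hwf : WellFounded r := InvImage.wf e (IsWellFounded.wf)
  set ε : I → ℝ := fun i => 1 / ((i.2 : ℝ) + 1) with hεdef
  have hεpos : ∀ i, 0 < ε i := fun i => by positivity
  have hεle : ∀ i, ε i ≤ 1 := by
    intro i
    rw [hεdef]
    rw [div_le_one (by positivity)]
    simp
  set Φ : I → Set ℕ × StrongDual ℝ X → Prop := fun i p =>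
    p.1.Infinite ∧ ‖p.2‖ ≤ 1 ∧ (‖(i.1 : X)‖ - ε i ≤ p.2 (i.1 : X)) ∧
      ∀ n ∈ p.1, 1 - ε i ≤ p.2 (x n) with hΦdef
  set g : I → Set ℕ × StrongDual ℝ X := hwf.fix (fun i rec =>
    if H : ∃ p : Set ℕ × StrongDual ℝ X, Φ i p ∧ ∀ j (hj : r j i), (p.1 \ (rec j hj).1).Finite
    then H.choose else (∅, 0)) with hgdef
  have hg_eq : ∀ i, g i =
      if H : ∃ p : Set ℕ × StrongDual ℝ X, Φ i p ∧ ∀ j (_ : r j i), (p.1 \ (g j).1).Finite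
      then H.choose else (∅, 0) := by
    intro i
    rw [hgdef]
    exact hwf.fix_eq _ i
  have main : ∀ i, Φ i (g i) ∧ ∀ j, r j i → ((g i).1 \ (g j).1).Finite := by
    intro i
    induction i using WellFounded.induction hwf with
    | _ i IH =>
    have H : ∃ p : Set ℕ × StrongDual ℝ X, Φ i p ∧ ∀ j (_ : r j i), (p.1 \ (g j).1).Finite := by
      set Fam : Set (Set ℕ) := (fun j : I => (g j).1) '' {j | r j i} with hFamdef
      have hFamCard : Cardinal.mk ↥Fam < pseudointersectionNumber := by
        have h1 : Cardinal.mk ↥Fam ≤ Cardinal.mk {j : I // r j i} := by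
          rw [hFamdef, Set.image_eq_range]
          exact Cardinal.mk_range_le
        have h2 : Cardinal.mk {j : I // r j i} ≤ Cardinal.mk ↥(Set.Iio (e i)) := by
          rw [Cardinal.le_def]
          refine ⟨⟨fun j => ⟨e j.1, j.2⟩, fun a b hab => ?_⟩⟩
          apply Subtype.ext
          apply e.injective
          exact congrArg Subtype.val hab
        exact (h1.trans h2).trans_lt (Cardinal.mk_Iio_ord_toType (e i))
      have hFamInf : ∀ S ∈ Fam, S.Infinite := by
        rintro - ⟨j, hj, rfl⟩
        exact (IH j hj).1.1
      have hchain2 : ∀ j1 j2 : I, r j1 i → r j2 i →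
          ((g j1).1 \ (g j2).1).Finite ∨ ((g j2).1 \ (g j1).1).Finite := by
        intro j1 j2 h1 h2
        rcases lt_trichotomy (e j1) (e j2) with h | h | h
        · exact Or.inr ((IH j2 h2).2 j1 h)
        · left
          rw [e.injective h]
          simp
        · exact Or.inl ((IH j1 h1).2 j2 h)
      have hFamSFIP : ∀ G : Finset (Set ℕ), ↑G ⊆ Fam → (⋂ B ∈ G, B).Infinite := by
        intro G hG
        rcases G.eq_empty_or_nonempty with rfl | hGne
        · simpa using Set.infinite_univ
        · -- find a "minimal" member of the family almost contained in all of G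
          have hex : ∃ j0 : I, r j0 i ∧ ∀ B ∈ G, ((g j0).1 \ B).Finite := by
            classical
            induction G using Finset.induction_on with
            | empty => exact absurd hGne (by simp)
            | @insert B G' hBG' ihG =>
              obtain ⟨jB, hjB, hjBeq0⟩ := hG (Finset.mem_insert_self B G')
              have hjBeq : (g jB).1 = B := hjBeq0
              rcases G'.eq_empty_or_nonempty with rfl | hG'ne
              · refine ⟨jB, hjB, ?_⟩
                intro B' hB'
                rcases Finset.mem_insert.mp hB' with rfl | h
                · rw [hjBeq]; simp
                · simp at h
              · obtain ⟨j0, hj0, hj0all⟩ := ihG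
                  (fun B' hB' => hG (by
                    simp only [Finset.coe_insert, Set.mem_insert_iff]
                    exact Or.inr hB')) hG'ne
                rcases lt_trichotomy (e jB) (e j0) with h | h | h
                · refine ⟨j0, hj0, ?_⟩
                  intro B' hB'
                  rcases Finset.mem_insert.mp hB' with rfl | h'
                  · rw [← hjBeq]
                    exact (IH j0 hj0).2 jB h
                  · exact hj0all B' h'
                · refine ⟨j0, hj0, ?_⟩
                  intro B' hB'
                  rcases Finset.mem_insert.mp hB' with rfl | h'
                  · rw [← hjBeq, e.injective h]
                    simp
                  · exact hj0all B' h'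
                · refine ⟨jB, hjB, ?_⟩
                  intro B' hB'
                  rcases Finset.mem_insert.mp hB' with rfl | h'
                  · rw [hjBeq]; simp
                  · have hd1 : ((g jB).1 \ (g j0).1).Finite := (IH jB hjB).2 j0 h
                    have hd2 : ((g j0).1 \ B').Finite := hj0all B' h'
                    refine (hd1.union hd2).subset ?_
                    intro n hn
                    by_cases hn0 : n ∈ (g j0).1
                    · exact Or.inr ⟨hn0, hn.2⟩
                    · exact Or.inl ⟨hn.1, hn0⟩
          obtain ⟨j0, hj0, hj0all⟩ := hex
          have hU : (⋃ B ∈ G, ((g j0).1 \ B)).Finite :=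
            Set.Finite.biUnion G.finite_toSet (fun B hB => hj0all B hB)
          have hsub : (g j0).1 \ (⋃ B ∈ G, ((g j0).1 \ B)) ⊆ ⋂ B ∈ G, B := by
            intro n hn
            simp only [Set.mem_diff, Set.mem_iUnion, not_exists] at hn
            simp only [Set.mem_iInter]
            intro B hB
            by_contra hnB
            exact hn.2 B hB ⟨hn.1, hnB⟩
          exact (((IH j0 hj0).1.1).diff hU).mono hsub
      obtain ⟨C, hCinf, hCps⟩ :=
        exists_pseudointersection Fam hFamCard hFamInf hFamSFIP
      obtain ⟨f, hf1, hf2, hf3⟩ :=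
        exists_norming x hx hL (i.1 : X) (hεpos i) (hεle i) hCinf
      refine ⟨({m | m ∈ C ∧ 1 - ε i ≤ f (x m)}, f), ⟨hf3, hf1, hf2, ?_⟩, ?_⟩
      · intro n hn
        exact hn.2
      · intro j hj
        have hmem : (g j).1 ∈ Fam := ⟨j, hj, rfl⟩
        refine (hCps _ hmem).subset ?_
        intro n hn
        exact ⟨hn.1.1, hn.2⟩
    have : g i = H.choose := by rw [hg_eq i, dif_pos H]
    rw [this]
    exact ⟨H.choose_spec.1, fun j hj => H.choose_spec.2 j hj⟩
  refine ⟨g, fun i => (main i).1.1, fun i => (main i).1.2.1,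
    fun i => (main i).1.2.2.1, fun i => (main i).1.2.2.2, ?_⟩
  intro i j
  rcases lt_trichotomy (e i) (e j) with h | h | h
  · exact Or.inr ((main j).2 i h)
  · left; rw [e.injective h]; simp
  · exact Or.inl ((main i).2 j h)

end Stmt6Aux

open Stmt6Aux

/-- Let `X` be a real Banach space whose density character is at most the
pseudointersection number `𝔭`, and let `(x n)` be an `L`-orthogonal sequence in `X`. Then
there exists `u ∈ X**` which is a weak*-cluster point of the sequence `(ι (x n))` and which
is an `L`-orthogonal element of `X**`. -/
theorem stmt6 (X : Type) [NormedAddCommGroup X] [NormedSpace ℝ X] [CompleteSpace X]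
    (hdens : densityCharacter X ≤ pseudointersectionNumber)
    (x : ℕ → X) (hx : ∀ n, ‖x n‖ ≤ 1)
    (hL : ∀ z : X, Filter.Tendsto (fun n => ‖z + x n‖) Filter.atTop (nhds (1 + ‖z‖))) :
    ∃ u : StrongDual ℝ (StrongDual ℝ X),
      MapClusterPt (StrongDual.toWeakDual u) Filter.atTop
        (fun n => StrongDual.toWeakDual (inclusionInDoubleDual ℝ X (x n))) ∧
      ‖u‖ = 1 ∧ ∀ z : X, ‖inclusionInDoubleDual ℝ X z + u‖ = 1 + ‖z‖ := by
  classical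
  -- extract a dense set realizing the density character
  have hSd : {c : Cardinal | ∃ s : Set X, Cardinal.mk ↥s = c ∧ Dense s}.Nonempty :=
    ⟨Cardinal.mk ↥(Set.univ : Set X), Set.univ, rfl, dense_univ⟩
  obtain ⟨D, hDmk, hDdense⟩ :
      ∃ s : Set X, Cardinal.mk ↥s = densityCharacter X ∧ Dense s := csInf_mem hSd
  have hDcard : Cardinal.mk ↥D ≤ pseudointersectionNumber := hDmk ▸ hdens
  obtain ⟨g, hg1, hg2, hg3, hg4, hg5⟩ := exists_system x hx hL hDcard
  have hDne : D.Nonempty := hDdense.nonempty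
  have hNI : Nonempty (↥D × ℕ) := ⟨⟨⟨hDne.choose, hDne.choose_spec⟩, 0⟩⟩
  -- the filter generated by the almost-decreasing system
  set h : ↥D × ℕ → Filter ℕ := fun i => cofinite ⊓ 𝓟 (g i).1 with hhdef
  have hhne : ∀ i, (h i).NeBot := fun i => (hg1 i).cofinite_inf_principal_neBot
  have hdir : Directed (· ≥ ·) h := by
    intro i j
    have hle : ∀ i1 i2 : ↥D × ℕ, ((g i1).1 \ (g i2).1).Finite → h i1 ≤ h i2 := by
      intro i1 i2 hfin
      refine le_inf inf_le_left ?_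
      rw [Filter.le_principal_iff]
      have hmem : (((g i1).1 \ (g i2).1)ᶜ ∩ (g i1).1) ∈ h i1 :=
        Filter.inter_mem_inf hfin.compl_mem_cofinite (Filter.mem_principal_self _)
      refine Filter.mem_of_superset hmem ?_
      intro n hn
      by_contra hn2
      exact hn.1 ⟨hn.2, hn2⟩
    rcases hg5 i j with hf | hf
    · exact ⟨i, le_refl _, hle i j hf⟩
    · exact ⟨j, hle j i hf, le_refl _⟩
  set F : Filter ℕ := ⨅ i, h i with hFdef
  have hFne : F.NeBot := Filter.iInf_neBot_of_directed hdir hhne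
  have hFcof : F ≤ cofinite := (iInf_le h hNI.some).trans inf_le_left
  set U : Ultrafilter ℕ := Ultrafilter.of F with hUdef
  have hUF : (U : Filter ℕ) ≤ F := Ultrafilter.of_le F
  have hUatTop : (U : Filter ℕ) ≤ atTop := by
    rw [← Nat.cofinite_eq_atTop]; exact hUF.trans hFcof
  have hUg : ∀ i, (g i).1 ∈ U := by
    intro i
    have h1 : F ≤ 𝓟 (g i).1 := (iInf_le h i).trans inf_le_right
    exact Filter.le_def.mp hUF _ (Filter.le_principal_iff.mp h1)
  -- Banach-Alaoglu in the bidual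
  set ι := inclusionInDoubleDual ℝ X with hιdef
  set G : ℕ → WeakDual ℝ (StrongDual ℝ X) := fun n => StrongDual.toWeakDual (ι (x n)) with hGdef
  have hK : IsCompact (WeakDual.toStrongDual ⁻¹'
      Metric.closedBall (0 : StrongDual ℝ (StrongDual ℝ X)) 1) :=
    WeakDual.isCompact_closedBall (𝕜 := ℝ) (E := StrongDual ℝ X) 0 1
  have hGK : ∀ n, G n ∈ WeakDual.toStrongDual ⁻¹'
      Metric.closedBall (0 : StrongDual ℝ (StrongDual ℝ X)) 1 := by
    intro n
    simp only [Set.mem_preimage, Metric.mem_closedBall, dist_zero_right]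
    rw [show WeakDual.toStrongDual (StrongDual.toWeakDual (ι (x n))) = ι (x n) from rfl]
    exact (dist_zero_right (ι (x n))).trans_le ((double_dual_bound ℝ X (x n)).trans (hx n))
  obtain ⟨φ, hφmem, hφlim⟩ := hK.ultrafilter_le_nhds (U.map G)
    (by rw [Filter.le_principal_iff]
        exact Filter.mem_map.mpr (Filter.Eventually.of_forall hGK))
  set u : StrongDual ℝ (StrongDual ℝ X) := WeakDual.toStrongDual φ with hudef
  have huφ : StrongDual.toWeakDual u = φ := LinearEquiv.apply_symm_apply _ _
  have hunorm : ‖u‖ ≤ 1 := by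
    have := hφmem
    simp only [Set.mem_preimage, Metric.mem_closedBall] at this
    exact (dist_zero_right u).symm.trans_le this
  -- evaluation along the ultrafilter
  have heval : ∀ ψ : StrongDual ℝ X,
      Tendsto (fun n => ψ (x n)) (U : Filter ℕ) (nhds (u ψ)) := by
    intro ψ
    have h1 : Tendsto G (U : Filter ℕ) (nhds φ) := hφlim
    have h2 := (WeakDual.eval_continuous ψ).continuousAt.tendsto.comp h1
    exact h2
  -- lower bounds at points of D
  have hlow : ∀ (d : ↥D) (k : ℕ),
      1 + ‖(d : X)‖ - 2 / ((k : ℝ) + 1) ≤ ‖ι (d : X) + u‖ := by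
    intro d k
    have hf1 : ‖(g (d, k)).2‖ ≤ 1 := hg2 (d, k)
    have hval : 1 - 1 / ((k : ℝ) + 1) ≤ u ((g (d, k)).2) := by
      refine ge_of_tendsto (heval ((g (d, k)).2)) ?_
      have hev : ∀ᶠ n in (U : Filter ℕ), n ∈ (g (d, k)).1 :=
        hUg (d, k)
      filter_upwards [hev] with n hn
      exact hg4 (d, k) n hn
    have happ : (ι (d : X) + u) ((g (d, k)).2) = (g (d, k)).2 (d : X) + u ((g (d, k)).2) := by
      rw [ContinuousLinearMap.add_apply]
      congr 1
    have hle1 : (ι (d : X) + u) ((g (d, k)).2) ≤ ‖ι (d : X) + u‖ := by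
      calc (ι (d : X) + u) ((g (d, k)).2) ≤ ‖(ι (d : X) + u) ((g (d, k)).2)‖ := le_abs_self _
        _ ≤ ‖ι (d : X) + u‖ * ‖(g (d, k)).2‖ := (ι (d : X) + u).le_opNorm _
        _ ≤ ‖ι (d : X) + u‖ * 1 :=
            mul_le_mul_of_nonneg_left hf1 (ContinuousLinearMap.opNorm_nonneg _)
        _ = ‖ι (d : X) + u‖ := mul_one _
    have hd : ‖(d : X)‖ - 1 / ((k : ℝ) + 1) ≤ (g (d, k)).2 (d : X) := hg3 (d, k)
    rw [happ] at hle1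
    have : (1:ℝ) / ((k:ℝ)+1) + 1 / ((k:ℝ)+1) = 2 / ((k:ℝ)+1) := by ring
    linarith
  -- the L-orthogonality identity for all z
  have hall : ∀ z : X, ‖ι z + u‖ = 1 + ‖z‖ := by
    intro z
    refine le_antisymm ?_ ?_
    · calc ‖ι z + u‖ ≤ ‖ι z‖ + ‖u‖ := ContinuousLinearMap.opNorm_add_le _ _
        _ ≤ ‖z‖ + 1 := add_le_add (double_dual_bound ℝ X z) hunorm
        _ = 1 + ‖z‖ := by ring
    · refine le_of_forall_sub_le ?_
      intro ε hε
      obtain ⟨d, hdD, hdist⟩ : ∃ d ∈ D, dist z d < ε / 4 := by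
        have hz : z ∈ closure D := hDdense z
        exact Metric.mem_closure_iff.mp hz (ε / 4) (by linarith)
      obtain ⟨k, hk⟩ := exists_nat_one_div_lt (K := ℝ) (show (0:ℝ) < ε / 4 by linarith)
      have hlow2 := hlow ⟨d, hdD⟩ k
      have htri : ‖ι d + u‖ - ‖ι z + u‖ ≤ ‖d - z‖ := by
        have h1 : ‖ι d + u‖ - ‖ι z + u‖ ≤ ‖(ι d + u) - (ι z + u)‖ :=
          norm_sub_norm_le (E := StrongDual ℝ (StrongDual ℝ X)) _ _
        have h2 : (ι d + u) - (ι z + u) = ι (d - z) := by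
          rw [map_sub]; abel
        rw [h2] at h1
        exact h1.trans (double_dual_bound ℝ X (d - z))
      have hzd : ‖d - z‖ < ε / 4 := by
        rw [← dist_eq_norm, dist_comm]
        exact hdist
      have hnorm_zd : ‖d‖ ≥ ‖z‖ - ε / 4 := by
        have := norm_sub_norm_le z d
        rw [show ‖z - d‖ = ‖d - z‖ by rw [norm_sub_rev]] at this
        linarith
      have h2k : 2 / ((k:ℝ) + 1) < ε / 2 := by
        have : (1:ℝ) / ((k:ℝ)+1) < ε / 4 := hk
        have hpos : (0:ℝ) < (k:ℝ) + 1 := by positivity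
        rw [div_lt_iff₀ hpos] at this ⊢
        linarith
      linarith
  refine ⟨u, ?_, ?_, hall⟩
  · rw [huφ]
    have h1 : (U.map G : Filter (WeakDual ℝ (StrongDual ℝ X))) ≤ nhds φ := hφlim
    have h2 : (U.map G : Filter (WeakDual ℝ (StrongDual ℝ X))) ≤ Filter.map G atTop :=
      Filter.map_mono hUatTop
    exact Filter.NeBot.mono (U.map G).neBot (le_inf h1 h2)
  · have h0 := hall 0
    rw [map_zero, zero_add, norm_zero, add_zero] at h0
    exact h0
end

section
/- Let X be a real Banach space, let (x_n) be an L-orthogonal sequence in X, and let U be a selective ultrafilter on ℕ. If u ∈ X** is the limit of the sequence (ι(x_n)) along U in the weak* topology of X** (such a limit exists since the closed unit ball of X** is weak*-compact), then u is an L-orthogonal element of X**. -/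
/-!
Fix `z` and `δ > 0`. By `L`-orthogonality every finite `F ⊆ ℕ` has a threshold `N F` beyond which
adding `x j` to `z + ∑_{i ∈ F} x i` raises its norm by almost `1`. Selectivity yields `B ∈ U` so
sparse that each element of `B` lies beyond the thresholds of all subsets of `B` below it; hence
`‖z + ∑_{i ∈ F} x i‖ ≥ ‖z‖ + #F - δ` for every finite `F ⊆ B`. A norming functional of such a sum
almost norms `z` and every `x i`, `i ∈ F`, at once. A weak* limit `g` along `U` of these functionals
(for `F = B ∩ [0, m]`) satisfies `g z ≥ ‖z‖ - δ` and `g (x n) ≥ 1 - δ` for `n ∈ B`, so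
`(ι z + u) g ≥ 1 + ‖z‖ - 2δ`.
-/

open Filter Finset NormedSpace Topology

theorem Nat.exists_index_of_strictMono {c : ℕ → ℕ} (hc : StrictMono c) (hc0 : c 0 = 0) :
    ∃ idx : ℕ → ℕ, Monotone idx ∧ ∀ n k, idx n = k ↔ c k ≤ n ∧ n < c (k + 1) := by
  classical
  have hex (n : ℕ) : ∃ k, n < c (k + 1) := ⟨n, n.lt_succ_self.trans_le (hc.id_le _)⟩
  set idx := fun n => Nat.find (hex n)
  have hlt (n : ℕ) : n < c (idx n + 1) := Nat.find_spec (hex n)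
  have hle (n : ℕ) : c (idx n) ≤ n := by
    rcases h : idx n with _ | k
    · simp [hc0]
    · exact not_lt.1 (Nat.find_min (hex n) (show k < idx n by omega))
  refine ⟨idx, fun m m' h => Nat.find_mono fun k hk => h.trans_lt hk,
    fun n k => ⟨by rintro rfl; exact ⟨hle n, hlt n⟩, fun ⟨hk, hk'⟩ => ?_⟩⟩
  rcases lt_trichotomy (idx n) k with h | h | h
  · exact absurd ((hlt n).trans_le (hc.monotone h)) hk.not_gt
  · exact h
  · exact absurd (hk'.trans_le (hc.monotone h)) (hle n).not_gt

-- Unlike the usual notion this omits nonprincipality: principal `U` satisfy it vacuously.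
def Ultrafilter.IsSelective (U : Ultrafilter ℕ) : Prop :=
  ∀ A : ℕ → Set ℕ, (∀ n, (A n).Nonempty) → Pairwise (Function.onFun Disjoint A) →
    (⋃ n, A n) = Set.univ → (∀ n, A n ∉ U) → ∃ B ∈ U, ∀ n, (B ∩ A n).ncard = 1

theorem Ultrafilter.IsSelective.exists_mem_injOn {U : Ultrafilter ℕ} (hU : U.IsSelective)
    (hcof : (U : Filter ℕ) ≤ cofinite) {f : ℕ → ℕ} (hf : Function.Surjective f)
    (hfin : ∀ k, (f ⁻¹' {k}).Finite) : ∃ B ∈ U, Set.InjOn f B := by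
  obtain ⟨B, hBU, hB⟩ := hU (fun k => f ⁻¹' {k}) (fun k => (hf k).imp fun _ => id)
    (fun k l hkl => Set.disjoint_left.2 fun n hk hl => hkl (hk.symm.trans hl))
    (Set.eq_univ_of_forall fun n => Set.mem_iUnion.2 ⟨f n, rfl⟩)
    (fun k => Ultrafilter.compl_mem_iff_notMem.1 (hcof (hfin k).compl_mem_cofinite))
  refine ⟨B, hBU, fun m hm m' hm' h => ?_⟩
  obtain ⟨a, ha⟩ := Set.ncard_eq_one.1 (hB (f m))
  have hma : m ∈ B ∩ f ⁻¹' {f m} := ⟨hm, rfl⟩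
  have hm'a : m' ∈ B ∩ f ⁻¹' {f m} := ⟨hm', h.symm⟩
  rw [ha] at hma hm'a
  exact hma.trans hm'a.symm

theorem Ultrafilter.IsSelective.exists_mem_gap {U : Ultrafilter ℕ} (hU : U.IsSelective)
    (φ : ℕ → ℕ) : ∃ B ∈ U, ∀ m ∈ B, ∀ m' ∈ B, m < m' → φ m ≤ m' := by
  rcases U.le_cofinite_or_eq_pure with hcof | ⟨a, rfl⟩
  swap
  · exact ⟨{a}, Ultrafilter.mem_pure.2 rfl, by simp⟩
  set ψ : ℕ → ℕ := fun n => n + 1 + (range (n + 1)).sup φ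
  have hψ_gt (n : ℕ) : n < ψ n := Nat.lt_of_lt_of_le n.lt_succ_self (Nat.le_add_right _ _)
  have hφ_le {j n : ℕ} (h : j ≤ n) : φ j ≤ ψ n :=
    (le_sup (mem_range.2 (Nat.lt_succ_of_le h))).trans (Nat.le_add_left _ _)
  set c : ℕ → ℕ := fun k => ψ^[k] 0
  have hcs (k : ℕ) : c (k + 1) = ψ (c k) := Function.iterate_succ_apply' ψ k 0
  have hc : StrictMono c := strictMono_nat_of_lt_succ fun k => hcs k ▸ hψ_gt _
  obtain ⟨idx, hmono, hidx⟩ := Nat.exists_index_of_strictMono hc rfl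
  obtain ⟨B, hBU, hinj⟩ := hU.exists_mem_injOn hcof
    (fun k => ⟨c k, (hidx _ _).2 ⟨le_rfl, hc k.lt_succ_self⟩⟩)
    (fun k => (Set.finite_Ico (c k) (c (k + 1))).subset fun n hn => (hidx n k).1 hn)
  -- `B` may still meet two adjacent blocks `[c k, c (k + 1))` at nearby points; keeping only the
  -- blocks of one parity puts two blocks between any two selected points.
  obtain ⟨r, hr⟩ : ∃ r, ∀ᶠ m in (U : Filter ℕ), idx m % 2 = r := by
    rcases U.em (fun m => idx m % 2 = 0) with h | h
    · exact ⟨0, h⟩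
    · exact ⟨1, h.mono fun m hm => by omega⟩
  refine ⟨B ∩ {m | idx m % 2 = r}, inter_mem hBU hr, fun m hm m' hm' hlt => ?_⟩
  have hgap : idx m + 2 ≤ idx m' := by
    have := hmono hlt.le
    have := mt (@hinj m hm.1 m' hm'.1) hlt.ne
    have := hm.2.trans hm'.2.symm
    omega
  calc φ m ≤ ψ (c (idx m + 1)) := hφ_le ((hidx _ _).1 rfl).2.le
    _ = c (idx m + 2) := (hcs _).symm
    _ ≤ c (idx m') := hc.monotone hgap
    _ ≤ m' := ((hidx _ _).1 rfl).1

theorem Ultrafilter.IsSelective.exists_mem_finset_gap {U : Ultrafilter ℕ} (hU : U.IsSelective)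
    (hUat : (U : Filter ℕ) ≤ atTop) (N : Finset ℕ → ℕ) :
    ∃ B ∈ U, ∀ s : Finset ℕ, ↑s ⊆ B → ∀ a ∈ B, (∀ b ∈ s, b < a) → N s ≤ a := by
  obtain ⟨B, hBU, hB⟩ := hU.exists_mem_gap fun m => (range (m + 1)).powerset.sup N
  refine ⟨B ∩ Set.Ici (N ∅), inter_mem hBU (hUat (Ici_mem_atTop _)), fun s hs a ha hsa => ?_⟩
  rcases s.eq_empty_or_nonempty with rfl | hne
  · exact ha.2
  · have hmax := s.max'_mem hne
    calc N s ≤ (range (s.max' hne + 1)).powerset.sup N :=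
          le_sup (mem_powerset.2 fun b hb => mem_range.2 (Nat.lt_succ_of_le (s.le_max' b hb)))
      _ ≤ a := hB _ (hs hmax).1 a ha.1 (hsa _ hmax)

theorem le_norm_add_sum_of_gaps {E : Type*} [SeminormedAddCommGroup E] (x : ℕ → E) (z : E)
    (ε : ℕ → ℝ) (N : Finset ℕ → ℕ)
    (hN : ∀ s j, N s ≤ j → 1 + ‖z + ∑ i ∈ s, x i‖ - ε #s ≤ ‖z + ∑ i ∈ s, x i + x j‖)
    {B : Set ℕ} (hB : ∀ s : Finset ℕ, ↑s ⊆ B → ∀ a ∈ B, (∀ b ∈ s, b < a) → N s ≤ a)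
    {F : Finset ℕ} (hF : ↑F ⊆ B) :
    ‖z‖ + #F - ∑ k ∈ range #F, ε k ≤ ‖z + ∑ i ∈ F, x i‖ := by
  induction F using Finset.induction_on_max with
  | empty => simp
  | insert a s hlt ih =>
    have has : a ∉ s := fun h => (hlt a h).false
    have hsB : ↑s ⊆ B := (coe_subset.2 (subset_insert a s)).trans hF
    have := hN s a (hB s hsB a (hF (mem_insert_self a s)) hlt)
    rw [sum_insert has, add_comm (x a), ← add_assoc, card_insert_of_notMem has, sum_range_succ]
    push_cast
    linarith [ih hsB]

theorem exists_dual_almost_norming_sum {E : Type*} [SeminormedAddCommGroup E] [NormedSpace ℝ E]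
    {x : ℕ → E} (hx : ∀ i, ‖x i‖ ≤ 1) (z : E) (F : Finset ℕ) {δ : ℝ}
    (h : ‖z‖ + #F - δ ≤ ‖z + ∑ i ∈ F, x i‖) :
    ∃ f : StrongDual ℝ E, ‖f‖ ≤ 1 ∧ ‖z‖ - δ ≤ f z ∧ ∀ i ∈ F, 1 - δ ≤ f (x i) := by
  obtain ⟨f, hf1, hfy⟩ := exists_dual_vector'' ℝ (z + ∑ i ∈ F, x i)
  simp only [RCLike.ofReal_real_eq_id, id] at hfy
  have hfv (v : E) : f v ≤ ‖v‖ :=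
    (Real.le_norm_self _).trans ((f.le_of_opNorm_le hf1 v).trans_eq (one_mul _))
  have hslack : (‖z‖ - f z) + ∑ i ∈ F, (1 - f (x i)) ≤ δ := by
    rw [map_add, map_sum] at hfy
    simp only [sum_sub_distrib, sum_const, nsmul_eq_mul, mul_one]
    linarith
  have hnonneg : ∀ i ∈ F, 0 ≤ 1 - f (x i) := fun i _ => sub_nonneg.2 ((hfv _).trans (hx i))
  refine ⟨f, hf1, ?_, fun i hi => ?_⟩
  · linarith [sum_nonneg hnonneg]
  · linarith [single_le_sum hnonneg hi, hfv z]

theorem StrongDual.exists_tendsto_apply_of_norm_le {𝕜 E ι : Type*} [NontriviallyNormedField 𝕜]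
    [ProperSpace 𝕜] [SeminormedAddCommGroup E] [NormedSpace 𝕜 E] (l : Ultrafilter ι)
    {f : ι → StrongDual 𝕜 E} {r : ℝ} (hf : ∀ i, ‖f i‖ ≤ r) :
    ∃ g : StrongDual 𝕜 E, ‖g‖ ≤ r ∧ ∀ v, Tendsto (fun i => f i v) l (𝓝 (g v)) := by
  obtain ⟨g, hg, hlim⟩ :=
    (WeakDual.isCompact_closedBall (0 : StrongDual 𝕜 E) r).ultrafilter_le_nhds
      (l.map fun i => StrongDual.toWeakDual (f i))
      (le_principal_iff.2 <| Ultrafilter.mem_map.2 <| univ_mem' fun i => by simpa using hf i)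
  exact ⟨WeakDual.toStrongDual g, by simpa using hg,
    fun v => ((WeakDual.eval_continuous v).tendsto g).comp hlim⟩

theorem norm_le_of_tendsto_inclusionInDoubleDual {𝕜 E ι : Type*} [NontriviallyNormedField 𝕜]
    [SeminormedAddCommGroup E] [NormedSpace 𝕜 E] {l : Filter ι} [l.NeBot] {x : ι → E} {r : ℝ}
    (hx : ∀ i, ‖x i‖ ≤ r) {u : StrongDual 𝕜 (StrongDual 𝕜 E)}
    (hu : Tendsto (fun i => StrongDual.toWeakDual (inclusionInDoubleDual 𝕜 E (x i))) l
      (𝓝 (StrongDual.toWeakDual u))) : ‖u‖ ≤ r := by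
  simpa using (WeakDual.isClosed_closedBall 0 r).mem_of_tendsto hu
    (Eventually.of_forall fun i => by simpa using (double_dual_bound 𝕜 E (x i)).trans (hx i))

theorem exists_dual_almost_norming_eventually {X : Type*} [NormedAddCommGroup X]
    [NormedSpace ℝ X] {x : ℕ → X} (hx : ∀ n, ‖x n‖ ≤ 1)
    (hL : ∀ z : X, Tendsto (fun n => ‖z + x n‖) atTop (𝓝 (1 + ‖z‖)))
    {U : Ultrafilter ℕ} (hU : U.IsSelective) (hUat : (U : Filter ℕ) ≤ atTop) (z : X) {δ : ℝ}
    (hδ : 0 < δ) :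
    ∃ g : StrongDual ℝ X, ‖g‖ ≤ 1 ∧ ‖z‖ - δ ≤ g z ∧ ∀ᶠ n in (U : Filter ℕ), 1 - δ ≤ g (x n) := by
  classical
  set ε : ℕ → ℝ := fun k => δ / 2 * (1 / 2) ^ k
  have hsum_ε (n : ℕ) : ∑ k ∈ range n, ε k ≤ δ := by
    rw [← mul_sum]
    nlinarith [sum_geometric_two_le n]
  have hε (k : ℕ) : 0 < ε k := by positivity
  have hN (s : Finset ℕ) : ∃ N, ∀ j, N ≤ j →
      1 + ‖z + ∑ i ∈ s, x i‖ - ε #s ≤ ‖z + ∑ i ∈ s, x i + x j‖ :=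
    eventually_atTop.1 ((hL _).eventually_const_le (by linarith [hε #s]))
  choose N hN using hN
  obtain ⟨B, hBU, hB⟩ := hU.exists_mem_finset_gap hUat N
  set F : ℕ → Finset ℕ := fun m => (range (m + 1)).filter (· ∈ B)
  have hFB (m : ℕ) : ↑(F m) ⊆ B := fun i hi => (mem_filter.1 hi).2
  choose f hf1 hfz hfx using fun m => exists_dual_almost_norming_sum (δ := δ) hx z (F m)
    ((le_norm_add_sum_of_gaps x z ε N hN hB (hFB m)).trans' (by linarith [hsum_ε #(F m)]))
  obtain ⟨g, hg1, hg⟩ := StrongDual.exists_tendsto_apply_of_norm_le U hf1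
  refine ⟨g, hg1, ge_of_tendsto' (hg z) hfz, ?_⟩
  filter_upwards [hBU] with n hn
  refine ge_of_tendsto (hg (x n)) ?_
  filter_upwards [hUat (Ici_mem_atTop n)] with m hm
  exact hfx m n (mem_filter.2 ⟨mem_range.2 (Nat.lt_succ_of_le hm), hn⟩)

theorem stmt7_general (X : Type) [NormedAddCommGroup X] [NormedSpace ℝ X]
    (x : ℕ → X) (hx : ∀ n, ‖x n‖ ≤ 1)
    (hL : ∀ z : X, Filter.Tendsto (fun n => ‖z + x n‖) Filter.atTop (nhds (1 + ‖z‖)))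
    (U : Ultrafilter ℕ)
    (hnp : ∀ n : ℕ, (U : Filter ℕ) ≠ pure n)
    (hsel : ∀ A : ℕ → Set ℕ, (∀ n, (A n).Nonempty) → Pairwise (Function.onFun Disjoint A) →
      (⋃ n, A n) = Set.univ → (∀ n, A n ∉ U) →
      ∃ B ∈ U, ∀ n, (B ∩ A n).ncard = 1)
    (u : StrongDual ℝ (StrongDual ℝ X))
    (hu : Filter.Tendsto (fun n => StrongDual.toWeakDual (inclusionInDoubleDual ℝ X (x n)))
      (U : Filter ℕ) (nhds (StrongDual.toWeakDual u))) :
    ‖u‖ = 1 ∧ ∀ z : X, ‖inclusionInDoubleDual ℝ X z + u‖ = 1 + ‖z‖ := by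
  have hUat : (U : Filter ℕ) ≤ atTop := Nat.cofinite_eq_atTop ▸
    U.le_cofinite_or_eq_pure.resolve_right fun ⟨a, ha⟩ => hnp a (ha ▸ Ultrafilter.coe_pure a)
  have hu1 : ‖u‖ ≤ 1 := norm_le_of_tendsto_inclusionInDoubleDual hx hu
  have hLu (z : X) : ‖inclusionInDoubleDual ℝ X z + u‖ = 1 + ‖z‖ := by
    refine le_antisymm ?_ (le_of_forall_pos_le_add fun ε hε => ?_)
    · linarith [norm_add_le (inclusionInDoubleDual ℝ X z) u, double_dual_bound ℝ X z]
    obtain ⟨g, hg1, hgz, hgx⟩ :=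
      exists_dual_almost_norming_eventually hx hL hsel hUat z (half_pos hε)
    have hug : 1 - ε / 2 ≤ u g :=
      ge_of_tendsto (((WeakDual.eval_continuous g).tendsto _).comp hu) hgx
    have hg_le := (Real.le_norm_self _).trans
      (((inclusionInDoubleDual ℝ X z + u).le_opNorm_of_le hg1).trans_eq (mul_one _))
    rw [add_apply, dual_def] at hg_le
    linarith
  exact ⟨by simpa using hLu 0, hLu⟩

/-- Let `X` be a real Banach space, `(x n)` an `L`-orthogonal sequence in
`X`, and `U` a selective (nonprincipal) ultrafilter on `ℕ`: for every partition of `ℕ` into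
nonempty pairwise disjoint sets `(A n)` with `A n ∉ U` for every `n`, there is `B ∈ U`
meeting each `A n` in exactly one point. If `u ∈ X**` is the weak*-limit of `(ι (x n))`
along `U`, then `u` is an `L`-orthogonal element of `X**`. -/
theorem stmt7 (X : Type) [NormedAddCommGroup X] [NormedSpace ℝ X] [CompleteSpace X]
    (x : ℕ → X) (hx : ∀ n, ‖x n‖ ≤ 1)
    (hL : ∀ z : X, Filter.Tendsto (fun n => ‖z + x n‖) Filter.atTop (nhds (1 + ‖z‖)))
    (U : Ultrafilter ℕ)
    (hnp : ∀ n : ℕ, (U : Filter ℕ) ≠ pure n)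
    (hsel : ∀ A : ℕ → Set ℕ, (∀ n, (A n).Nonempty) → Pairwise (Function.onFun Disjoint A) →
      (⋃ n, A n) = Set.univ → (∀ n, A n ∉ U) →
      ∃ B ∈ U, ∀ n, (B ∩ A n).ncard = 1)
    (u : StrongDual ℝ (StrongDual ℝ X))
    (hu : Filter.Tendsto (fun n => StrongDual.toWeakDual (inclusionInDoubleDual ℝ X (x n)))
      (U : Filter ℕ) (nhds (StrongDual.toWeakDual u))) :
    ‖u‖ = 1 ∧ ∀ z : X, ‖inclusionInDoubleDual ℝ X z + u‖ = 1 + ‖z‖ :=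
  stmt7_general X x hx hL U hnp hsel u hu
end

section
/- Let (Ω, Σ, μ) be a finite (positive) measure space and let ε > ε' > 0 be real numbers. Then for every N ∈ ℕ with N ≥ 1 there exists R ∈ ℕ such that whenever Ω_1, …, Ω_R are measurable sets with μ(Ω_n) > ε for every n ≤ R, one has μ( ⋃_{S ⊆ {1,…,R}, |S| = N} ⋂_{j ∈ S} Ω_j ) > ε'. -/
open MeasureTheory
open scoped ENNReal

/-- Let `(Ω, Σ, μ)` be a finite measure space and `ε > ε' > 0`. Then for
every `N ≥ 1` there is `R ∈ ℕ` such that whenever `s 1, …, s R` are measurable sets with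
`μ (s n) > ε` for all `n`, the union over all `N`-element subsets `S` of `{1, …, R}` of the
intersections `⋂_{j ∈ S} s j` has measure `> ε'`. -/
theorem stmt9 (Ω : Type) [MeasurableSpace Ω] (μ : Measure Ω) [IsFiniteMeasure μ]
    (ε ε' : ℝ) (hε' : 0 < ε') (hεε' : ε' < ε) (N : ℕ) (hN : 1 ≤ N) :
    ∃ R : ℕ, ∀ s : Fin R → Set Ω, (∀ n, MeasurableSet (s n)) →
      (∀ n, ENNReal.ofReal ε < μ (s n)) →
      ENNReal.ofReal ε' <
        μ (⋃ S ∈ {S : Finset (Fin R) | S.card = N}, ⋂ j ∈ S, s j) := by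
  set a : ℝ≥0∞ := (N - 1 : ℕ) * μ Set.univ with ha
  set b : ℝ≥0∞ := ENNReal.ofReal (ε - ε') with hb
  have hb0 : b ≠ 0 := by
    simp [hb, ENNReal.ofReal_eq_zero, not_le, sub_pos, hεε']
  have hbtop : b ≠ ⊤ := ENNReal.ofReal_ne_top
  have hatop : a ≠ ⊤ := ENNReal.mul_ne_top (by simp) (measure_ne_top μ _)
  obtain ⟨R₀, hR₀⟩ := ENNReal.exists_nat_gt (show a / b ≠ ⊤ from
    (ENNReal.div_lt_top hatop hb0).ne)
  refine ⟨R₀ + 1, ?_⟩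
  set R := R₀ + 1 with hR
  have haRb : a < R * b := by
    have h1 : a / b * b < (R₀ : ℝ≥0∞) * b :=
      ENNReal.mul_lt_mul_left hb0 hbtop hR₀
    rw [ENNReal.div_mul_cancel hb0 hbtop] at h1
    refine h1.trans_le ?_
    exact mul_le_mul_left (by exact_mod_cast Nat.le_succ R₀) _
  intro s hs hμs
  classical
  set f : Ω → ℕ := fun x => (Finset.univ.filter (fun i => x ∈ s i)).card with hf
  set U : Set Ω := ⋃ S ∈ {S : Finset (Fin R) | S.card = N}, ⋂ j ∈ S, s j with hUdef
  have hUmem : ∀ x, x ∈ U ↔ N ≤ f x := by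
    intro x
    simp only [hUdef, Set.mem_iUnion, Set.mem_iInter, Set.mem_setOf_eq]
    constructor
    · rintro ⟨S, hScard, hSx⟩
      have hsub : S ⊆ Finset.univ.filter (fun i => x ∈ s i) := by
        intro i hi
        simp [hSx i hi]
      simpa [hf, hScard] using Finset.card_le_card hsub
    · intro hle
      obtain ⟨T, hTsub, hTcard⟩ :=
        Finset.exists_subset_card_eq hle
      exact ⟨T, hTcard, fun j hj => (Finset.mem_filter.1 (hTsub hj)).2⟩
  have hUmeas : MeasurableSet U := by
    refine MeasurableSet.biUnion (Set.to_countable _) (fun S _ => ?_)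
    exact MeasurableSet.biInter (S : Finset (Fin R)).countable_toSet
      (fun j _ => hs j)
  -- Step 1: R * ε < ∑ μ (s i)
  have h1 : (R : ℝ≥0∞) * ENNReal.ofReal ε ≤ ∑ i : Fin R, μ (s i) := by
    have := Finset.sum_le_sum (s := (Finset.univ : Finset (Fin R)))
      (f := fun _ : Fin R => ENNReal.ofReal ε) (g := fun i => μ (s i))
      (fun i _ => (hμs i).le)
    simpa [Finset.sum_const, Finset.card_univ, mul_comm] using this
  -- Step 2: ∑ μ (s i) = ∫ f
  have h2 : ∑ i : Fin R, μ (s i) = ∫⁻ x, (f x : ℝ≥0∞) ∂μ := by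
    have : ∀ i : Fin R, μ (s i) = ∫⁻ x, (s i).indicator 1 x ∂μ :=
      fun i => (lintegral_indicator_one (hs i)).symm
    rw [Finset.sum_congr rfl (fun i _ => this i),
      ← lintegral_finset_sum _ (fun i _ => measurable_one.indicator (hs i))]
    refine lintegral_congr fun x => ?_
    simp only [hf, Finset.card_filter, Set.indicator_apply, Pi.one_apply,
      Nat.cast_sum, Nat.cast_ite, Nat.cast_one, Nat.cast_zero]
  -- Step 3: pointwise bound and integrate
  have h3 : ∫⁻ x, (f x : ℝ≥0∞) ∂μ ≤ (R : ℝ≥0∞) * μ U + a := by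
    have hpt : ∀ x, (f x : ℝ≥0∞) ≤
        U.indicator (fun _ => (R : ℝ≥0∞)) x + ((N - 1 : ℕ) : ℝ≥0∞) := by
      intro x
      by_cases hx : x ∈ U
      · have hfR : f x ≤ R := by
          simpa [hf] using Finset.card_filter_le (Finset.univ : Finset (Fin R))
            (fun i => x ∈ s i)
        calc (f x : ℝ≥0∞) ≤ (R : ℝ≥0∞) := by exact_mod_cast hfR
          _ ≤ _ := by simp [Set.indicator_of_mem hx]
      · have : f x < N := lt_of_not_ge (fun h => hx ((hUmem x).2 h))
        have hle : f x ≤ N - 1 := Nat.le_sub_one_of_lt this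
        calc (f x : ℝ≥0∞) ≤ ((N - 1 : ℕ) : ℝ≥0∞) := by exact_mod_cast hle
          _ ≤ _ := by simp [Set.indicator_of_notMem hx]
    calc ∫⁻ x, (f x : ℝ≥0∞) ∂μ
        ≤ ∫⁻ x, (U.indicator (fun _ => (R : ℝ≥0∞)) x + ((N - 1 : ℕ) : ℝ≥0∞)) ∂μ :=
          lintegral_mono hpt
      _ = (R : ℝ≥0∞) * μ U + a := by
          rw [lintegral_add_right _ measurable_const, lintegral_indicator_const hUmeas,
            lintegral_const, ha]
  -- Conclude by contradiction
  by_contra hcon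
  push_neg at hcon
  have hchain : (R : ℝ≥0∞) * ENNReal.ofReal ε < (R : ℝ≥0∞) * ENNReal.ofReal ε := by
    calc (R : ℝ≥0∞) * ENNReal.ofReal ε
        ≤ ∑ i : Fin R, μ (s i) := h1
      _ = ∫⁻ x, (f x : ℝ≥0∞) ∂μ := h2
      _ ≤ (R : ℝ≥0∞) * μ U + a := h3
      _ ≤ (R : ℝ≥0∞) * ENNReal.ofReal ε' + a :=
          add_le_add_left (mul_le_mul_right hcon _) _
      _ < (R : ℝ≥0∞) * ENNReal.ofReal ε' + R * b :=
          ENNReal.add_lt_add_left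
            (by exact ENNReal.mul_ne_top (by simp) ENNReal.ofReal_ne_top) haRb
      _ = (R : ℝ≥0∞) * ENNReal.ofReal ε := by
          rw [← mul_add, hb, ← ENNReal.ofReal_add hε'.le (sub_nonneg.2 hεε'.le)]
          ring_nf
  exact lt_irrefl _ hchain
end

section
/- Let (A_n)_{n∈ℕ} be a partition of ℕ whose pieces' cardinalities |A_n| tend to infinity (the A_n may be infinite), and let I = {B ⊆ ℕ : sup_n |A_n ∩ B| < ∞} be the associated ideal on ℕ, with dual filter F = {C ⊆ ℕ : ℕ \ C ∈ I}. Then I is a Lebesgue ideal: for every finite (positive) measure space (Ω, Σ, μ), every integrable function g ≥ 0 on Ω, and every sequence (f_n) of measurable real-valued functions on Ω with |f_n| ≤ g pointwise, if for every x ∈ Ω the sequence (f_n(x)) converges to 0 along the filter F, then the sequence of integrals (∫_Ω f_n dμ) converges to 0 along F. -/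
open MeasureTheory Filter Topology Finset
open scoped BigOperators

/-!
Suppose `S = {m : ε ≤ |∫ f m|}` were not in the ideal; splitting by sign, we may assume
`ε ≤ ∫ f m` on `S`. Then some `A n` meets `S` in a finite set `B` of any prescribed size, and the
averages `h_B = 𝔼 m ∈ B, f m` satisfy `|h_B| ≤ g` and `∫ h_B ≥ ε`. At each point `x`, at most
`K(x, δ)` of the `m ∈ B` (all of which lie in one `A n`) have `|f m x| ≥ δ`, so
`|h_B x| ≤ δ + K(x, δ) g(x) / #B`. Letting `#B → ∞`, `h_B → 0` pointwise, and dominated convergence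
contradicts `∫ h_B ≥ ε`.
-/

/-- `S` belongs to the ideal `I = {S : sup_i |A i ∩ S| < ∞}`. -/
def BoundedlyMeets {ι α : Type*} (A : ι → Set α) (S : Set α) : Prop :=
  ∃ k : ℕ, ∀ i, (A i ∩ S).encard ≤ k

namespace BoundedlyMeets

variable {ι α : Type*} {A : ι → Set α} {S T : Set α}

theorem union (hS : BoundedlyMeets A S) (hT : BoundedlyMeets A T) :
    BoundedlyMeets A (S ∪ T) := by
  obtain ⟨k, hk⟩ := hS
  obtain ⟨l, hl⟩ := hT
  refine ⟨k + l, fun i => ?_⟩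
  rw [Set.inter_union_distrib_left, Nat.cast_add]
  exact (Set.encard_union_le _ _).trans (add_le_add (hk i) (hl i))

theorem card_filter_le {p : α → Prop} [DecidablePred p] (h : BoundedlyMeets A {m | p m}) :
    ∃ K : ℕ, ∀ (B : Finset α) (i : ι), ↑B ⊆ A i → #{m ∈ B | p m} ≤ K := by
  obtain ⟨K, hK⟩ := h
  refine ⟨K, fun B i hB => ?_⟩
  have hsub : (↑{m ∈ B | p m} : Set α) ⊆ A i ∩ {m | p m} := fun m hm => by
    rw [coe_filter] at hm
    exact ⟨hB hm.1, hm.2⟩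
  have := (Set.encard_mono hsub).trans (hK i)
  rwa [Set.encard_coe_eq_coe_finsetCard, Nat.cast_le] at this

theorem exists_finset_card_eq_subset_of_not (h : ¬ BoundedlyMeets A S) (k : ℕ) :
    ∃ B : Finset α, #B = k ∧ ∃ i, ↑B ⊆ A i ∩ S := by
  obtain ⟨i, hi⟩ : ∃ i, (k : ℕ∞) < (A i ∩ S).encard := by
    simp only [BoundedlyMeets, not_exists, not_forall, not_le] at h
    exact h k
  obtain ⟨t, hts, htk⟩ := Set.exists_subset_encard_eq hi.le
  have ht : t.Finite := Set.finite_of_encard_eq_coe htk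
  refine ⟨ht.toFinset, ?_, i, by simpa using hts⟩
  rw [ht.encard_eq_coe_toFinset_card] at htk
  exact_mod_cast htk

end BoundedlyMeets

theorem abs_sum_le_card_filter_mul_add {α : Type*} (B : Finset α) (a : α → ℝ) {G ε : ℝ}
    (hε : 0 ≤ ε) (hG : ∀ m ∈ B, |a m| ≤ G) :
    |∑ m ∈ B, a m| ≤ #{m ∈ B | ε ≤ |a m|} * G + #B * ε := by
  have hsmall : ∑ m ∈ B with ¬ ε ≤ |a m|, |a m| ≤ #B * ε :=
    calc ∑ m ∈ B with ¬ ε ≤ |a m|, |a m|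
        ≤ #{m ∈ B | ¬ ε ≤ |a m|} • ε := sum_le_card_nsmul _ _ _ fun m hm =>
          (not_le.1 (mem_filter.1 hm).2).le
      _ ≤ #B * ε := by
          rw [nsmul_eq_mul]
          gcongr
          exact filter_subset _ _
  calc |∑ m ∈ B, a m| ≤ ∑ m ∈ B, |a m| := abs_sum_le_sum_abs _ _
    _ = ∑ m ∈ B with ε ≤ |a m|, |a m| + ∑ m ∈ B with ¬ ε ≤ |a m|, |a m| :=
        (sum_filter_add_sum_filter_not _ _ _).symm
    _ ≤ #{m ∈ B | ε ≤ |a m|} • G + #B * ε := by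
        gcongr
        exact sum_le_card_nsmul _ _ _ fun m hm => hG m (mem_filter.1 hm).1
    _ = #{m ∈ B | ε ≤ |a m|} * G + #B * ε := by rw [nsmul_eq_mul]

theorem tendsto_expect_zero {α β : Type*} {l : Filter β} {B : β → Finset α} {a : α → ℝ} {G : ℝ}
    (hB : Tendsto (fun j => #(B j)) l atTop) (hG : ∀ m, |a m| ≤ G)
    (hfew : ∀ ε > 0, ∃ K : ℕ, ∀ j, #{m ∈ B j | ε ≤ |a m|} ≤ K) :
    Tendsto (fun j => 𝔼 m ∈ B j, a m) l (𝓝 0) := by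
  rw [Metric.tendsto_nhds]
  intro ε hε
  obtain ⟨K, hK⟩ := hfew (ε / 2) (by positivity)
  have hB' : Tendsto (fun j => (#(B j) : ℝ)) l atTop := tendsto_natCast_atTop_atTop.comp hB
  filter_upwards [hB'.eventually_gt_atTop 0, hB'.eventually_gt_atTop (2 * K * G / ε)]
    with j hpos hlarge
  rw [div_lt_iff₀ hε] at hlarge
  have hsum := abs_sum_le_card_filter_mul_add (B j) a (half_pos hε).le fun m _ => hG m
  obtain ⟨m, -⟩ := card_pos.1 (by exact_mod_cast hpos)
  have hKG : (#{m ∈ B j | ε / 2 ≤ |a m|} : ℝ) * G ≤ K * G :=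
    mul_le_mul_of_nonneg_right (by exact_mod_cast hK j) ((abs_nonneg _).trans (hG m))
  rw [dist_zero_right, expect_eq_sum_div_card, Real.norm_eq_abs, abs_div, Nat.abs_cast,
    div_lt_iff₀ hpos]
  linarith

section Integral

variable {α Ω : Type*} [MeasurableSpace Ω] {μ : Measure Ω} {f : α → Ω → ℝ}

theorem integral_expect (s : Finset α) (hf : ∀ m ∈ s, Integrable (f m) μ) :
    ∫ x, 𝔼 m ∈ s, f m x ∂μ = 𝔼 m ∈ s, ∫ x, f m x ∂μ := by
  simp only [expect_eq_sum_div_card]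
  rw [integral_div, integral_finsetSum _ hf]

theorem aestronglyMeasurable_expect (s : Finset α) (hf : ∀ m ∈ s, AEStronglyMeasurable (f m) μ) :
    AEStronglyMeasurable (fun x => 𝔼 m ∈ s, f m x) μ := by
  simp only [expect_eq_sum_div_card]
  exact (Finset.aestronglyMeasurable_fun_sum s hf).mul_const _

theorem boundedlyMeets_setOf_le_integral {ι : Type*} {A : ι → Set α} {g : Ω → ℝ}
    (hg : Integrable g μ) (hf : ∀ m, AEStronglyMeasurable (f m) μ)
    (hdom : ∀ m x, |f m x| ≤ g x) (hpt : ∀ x, ∀ ε > 0, BoundedlyMeets A {m | ε ≤ |f m x|})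
    {ε : ℝ} (hε : 0 < ε) : BoundedlyMeets A {m | ε ≤ ∫ x, f m x ∂μ} := by
  by_contra hS
  choose B hBcard n hBsub using
    fun j => BoundedlyMeets.exists_finset_card_eq_subset_of_not hS (j + 1)
  have hBne j : (B j).Nonempty := card_pos.1 (by rw [hBcard]; omega)
  have hint m : Integrable (f m) μ :=
    hg.mono' (hf m) (ae_of_all _ fun x => (Real.norm_eq_abs _).trans_le (hdom m x))
  have hlow j : ε ≤ ∫ x, 𝔼 m ∈ B j, f m x ∂μ := by
    rw [integral_expect _ fun m _ => hint m]
    exact le_expect (hBne j) fun m hm => (hBsub j hm).2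
  have hbound j x : ‖𝔼 m ∈ B j, f m x‖ ≤ g x :=
    (abs_expect_le _ _).trans (expect_le (hBne j) fun m _ => hdom m x)
  have hlim x : Tendsto (fun j => 𝔼 m ∈ B j, f m x) atTop (𝓝 0) := by
    refine tendsto_expect_zero ?_ (hdom · x) fun δ hδ => ?_
    · simpa only [hBcard] using tendsto_add_atTop_nat 1
    · obtain ⟨K, hK⟩ := (hpt x δ hδ).card_filter_le
      exact ⟨K, fun j => hK (B j) (n j) fun m hm => (hBsub j hm).1⟩
  have hdct := tendsto_integral_of_dominated_convergence g
    (fun j => aestronglyMeasurable_expect (B j) fun m _ => hf m) hg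
    (fun j => ae_of_all _ (hbound j)) (ae_of_all _ hlim)
  rw [integral_zero] at hdct
  exact hε.not_ge (ge_of_tendsto' hdct hlow)

end Integral

theorem stmt10_general (A : ℕ → Set ℕ)
    (Ω : Type) [MeasurableSpace Ω] (μ : Measure Ω)
    (g : Ω → ℝ) (hg : Integrable g μ)
    (f : ℕ → Ω → ℝ) (hf : ∀ n, Measurable (f n)) (hdom : ∀ n x, |f n x| ≤ g x)
    (hpt : ∀ x : Ω, ∀ ε : ℝ, 0 < ε →
      ∃ k : ℕ, ∀ n, (A n ∩ {m | ε ≤ |f m x|}).encard ≤ (k : ℕ∞)) :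
    ∀ ε : ℝ, 0 < ε →
      ∃ k : ℕ, ∀ n, (A n ∩ {m | ε ≤ |∫ y, f m y ∂μ|}).encard ≤ (k : ℕ∞) := by
  intro ε hε
  have hsplit : {m | ε ≤ |∫ y, f m y ∂μ|} =
      {m | ε ≤ ∫ y, f m y ∂μ} ∪ {m | ε ≤ ∫ y, -f m y ∂μ} := by
    ext m
    simp [le_abs, integral_neg]
  have hpos := boundedlyMeets_setOf_le_integral hg (fun m => (hf m).aestronglyMeasurable)
    hdom hpt hε
  have hneg := boundedlyMeets_setOf_le_integral (f := fun m y => -f m y) hg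
    (fun m => (hf m).neg.aestronglyMeasurable) (by simpa only [abs_neg] using hdom)
    (fun x δ hδ => by simp only [abs_neg]; exact hpt x δ hδ) hε
  rw [hsplit]
  exact hpos.union hneg

/-- Let `(A n)` be a partition of `ℕ` whose pieces' cardinalities tend to
infinity (pieces may be infinite), and let `I = {B ⊆ ℕ : sup_n |A n ∩ B| < ∞}` be the
associated ideal, with dual filter `F`. Then `I` is a Lebesgue ideal: for every finite
measure space, every integrable dominating function `g ≥ 0` and every sequence `(f n)` of
measurable functions with `|f n| ≤ g` pointwise that converges pointwise to `0` along `F`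
(i.e. for every `x` and `ε > 0` the set `{m : |f m x| ≥ ε}` is in `I`), the integrals
`∫ f n dμ` converge to `0` along `F` (i.e. for every `ε > 0`, `{m : |∫ f m dμ| ≥ ε} ∈ I`). -/
theorem stmt10 (A : ℕ → Set ℕ)
    (hdis : Pairwise (Function.onFun Disjoint A)) (hcov : (⋃ n, A n) = Set.univ)
    (hcard : ∀ k : ℕ, ∃ m : ℕ, ∀ n ≥ m, (k : ℕ∞) ≤ (A n).encard)
    (Ω : Type) [MeasurableSpace Ω] (μ : Measure Ω) [IsFiniteMeasure μ]
    (g : Ω → ℝ) (hg : Integrable g μ) (hg0 : ∀ x, 0 ≤ g x)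
    (f : ℕ → Ω → ℝ) (hf : ∀ n, Measurable (f n)) (hdom : ∀ n x, |f n x| ≤ g x)
    (hpt : ∀ x : Ω, ∀ ε : ℝ, 0 < ε →
      ∃ k : ℕ, ∀ n, (A n ∩ {m | ε ≤ |f m x|}).encard ≤ (k : ℕ∞)) :
    ∀ ε : ℝ, 0 < ε →
      ∃ k : ℕ, ∀ n, (A n ∩ {m | ε ≤ |∫ y, f m y ∂μ|}).encard ≤ (k : ℕ∞) :=
  stmt10_general A Ω μ g hg f hf hdom hpt
end

section
/- Let F be a Lebesgue filter on ℕ, let K be a compact Hausdorff space, and let (f_n) be a uniformly bounded sequence in C(K) that converges pointwise along F to some f ∈ C(K) (i.e., f_n(x) → f(x) along F for every x ∈ K). Then (f_n) converges to f along F in the weak topology of C(K), i.e., φ(f_n) → φ(f) along F for every continuous linear functional φ on C(K). -/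
/-! A continuous functional `φ` on `C(K)` is dominated by its modulus
`|φ| f = sup {φ u : -f ≤ u ≤ f}`. By the Riesz decomposition property `|φ|` is additive on
nonnegative functions, so by the Riesz–Markov–Kakutani theorem it is integration against a finite
measure `μ`. Hence `|φ (f n) - φ g| ≤ ∫ |f n - g| dμ`; the integrands are dominated by the constant
`M + ‖g‖` and tend to `0` pointwise along `F`, so the Lebesgue property of `F` finishes the proof. -/

open MeasureTheory Filter Topology Set CompactlySupported CompactlySupportedContinuousMap
open scoped NNReal Pointwise

lemma Set.Icc_neg_add_of_nonneg {α : Type*} [AddCommGroup α] [Lattice α] [IsOrderedAddMonoid α]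
    {a b : α} (ha : 0 ≤ a) (hb : 0 ≤ b) :
    Icc (-(a + b)) (a + b) = Icc (-a) a + Icc (-b) b := by
  refine Subset.antisymm (fun w hw => ?_) ?_
  · -- truncate `w` to `[-a, a]`; the remainder then lies in `[-b, b]`
    set u := w ⊓ a ⊔ -a
    refine ⟨u, ⟨le_sup_right, sup_le inf_le_right (neg_le_self ha)⟩, w - u,
      ⟨?_, ?_⟩, add_sub_cancel u w⟩
    · rw [neg_le_sub_iff_le_add]
      exact sup_le (inf_le_left.trans (le_add_of_nonneg_right hb))
        (sub_le_iff_le_add.1 (neg_add' a b ▸ hw.1))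
    · rw [sub_le_comm]
      exact (le_inf (sub_le_self w hb) (sub_le_iff_le_add.2 hw.2)).trans le_sup_left
  · rintro _ ⟨u, hu, v, hv, rfl⟩
    exact ⟨neg_add a b ▸ add_le_add hu.1 hv.1, add_le_add hu.2 hv.2⟩

section DualAbs

variable {K : Type*} [TopologicalSpace K] [CompactSpace K]

lemma ContinuousMap.norm_le_of_mem_Icc_neg {u f : C(K, ℝ)} (hu : u ∈ Icc (-f) f) : ‖u‖ ≤ ‖f‖ :=
  (norm_le u (norm_nonneg f)).2 fun x =>
    (abs_le.2 ⟨by simpa using hu.1 x, hu.2 x⟩).trans ((le_abs_self _).trans (f.norm_coe_le_norm x))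

variable (φ : StrongDual ℝ C(K, ℝ))

/-- The modulus `|φ|` of `φ` in the dual Riesz space, evaluated at `f` (junk unless `0 ≤ f`). -/
noncomputable def dualAbs (f : C(K, ℝ)) : ℝ := sSup (φ '' Icc (-f) f)

lemma bddAbove_image_Icc_neg (f : C(K, ℝ)) : BddAbove (φ '' Icc (-f) f) := by
  refine ⟨‖φ‖ * ‖f‖, ?_⟩
  rintro _ ⟨u, hu, rfl⟩
  exact (le_abs_self _).trans ((φ.le_opNorm u).trans
    (mul_le_mul_of_nonneg_left (ContinuousMap.norm_le_of_mem_Icc_neg hu) (norm_nonneg φ)))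

omit [CompactSpace K] in
lemma nonempty_image_Icc_neg {f : C(K, ℝ)} (hf : 0 ≤ f) : (φ '' Icc (-f) f).Nonempty :=
  ⟨φ 0, 0, ⟨neg_nonpos.2 hf, hf⟩, rfl⟩

lemma le_dualAbs {u f : C(K, ℝ)} (hu : u ∈ Icc (-f) f) : φ u ≤ dualAbs φ f :=
  le_csSup (bddAbove_image_Icc_neg φ f) ⟨u, hu, rfl⟩

lemma dualAbs_nonneg {f : C(K, ℝ)} (hf : 0 ≤ f) : 0 ≤ dualAbs φ f := by
  simpa using le_dualAbs φ (u := 0) ⟨neg_nonpos.2 hf, hf⟩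

lemma abs_apply_le_dualAbs_abs (u : C(K, ℝ)) : |φ u| ≤ dualAbs φ |u| := by
  refine abs_le.2 ⟨?_, le_dualAbs φ ⟨neg_le.1 (neg_le_abs u), le_abs_self u⟩⟩
  have := le_dualAbs φ (u := -u) ⟨neg_le_neg (le_abs_self u), neg_le_abs u⟩
  rw [map_neg] at this
  linarith

lemma dualAbs_add {f g : C(K, ℝ)} (hf : 0 ≤ f) (hg : 0 ≤ g) :
    dualAbs φ (f + g) = dualAbs φ f + dualAbs φ g := by
  rw [dualAbs, Icc_neg_add_of_nonneg hf hg, image_add]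
  exact csSup_add (nonempty_image_Icc_neg φ hf) (bddAbove_image_Icc_neg φ f)
    (nonempty_image_Icc_neg φ hg) (bddAbove_image_Icc_neg φ g)

omit [CompactSpace K] in
lemma dualAbs_smul {c : ℝ} (hc : 0 ≤ c) (f : C(K, ℝ)) :
    dualAbs φ (c • f) = c * dualAbs φ f := by
  rcases hc.eq_or_lt with rfl | hc
  · simp [dualAbs]
  have hIcc : c • Icc (-f) f = Icc (-(c • f)) (c • f) := by
    rw [← image_smul, ← smul_neg]
    exact (OrderIso.smulRight hc).image_Icc (-f) f
  rw [dualAbs, dualAbs, ← hIcc, image_smul_set, Real.sSup_smul_of_nonneg hc.le, smul_eq_mul]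

end DualAbs

section RieszMeasure

variable {K : Type*} [TopologicalSpace K] [CompactSpace K] [T2Space K] (φ : StrongDual ℝ C(K, ℝ))

noncomputable def dualAbsNNReal : C_c(K, ℝ≥0) →ₗ[ℝ≥0] ℝ≥0 where
  toFun f := ⟨dualAbs φ f.toReal, dualAbs_nonneg φ fun x => by simp⟩
  map_add' f g := by
    ext
    simp only [toReal_add]
    exact dualAbs_add φ (fun x => by simp) (fun x => by simp)
  map_smul' c f := by
    ext
    simp only [toReal_smul, RingHom.id_apply]
    exact dualAbs_smul φ c.2 _

theorem exists_isFiniteMeasure_abs_apply_le_integral [MeasurableSpace K] [BorelSpace K] :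
    ∃ μ : Measure K, IsFiniteMeasure μ ∧ ∀ u : C(K, ℝ), |φ u| ≤ ∫ x, |u x| ∂μ := by
  refine ⟨NNRealRMK.rieszMeasure (dualAbsNNReal φ), inferInstance, fun u => ?_⟩
  set g : C_c(K, ℝ≥0) := nnrealPart (continuousMapEquiv |u|)
  have hg : (g.toReal : C(K, ℝ)) = |u| := by ext x; simp [g]
  calc |φ u| ≤ dualAbs φ |u| := abs_apply_le_dualAbs_abs φ u
    _ = dualAbsNNReal φ g := by rw [← hg]; rfl
    _ = ∫ x, |u x| ∂NNRealRMK.rieszMeasure (dualAbsNNReal φ) := by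
      rw [← NNRealRMK.integral_rieszMeasure]; simp [g]

end RieszMeasure

/-- Let `F` be a Lebesgue filter on `ℕ`, `K` a compact Hausdorff space,
and `(f n)` a uniformly bounded sequence in `C(K)` converging pointwise along `F` to some
`g ∈ C(K)`. Then `(f n)` converges to `g` along `F` in the weak topology of `C(K)`, i.e.
`φ (f n) → φ g` along `F` for every continuous linear functional `φ` on `C(K)`. -/
theorem stmt11 (K : Type) [TopologicalSpace K] [CompactSpace K] [T2Space K]
    (F : Filter ℕ)
    (hLeb : ∀ (Ω : Type) [MeasurableSpace Ω] (μ : Measure Ω), IsFiniteMeasure μ →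
      ∀ g : Ω → ℝ, Integrable g μ → (∀ x, 0 ≤ g x) →
      ∀ f : ℕ → Ω → ℝ, (∀ n, Measurable (f n)) → (∀ n x, |f n x| ≤ g x) →
      (∀ x, Filter.Tendsto (fun n => f n x) F (nhds 0)) →
      Filter.Tendsto (fun n => ∫ x, f n x ∂μ) F (nhds 0))
    (f : ℕ → C(K, ℝ)) (M : ℝ) (hbound : ∀ n, ‖f n‖ ≤ M)
    (g : C(K, ℝ)) (hpt : ∀ x : K, Filter.Tendsto (fun n => f n x) F (nhds (g x))) :
    ∀ φ : StrongDual ℝ C(K, ℝ),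
      Filter.Tendsto (fun n => φ (f n)) F (nhds (φ g)) := by
  intro φ
  borelize K
  obtain ⟨μ, hμ, hφμ⟩ := exists_isFiniteMeasure_abs_apply_le_integral φ
  have hdom (n : ℕ) (x : K) : |(|f n x - g x|)| ≤ M + ‖g‖ := by
    rw [abs_abs]
    exact (abs_sub _ _).trans
      (add_le_add (((f n).norm_coe_le_norm x).trans (hbound n)) (g.norm_coe_le_norm x))
  have hM : 0 ≤ M + ‖g‖ := add_nonneg ((norm_nonneg _).trans (hbound 0)) (norm_nonneg g)
  have hint : Tendsto (fun n => ∫ x, |f n x - g x| ∂μ) F (𝓝 0) :=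
    hLeb K μ hμ _ (integrable_const _) (fun _ => hM) _
      (fun n => ((f n).continuous.sub g.continuous).abs.measurable) hdom
      fun x => by simpa using ((hpt x).sub_const (g x)).abs
  rw [← tendsto_sub_nhds_zero_iff]
  refine squeeze_zero_norm (fun n => ?_) hint
  rw [Real.norm_eq_abs, ← map_sub]
  exact hφμ (f n - g)
end

section
/- There exists a sequence (x_n) in the unit sphere of ℓ¹ (the space of absolutely summable real sequences with its usual norm) which is an L-orthogonal sequence and such that 0 belongs to the closure of the set {x_n : n ∈ ℕ} in the weak topology of ℓ¹. -/
open Filter Topology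

noncomputable section Aux12


abbrev E1 := lp (fun _ : ℕ => ℝ) 1

def ee (i : ℕ) : E1 := lp.single 1 i (1:ℝ)

def kk (n : ℕ) : ℕ := n.unpair.1
def ss (n : ℕ) : ℕ := n.unpair.2
def mm (n : ℕ) : ℕ := ss n / (kk n + 2)^2
def pp (n : ℕ) : ℕ := (ss n % (kk n + 2)^2) / (kk n + 2)
def qq (n : ℕ) : ℕ := (ss n % (kk n + 2)^2) % (kk n + 2)
def aa (n : ℕ) : ℕ := mm n + kk n + pp n
def bb (n : ℕ) : ℕ := mm n + kk n + (if pp n = qq n then pp n + 1 else qq n)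
def xx (n : ℕ) : E1 := (2⁻¹ : ℝ) • (ee (aa n) - ee (bb n))

lemma norm_eq (z : E1) : ‖z‖ = ∑' i, |z i| := by
  have h := lp.norm_eq_tsum_rpow (p := 1) (by norm_num) z
  simpa using h

lemma ee_apply (i j : ℕ) : (ee i : ∀ _:ℕ, ℝ) j = if j = i then 1 else 0 := by
  rcases eq_or_ne j i with h | h
  · simp [ee, h, lp.single_apply_self]
  · simp [ee, lp.single_apply_ne _ _ _ h, h]

lemma norm_ee (i : ℕ) : ‖ee i‖ = 1 := by
  rw [norm_eq]
  have h : ∀ j, |(ee i : ∀ _:ℕ, ℝ) j| = if j = i then 1 else 0 := by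
    intro j; rw [ee_apply]; split_ifs <;> simp
  rw [tsum_congr h, tsum_ite_eq]

lemma decode (k m p q : ℕ) (hp : p < k+2) (hq : q < k+2) (hpq : p ≠ q) :
    ∃ n, aa n = m + k + p ∧ bb n = m + k + q := by
  refine ⟨Nat.pair k ((k+2)^2 * m + ((k+2)*p + q)), ?_, ?_⟩ <;>
  · have hk : kk (Nat.pair k ((k+2)^2 * m + ((k+2)*p + q))) = k := by
      simp [kk, Nat.unpair_pair]
    have hs : ss (Nat.pair k ((k+2)^2 * m + ((k+2)*p + q))) = (k+2)^2 * m + ((k+2)*p + q) := by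
      simp [ss, Nat.unpair_pair]
    have hr : (k+2)*p + q < (k+2)^2 := by nlinarith
    have hm : mm (Nat.pair k ((k+2)^2 * m + ((k+2)*p + q))) = m := by
      rw [mm, hk, hs, Nat.mul_add_div (by positivity), Nat.div_eq_of_lt hr, add_zero]
    have hmod : ss (Nat.pair k ((k+2)^2 * m + ((k+2)*p + q))) % (k+2)^2 = (k+2)*p + q := by
      rw [hs, Nat.mul_add_mod, Nat.mod_eq_of_lt hr]
    have hpp : pp (Nat.pair k ((k+2)^2 * m + ((k+2)*p + q))) = p := by
      rw [pp, hk, hmod, Nat.mul_add_div (by omega), Nat.div_eq_of_lt hq, add_zero]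
    have hqq : qq (Nat.pair k ((k+2)^2 * m + ((k+2)*p + q))) = q := by
      rw [qq, hk, hmod, Nat.mul_add_mod, Nat.mod_eq_of_lt hq]
    simp [aa, bb, hk, hm, hpp, hqq, hpq]

lemma pigeon (J : Finset (E1 →L[ℝ] ℝ)) {δ : ℝ} (hδ : 0 < δ) :
    ∃ n, ∀ f ∈ J, |f (xx n)| < δ := by
  classical
  set M : ℝ := ∑ f ∈ J, ‖f‖ with hM
  have hMf : ∀ f ∈ J, ‖f‖ ≤ M := fun f hf =>
    Finset.single_le_sum (fun g _ => norm_nonneg g) hf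
  set c : ℕ → (J → ℤ) := fun i => fun f => ⌊((f : E1 →L[ℝ] ℝ) (ee i)) / δ⌋ with hc
  set K : ℤ := ⌈M/δ⌉ + 1 with hK
  set T : Finset (J → ℤ) := Fintype.piFinset (fun _ => Finset.Icc (-K) K) with hT
  set k := T.card with hk
  set s : Finset ℕ := Finset.image (fun p => k + p) (Finset.range (k+2)) with hs
  have hbound : ∀ i, c i ∈ T := by
    intro i
    rw [hT, Fintype.mem_piFinset]
    intro f
    simp only [hc, hK]
    set v : ℝ := (f : E1 →L[ℝ] ℝ) (ee i) with hv
    have hb : |v| ≤ M := by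
      calc |v| ≤ ‖(f : E1 →L[ℝ] ℝ)‖ * ‖ee i‖ := (f : E1 →L[ℝ] ℝ).le_opNorm _
      _ = ‖(f : E1 →L[ℝ] ℝ)‖ := by rw [norm_ee, mul_one]
      _ ≤ M := hMf f f.2
    obtain ⟨hb1, hb2⟩ := abs_le.mp hb
    have h1 : v / δ ≤ M / δ := (div_le_div_iff_of_pos_right hδ).mpr hb2
    have h2 : -(M / δ) ≤ v / δ := by
      rw [← neg_div]
      exact (div_le_div_iff_of_pos_right hδ).mpr hb1
    rw [Finset.mem_Icc]
    constructor
    · apply Int.le_floor.mpr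
      have := Int.le_ceil (M / δ)
      push_cast
      linarith
    · have h3 : ⌊v / δ⌋ ≤ ⌊M / δ⌋ := Int.floor_le_floor h1
      have h4 : ⌊M / δ⌋ ≤ ⌈M / δ⌉ := Int.floor_le_ceil _
      have : (⌊(v:ℝ) / δ⌋ : ℤ) = ⌊((f : E1 →L[ℝ] ℝ) (ee i)) / δ⌋ := by rw [hv]
      omega
  have hcard : T.card < s.card := by
    rw [hs, Finset.card_image_of_injective _ (add_right_injective k), Finset.card_range]
    omega
  obtain ⟨i, hi, j, hj, hij, hcij⟩ :=
    Finset.exists_ne_map_eq_of_card_lt_of_maps_to hcard (fun i _ => hbound i)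
  rw [hs, Finset.mem_image] at hi hj
  obtain ⟨p, hp, rfl⟩ := hi
  obtain ⟨q, hq, rfl⟩ := hj
  rw [Finset.mem_range] at hp hq
  have hpq : p ≠ q := fun h => hij (by rw [h])
  obtain ⟨n, hna, hnb⟩ := decode k 0 p q hp hq hpq
  rw [zero_add] at hna hnb
  refine ⟨n, fun f hf => ?_⟩
  have hfl0 := congrFun hcij ⟨f, hf⟩
  simp only [hc] at hfl0
  have hfl : ⌊(f (ee (k + p))) / δ⌋ = ⌊(f (ee (k + q))) / δ⌋ := hfl0
  have habs : |(f (ee (k + p))) / δ - (f (ee (k + q))) / δ| < 1 :=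
    Int.abs_sub_lt_one_of_floor_eq_floor hfl
  rw [div_sub_div_same, abs_div, abs_of_pos hδ, div_lt_one hδ] at habs
  have hfx : f (xx n) = 2⁻¹ * (f (ee (aa n)) - f (ee (bb n))) := by
    simp [xx, map_smul, map_sub, smul_eq_mul]
  rw [hfx, hna, hnb, abs_mul, abs_of_pos (by norm_num : (0:ℝ) < 2⁻¹)]
  nlinarith [abs_nonneg (f (ee (k + p)) - f (ee (k + q)))]

lemma weakclosure :
    (0 : WeakSpace ℝ E1) ∈ closure (Set.range fun n => toWeakSpace ℝ E1 (xx n)) := by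
  classical
  set B := (topDualPairing ℝ E1).flip with hB
  have hind : Topology.IsInducing (fun (x : WeakSpace ℝ E1) (f : E1 →L[ℝ] ℝ) => B x f) := ⟨rfl⟩
  rw [hind.closure_eq_preimage_closure_image, Set.mem_preimage]
  rw [mem_closure_iff_nhds]
  intro U hU
  rw [nhds_pi, Filter.mem_pi] at hU
  obtain ⟨I, hIfin, V, hV, hVU⟩ := hU
  have hV0 : ∀ f : E1 →L[ℝ] ℝ, V f ∈ 𝓝 (0:ℝ) := by
    intro f
    have := hV f
    have h0 : B (0 : WeakSpace ℝ E1) f = 0 := by show B (0 : E1) f = 0; rw [map_zero]; rfl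
    simpa [h0] using this
  have hδ : ∃ δ > 0, ∀ f ∈ hIfin.toFinset, Metric.ball (0:ℝ) δ ⊆ V f := by
    have h1 : ∀ f : E1 →L[ℝ] ℝ, ∃ ε > 0, Metric.ball (0:ℝ) ε ⊆ V f := fun f =>
      Metric.mem_nhds_iff.mp (hV0 f)
    choose ε hεpos hεsub using h1
    rcases Finset.eq_empty_or_nonempty hIfin.toFinset with he | hne
    · exact ⟨1, one_pos, by simp [he]⟩
    · refine ⟨hIfin.toFinset.inf' hne ε, ?_, fun f hf => ?_⟩
      · exact (Finset.lt_inf'_iff hne).mpr fun f _ => hεpos f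
      · exact (Metric.ball_subset_ball (Finset.inf'_le ε hf)).trans (hεsub f)
  obtain ⟨δ, hδpos, hδsub⟩ := hδ
  obtain ⟨n, hn⟩ := pigeon hIfin.toFinset hδpos
  refine ⟨fun f => B (toWeakSpace ℝ E1 (xx n)) f, hVU ?_,
    Set.mem_image_of_mem _ (Set.mem_range_self n)⟩
  intro f hf
  have hmem : f ∈ hIfin.toFinset := hIfin.mem_toFinset.mpr hf
  apply hδsub f hmem
  rw [Metric.mem_ball, Real.dist_eq, sub_zero]
  exact (show |f (xx n)| < δ from hn f hmem)


lemma hab (n : ℕ) : aa n ≠ bb n := by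
  unfold aa bb
  split_ifs with h <;> omega

lemma xx_apply (n j : ℕ) :
    (xx n : ∀ _:ℕ, ℝ) j = if j = aa n then 2⁻¹ else if j = bb n then -2⁻¹ else 0 := by
  have h1 : (xx n : ∀ _:ℕ, ℝ) j = 2⁻¹ * ((ee (aa n) : ∀ _:ℕ, ℝ) j - (ee (bb n) : ∀ _:ℕ, ℝ) j) := by
    simp [xx]
    rfl
  rw [h1, ee_apply, ee_apply]
  rcases eq_or_ne j (aa n) with h | h
  · subst h; simp [hab n]
  · rcases eq_or_ne j (bb n) with h2 | h2
    · subst h2; simp [h, (hab n).symm]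
    · simp [h, h2]

lemma summable_abs (z : E1) : Summable (fun i => |z i|) := by
  have := (lp.memℓp z).summable (p := 1) (by norm_num)
  simpa using this

lemma key (z : E1) (n : ℕ) :
    ‖z + xx n‖ = ‖z‖ + ((|z (aa n) + 2⁻¹| - |z (aa n)|) + (|z (bb n) - 2⁻¹| - |z (bb n)|)) := by
  have hadd : ∀ j, ((z + xx n : E1) : ∀ _:ℕ, ℝ) j = z j + (xx n : ∀ _:ℕ, ℝ) j := by
    intro j; rw [lp.coeFn_add]; rfl
  set h : ℕ → ℝ := fun i => |(z + xx n : E1) i| - |z i| with hh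
  have hsupp : ∀ i, i ∉ ({aa n, bb n} : Finset ℕ) → h i = 0 := by
    intro i hi
    simp only [Finset.mem_insert, Finset.mem_singleton] at hi
    push_neg at hi
    simp [hh, hadd, xx_apply, hi.1, hi.2]
  have hhsum : Summable h := summable_of_ne_finset_zero hsupp
  have hz := summable_abs z
  have hptw : ∀ i, |(z + xx n : E1) i| = |z i| + h i := fun i => by simp [hh]
  have hcalc : ‖z + xx n‖ = ‖z‖ + (h (aa n) + h (bb n)) := by
    rw [norm_eq, norm_eq]
    calc ∑' i, |(z + xx n : E1) i| = ∑' i, (|z i| + h i) := tsum_congr hptw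
    _ = (∑' i, |z i|) + ∑' i, h i := Summable.tsum_add hz hhsum
    _ = (∑' i, |z i|) + (h (aa n) + h (bb n)) := by
        rw [tsum_eq_sum (s := {aa n, bb n}) hsupp, Finset.sum_pair (hab n)]
  rw [hcalc]
  congr 1
  have ha : h (aa n) = |z (aa n) + 2⁻¹| - |z (aa n)| := by
    simp [hh, hadd, xx_apply]
  have hb : h (bb n) = |z (bb n) - 2⁻¹| - |z (bb n)| := by
    simp [hh, hadd, xx_apply, (hab n).symm]
    ring_nf
  rw [ha, hb]

lemma norm_xx (n : ℕ) : ‖xx n‖ = 1 := by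
  have := key 0 n
  simp only [zero_add, norm_zero] at this
  rw [this]
  have h0 : ∀ j, ((0 : E1) : ∀ _:ℕ, ℝ) j = 0 := by intro j; rfl
  rw [h0, h0]
  rw [abs_zero, zero_add, zero_sub, abs_neg]
  rw [abs_of_pos (by norm_num : (0:ℝ) < 2⁻¹)]
  norm_num


lemma pair_le (k s : ℕ) : Nat.pair k s ≤ (k + s + 1)^2 := by
  unfold Nat.pair; split_ifs <;> nlinarith

lemma tendsto_mk : Tendsto (fun n => mm n + kk n) atTop atTop := by
  rw [tendsto_atTop]
  intro N
  rw [eventually_atTop]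
  refine ⟨(N + (N+1)^2 * N + 1)^2 + 1, fun n hn => ?_⟩
  by_contra hcon
  push_neg at hcon
  have hk : kk n < N := by omega
  have hm : mm n < N := by omega
  have hs : ss n < (N+1)^2 * N := by
    have h1 : (kk n + 2)^2 * mm n + ss n % (kk n + 2)^2 = ss n := Nat.div_add_mod _ _
    have h2 : ss n % (kk n + 2)^2 < (kk n + 2)^2 := Nat.mod_lt _ (by positivity)
    have hk2 : (kk n + 2)^2 ≤ (N+1)^2 := Nat.pow_le_pow_left (by omega) 2
    have hmul : (kk n + 2)^2 * mm n ≤ (N+1)^2 * mm n := Nat.mul_le_mul_right _ hk2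
    nlinarith
  have h3 := pair_le (kk n) (ss n)
  have hpu : Nat.pair (kk n) (ss n) = n := Nat.pair_unpair n
  rw [hpu] at h3
  have : n ≤ (N + (N+1)^2 * N + 1)^2 := le_trans h3 (by nlinarith)
  omega

lemma tendsto_aa : Tendsto aa atTop atTop :=
  tendsto_atTop_mono (fun n => by unfold aa; omega) tendsto_mk

lemma tendsto_bb : Tendsto bb atTop atTop :=
  tendsto_atTop_mono (fun n => by unfold bb; omega) tendsto_mk

lemma lorth (z : E1) : Tendsto (fun n => ‖z + xx n‖) atTop (𝓝 (1 + ‖z‖)) := by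
  have hz : Summable (fun i => (z : ∀ _:ℕ, ℝ) i) := summable_abs_iff.mp (summable_abs z)
  have h0 : Tendsto (fun i => (z : ∀ _:ℕ, ℝ) i) atTop (𝓝 0) := hz.tendsto_atTop_zero
  have ta : Tendsto (fun n => (z : ∀ _:ℕ, ℝ) (aa n)) atTop (𝓝 0) := h0.comp tendsto_aa
  have tb : Tendsto (fun n => (z : ∀ _:ℕ, ℝ) (bb n)) atTop (𝓝 0) := h0.comp tendsto_bb
  have c1 : Continuous fun t : ℝ => |t + 2⁻¹| - |t| := by fun_prop
  have c2 : Continuous fun t : ℝ => |t - 2⁻¹| - |t| := by fun_prop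
  have e1 : |(0:ℝ) + 2⁻¹| - |(0:ℝ)| = 2⁻¹ := by
    rw [zero_add, abs_zero, abs_of_pos (by norm_num : (0:ℝ) < 2⁻¹), sub_zero]
  have e2 : |(0:ℝ) - 2⁻¹| - |(0:ℝ)| = 2⁻¹ := by
    rw [zero_sub, abs_neg, abs_zero, abs_of_pos (by norm_num : (0:ℝ) < 2⁻¹), sub_zero]
  have l1 : Tendsto (fun n => |(z : ∀ _:ℕ, ℝ) (aa n) + 2⁻¹| - |(z : ∀ _:ℕ, ℝ) (aa n)|)
      atTop (𝓝 2⁻¹) := by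
    have h := (c1.tendsto 0).comp ta
    rw [e1] at h
    exact h
  have l2 : Tendsto (fun n => |(z : ∀ _:ℕ, ℝ) (bb n) - 2⁻¹| - |(z : ∀ _:ℕ, ℝ) (bb n)|)
      atTop (𝓝 2⁻¹) := by
    have h := (c2.tendsto 0).comp tb
    rw [e2] at h
    exact h
  have hsum := (tendsto_const_nhds (x := ‖z‖) (f := atTop)).add (l1.add l2)
  have heq : (fun n => ‖z + xx n‖) =
      fun n => ‖z‖ + ((|(z : ∀ _:ℕ, ℝ) (aa n) + 2⁻¹| - |(z : ∀ _:ℕ, ℝ) (aa n)|) +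
        (|(z : ∀ _:ℕ, ℝ) (bb n) - 2⁻¹| - |(z : ∀ _:ℕ, ℝ) (bb n)|)) := funext (key z)
  rw [heq]
  have hval : (1:ℝ) + ‖z‖ = ‖z‖ + (2⁻¹ + 2⁻¹) := by norm_num [add_comm]
  rw [hval]
  exact hsum

end Aux12

/-- There is a sequence `(x n)` in the unit sphere of `ℓ¹` which is an
`L`-orthogonal sequence and such that `0` belongs to the closure of `{x n : n ∈ ℕ}` in the
weak topology of `ℓ¹`. -/
theorem stmt12 :
    ∃ x : ℕ → lp (fun _ : ℕ => ℝ) 1,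
      (∀ n, ‖x n‖ = 1) ∧
      (∀ z : lp (fun _ : ℕ => ℝ) 1,
        Filter.Tendsto (fun n => ‖z + x n‖) Filter.atTop (nhds (1 + ‖z‖))) ∧
      (0 : WeakSpace ℝ (lp (fun _ : ℕ => ℝ) 1)) ∈
        closure (Set.range fun n => toWeakSpace ℝ (lp (fun _ : ℕ => ℝ) 1) (x n)) := by
  exact ⟨xx, norm_xx, lorth, weakclosure⟩
end

section
/- Let (A_n)_{n∈ℕ} be a partition of ℕ into nonempty finite sets whose cardinalities |A_n| tend to infinity, and let I = {B ⊆ ℕ : sup_n |A_n ∩ B| < ∞} be the associated ideal on ℕ, with dual filter F = {C ⊆ ℕ : ℕ \ C ∈ I}. Then there exists an L-orthogonal sequence (e_n) in C({0,1}^ℕ) that converges along the filter F, in the weak topology of C({0,1}^ℕ), to the constant function 1; that is, φ(e_n) → φ(1) along F for every continuous linear functional φ on C({0,1}^ℕ). -/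
open Filter Set

lemma continuous_of_depends_on (S : Finset ℕ) (f : (ℕ → Bool) → ℝ)
    (h : ∀ x y : ℕ → Bool, (∀ j ∈ S, x j = y j) → f x = f y) : Continuous f := by
  apply IsLocallyConstant.continuous
  intro s
  rw [isOpen_iff_mem_nhds]
  intro x hx
  have hU : IsOpen {y : ℕ → Bool | ∀ j ∈ S, y j = x j} := by
    have he : {y : ℕ → Bool | ∀ j ∈ S, y j = x j} = ⋂ j ∈ S, (fun y : ℕ → Bool => y j) ⁻¹' {x j} := by
      ext y; simp
    rw [he]
    apply isOpen_biInter_finset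
    intro j _
    exact (continuous_apply (A := fun _ : ℕ => Bool) j).isOpen_preimage {x j} (isOpen_discrete _)
  refine mem_nhds_iff.mpr ⟨_, ?_, hU, fun j hj => rfl⟩
  intro y hy
  have hfy := h y x hy
  simpa [Set.mem_preimage, hfy] using hx



/-- Let `(A n)` be a partition of `ℕ` into nonempty finite sets whose
cardinalities tend to infinity, with associated ideal `I = {B : sup_n |A n ∩ B| < ∞}` and
dual filter `F`. Then there exists an `L`-orthogonal sequence `(e n)` in `C({0,1}^ℕ)` that
converges along `F`, in the weak topology, to the constant function `1`: for every
continuous linear functional `φ` and every `ε > 0`, the set `{m : |φ (e m) - φ 1| ≥ ε}`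
belongs to `I`. -/
theorem stmt13 (A : ℕ → Set ℕ)
    (hdis : Pairwise (Function.onFun Disjoint A)) (hcov : (⋃ n, A n) = Set.univ)
    (hfin : ∀ n, (A n).Finite) (hne : ∀ n, (A n).Nonempty)
    (hcard : ∀ k : ℕ, ∃ m : ℕ, ∀ n ≥ m, k ≤ (A n).ncard) :
    ∃ e : ℕ → C(ℕ → Bool, ℝ),
      (∀ n, ‖e n‖ ≤ 1) ∧
      (∀ g : C(ℕ → Bool, ℝ),
        Filter.Tendsto (fun n => ‖g + e n‖) Filter.atTop (nhds (1 + ‖g‖))) ∧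
      ∀ φ : StrongDual ℝ C(ℕ → Bool, ℝ), ∀ ε : ℝ, 0 < ε →
        ∃ k : ℕ, ∀ n, (A n ∩ {m | ε ≤ |φ (e m) - φ 1|}).encard ≤ (k : ℕ∞) := by
  classical
  have hex : ∀ m : ℕ, ∃ n, m ∈ A n := fun m => Set.mem_iUnion.mp (hcov ▸ Set.mem_univ m)
  set blk : ℕ → ℕ := fun m => Nat.find (hex m) with hblk_def
  have hblk : ∀ m, m ∈ A (blk m) := fun m => Nat.find_spec (hex m)
  have hblk_eq : ∀ m n, m ∈ A n → blk m = n := by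
    intro m n hm
    by_contra hne'
    exact Set.disjoint_left.mp (hdis hne') (hblk m) hm
  set F : ℕ → Finset ℕ := fun m => (hfin (blk m)).toFinset.filter (· < m) with hF_def
  set Q : ℕ → (ℕ → Bool) → Prop := fun m x => x m = true ∧ ∀ j ∈ F m, x j = false with hQ_def
  have hQiff : ∀ (m : ℕ) (x y : ℕ → Bool), (∀ j ∈ insert m (F m), x j = y j) → (Q m x ↔ Q m y) := by
    intro m x y hxy
    simp only [hQ_def]
    constructor
    · rintro ⟨h1, h2⟩
      exact ⟨by rw [← hxy m (Finset.mem_insert_self _ _)]; exact h1,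
        fun j hj => by rw [← hxy j (Finset.mem_insert_of_mem hj)]; exact h2 j hj⟩
    · rintro ⟨h1, h2⟩
      exact ⟨by rw [hxy m (Finset.mem_insert_self _ _)]; exact h1,
        fun j hj => by rw [hxy j (Finset.mem_insert_of_mem hj)]; exact h2 j hj⟩
  set χ : ℕ → C(ℕ → Bool, ℝ) := fun m =>
    ⟨fun x => if Q m x then 1 else 0,
      continuous_of_depends_on (insert m (F m)) _
        (fun x y hxy => if_congr (hQiff m x y hxy) rfl rfl)⟩ with hχ_def
  set e : ℕ → C(ℕ → Bool, ℝ) := fun m => 1 - (2 : ℝ) • χ m with he_def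
  have he : ∀ m x, e m x = if Q m x then (-1 : ℝ) else 1 := by
    intro m x
    simp only [he_def, hχ_def, ContinuousMap.sub_apply, ContinuousMap.smul_apply,
      ContinuousMap.one_apply, ContinuousMap.coe_mk, smul_eq_mul]
    split_ifs <;> norm_num
  
  have hnorm1 : ∀ m, ‖e m‖ ≤ 1 := by
    intro m
    rw [ContinuousMap.norm_le _ zero_le_one]
    intro x
    rw [Real.norm_eq_abs, he]
    split_ifs <;> norm_num
  -- disjointness of the Q's within a block
  have hdisjQ : ∀ m m' : ℕ, ∀ n, m ∈ A n → m' ∈ A n → m < m' → ∀ x, Q m' x → ¬ Q m x := by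
    intro m m' n hm hm' hlt x hQ' hQm
    have hmF : m ∈ F m' := by
      simp only [hF_def, Finset.mem_filter, Set.Finite.mem_toFinset]
      exact ⟨by rw [hblk_eq m' n hm']; exact hm, hlt⟩
    have h1 := hQ'.2 m hmF
    have h2 := hQm.1
    rw [h2] at h1
    simp at h1
  refine ⟨e, hnorm1, ?_, ?_⟩
  · -- L-orthogonality
    intro g
    obtain ⟨x₀, -, hx₀'⟩ := isCompact_univ.exists_isMaxOn Set.univ_nonempty
      g.continuous.abs.continuousOn
    have hx₀ : ∀ y : ℕ → Bool, |g y| ≤ |g x₀| := fun y => hx₀' (Set.mem_univ y)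
    have hnorm : ‖g‖ = |g x₀| := by
      refine le_antisymm ?_ ?_
      · rw [ContinuousMap.norm_le _ (abs_nonneg _)]
        intro x
        rw [Real.norm_eq_abs]
        exact hx₀ x
      · rw [← Real.norm_eq_abs]
        exact ContinuousMap.norm_coe_le_norm g x₀
    set x' : ℕ → (ℕ → Bool) := fun m j => if j = m then true else if j ∈ F m then false else x₀ j
      with hx'_def
    set x'' : ℕ → (ℕ → Bool) := fun m => Function.update x₀ m false with hx''_def
    have hQx' : ∀ m, Q m (x' m) := by
      intro m
      constructor
      · simp [hx'_def]
      · intro j hj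
        have hjm : j < m := by
          simp only [hF_def, Finset.mem_filter] at hj; exact hj.2
        simp only [hx'_def]
        rw [if_neg (Nat.ne_of_lt hjm), if_pos hj]
    have hQx'' : ∀ m, ¬ Q m (x'' m) := by
      intro m hQm
      have h1 := hQm.1
      simp [hx''_def, Function.update_self] at h1
    have hev : ∀ j : ℕ, ∃ N : ℕ, ∀ m ≥ N, m ∉ A (blk j) := by
      intro j
      obtain ⟨b, hb⟩ := (hfin (blk j)).bddAbove
      exact ⟨b + 1, fun m hm hmem => by have := hb hmem; omega⟩
    have htend' : Tendsto x' atTop (nhds x₀) := by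
      rw [tendsto_pi_nhds]
      intro j
      obtain ⟨N, hN⟩ := hev j
      have hevq : ∀ᶠ m in atTop, x' m j = x₀ j := by
        filter_upwards [eventually_ge_atTop (max N (j+1))] with m hm
        have hmj : j ≠ m := by omega
        have hjF : j ∉ F m := by
          simp only [hF_def, Finset.mem_filter, Set.Finite.mem_toFinset]
          rintro ⟨hjA, -⟩
          have hbj : blk j = blk m := hblk_eq j (blk m) hjA
          exact hN m (le_trans (le_max_left _ _) hm) (by rw [hbj]; exact hblk m)
        simp only [hx'_def]
        rw [if_neg hmj, if_neg hjF]
      exact Tendsto.congr' (by filter_upwards [hevq] with m h using h.symm) tendsto_const_nhds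
    have htend'' : Tendsto x'' atTop (nhds x₀) := by
      rw [tendsto_pi_nhds]
      intro j
      have hevq : ∀ᶠ m in atTop, x'' m j = x₀ j := by
        filter_upwards [eventually_ge_atTop (j+1)] with m hm
        exact Function.update_of_ne (by omega) _ _
      exact Tendsto.congr' (by filter_upwards [hevq] with m h using h.symm) tendsto_const_nhds
    have hgx' : Tendsto (fun m => g (x' m)) atTop (nhds (g x₀)) :=
      (g.continuous.tendsto x₀).comp htend'
    have hgx'' : Tendsto (fun m => g (x'' m)) atTop (nhds (g x₀)) :=
      (g.continuous.tendsto x₀).comp htend''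
    have hlow_le : ∀ m, max |g (x' m) - 1| |g (x'' m) + 1| ≤ ‖g + e m‖ := by
      intro m
      apply max_le
      · have h1 : (g + e m) (x' m) = g (x' m) - 1 := by
          rw [ContinuousMap.add_apply, he, if_pos (hQx' m)]; ring
        calc |g (x' m) - 1| = ‖(g + e m) (x' m)‖ := by rw [h1, Real.norm_eq_abs]
          _ ≤ ‖g + e m‖ := ContinuousMap.norm_coe_le_norm _ _
      · have h1 : (g + e m) (x'' m) = g (x'' m) + 1 := by
          rw [ContinuousMap.add_apply, he, if_neg (hQx'' m)]
        calc |g (x'' m) + 1| = ‖(g + e m) (x'' m)‖ := by rw [h1, Real.norm_eq_abs]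
          _ ≤ ‖g + e m‖ := ContinuousMap.norm_coe_le_norm _ _
    have hup : ∀ m, ‖g + e m‖ ≤ 1 + ‖g‖ := by
      intro m
      calc ‖g + e m‖ ≤ ‖g‖ + ‖e m‖ := norm_add_le _ _
        _ ≤ 1 + ‖g‖ := by have := hnorm1 m; linarith
    have hmax : max |g x₀ - 1| |g x₀ + 1| = 1 + ‖g‖ := by
      rw [hnorm]
      rcases le_or_gt 0 (g x₀) with h | h
      · rw [abs_of_nonneg h, abs_of_nonneg (by linarith : (0:ℝ) ≤ g x₀ + 1),
          max_eq_right (abs_le.mpr ⟨by linarith, by linarith⟩)]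
        ring
      · rw [abs_of_neg h, abs_of_nonpos (by linarith : g x₀ - 1 ≤ 0),
          max_eq_left (abs_le.mpr ⟨by linarith, by linarith⟩)]
        ring
    have hlim : Tendsto (fun m => max |g (x' m) - 1| |g (x'' m) + 1|) atTop (nhds (1 + ‖g‖)) := by
      rw [← hmax]
      exact ((hgx'.sub tendsto_const_nhds).abs).max ((hgx''.add tendsto_const_nhds).abs)
    exact tendsto_of_tendsto_of_tendsto_of_le_of_le hlim tendsto_const_nhds hlow_le hup
  · intro φ ε hε
    refine ⟨⌈2 * ‖φ‖ / ε⌉₊, ?_⟩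
    intro n
    have key : ∀ S : Finset ℕ, (↑S : Set ℕ) ⊆ A n → ∑ m ∈ S, |φ (χ m)| ≤ ‖φ‖ := by
      intro S hS
      set σ : ℕ → ℝ := fun m => if 0 ≤ φ (χ m) then 1 else -1 with hσ_def
      set h : C(ℕ → Bool, ℝ) := ∑ m ∈ S, σ m • χ m with hh_def
      have hφh : φ h = ∑ m ∈ S, |φ (χ m)| := by
        rw [hh_def, map_sum]
        refine Finset.sum_congr rfl fun m _ => ?_
        rw [map_smul, smul_eq_mul, hσ_def]
        by_cases h0 : 0 ≤ φ (χ m)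
        · simp [h0, abs_of_nonneg h0]
        · push_neg at h0
          simp [not_le.mpr h0, abs_of_neg h0]
      have hhle : ‖h‖ ≤ 1 := by
        rw [ContinuousMap.norm_le _ zero_le_one]
        intro x
        have hx : h x = ∑ m ∈ S, σ m * (if Q m x then 1 else 0) := by
          simp [hh_def, hχ_def, smul_eq_mul]
        rw [Real.norm_eq_abs]
        by_cases hexm : ∃ m ∈ S, Q m x
        · obtain ⟨m₀, hm₀S, hm₀⟩ := hexm
          have hsum : h x = σ m₀ := by
            rw [hx, Finset.sum_eq_single m₀]
            · rw [if_pos hm₀, mul_one]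
            · intro m hmS hne2
              have hnQ : ¬ Q m x := by
                rcases lt_trichotomy m m₀ with hlt | heq | hgt
                · exact hdisjQ m m₀ n (hS hmS) (hS hm₀S) hlt x hm₀
                · exact absurd heq hne2
                · exact fun hq => hdisjQ m₀ m n (hS hm₀S) (hS hmS) hgt x hq hm₀
              simp [hnQ]
            · intro h'; exact absurd hm₀S h'
          rw [hsum]
          simp only [hσ_def]
          split_ifs <;> norm_num
        · push_neg at hexm
          have hzero : h x = 0 := by
            rw [hx]
            exact Finset.sum_eq_zero fun m hm => by simp [hexm m hm]
          rw [hzero]; norm_num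
      calc ∑ m ∈ S, |φ (χ m)| = φ h := hφh.symm
        _ ≤ |φ h| := le_abs_self _
        _ = ‖φ h‖ := (Real.norm_eq_abs _).symm
        _ ≤ ‖φ‖ * ‖h‖ := φ.le_opNorm h
        _ ≤ ‖φ‖ * 1 := mul_le_mul_of_nonneg_left hhle (norm_nonneg φ)
        _ = ‖φ‖ := mul_one _
    have habs : ∀ m, |φ (e m) - φ 1| = 2 * |φ (χ m)| := by
      intro m
      have h1 : φ (e m) - φ 1 = -(2 * φ (χ m)) := by
        simp only [he_def, map_sub, map_smul, smul_eq_mul]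
        ring
      rw [h1, abs_neg, abs_mul, abs_two]
    by_contra hcon
    push_neg at hcon
    set k := ⌈2 * ‖φ‖ / ε⌉₊ with hk_def
    have hk1 : ((k + 1 : ℕ) : ℕ∞) ≤ (A n ∩ {m | ε ≤ |φ (e m) - φ 1|}).encard := by
      have h2 := Order.add_one_le_of_lt hcon
      exact_mod_cast h2
    obtain ⟨t, hts, htc⟩ := Set.exists_subset_encard_eq hk1
    have htfin : t.Finite := Set.finite_of_encard_eq_coe htc
    have htcard : htfin.toFinset.card = k + 1 := by
      have h3 := htfin.encard_eq_coe_toFinset_card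
      rw [htc] at h3
      exact_mod_cast h3.symm
    have hsub : (↑htfin.toFinset : Set ℕ) ⊆ A n := by
      rw [Set.Finite.coe_toFinset]
      exact hts.trans Set.inter_subset_left
    have hsum := key htfin.toFinset hsub
    have hlb : ((k+1 : ℕ) : ℝ) * (ε / 2) ≤ ∑ m ∈ htfin.toFinset, |φ (χ m)| := by
      have hterm : ∀ m ∈ htfin.toFinset, ε / 2 ≤ |φ (χ m)| := by
        intro m hm
        have hmB := (hts (htfin.mem_toFinset.mp hm)).2
        rw [Set.mem_setOf_eq, habs] at hmB
        linarith
      calc ((k+1 : ℕ) : ℝ) * (ε/2) = htfin.toFinset.card • (ε/2) := by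
            rw [htcard]; simp [nsmul_eq_mul]
        _ ≤ ∑ m ∈ htfin.toFinset, |φ (χ m)| := Finset.card_nsmul_le_sum _ _ _ hterm
    have hceil : 2 * ‖φ‖ / ε ≤ (k : ℝ) := Nat.le_ceil _
    have hφbound : ((k:ℝ) + 1) * (ε/2) ≤ ‖φ‖ := by push_cast at hlb; linarith
    have h2 : (k:ℝ) + 1 ≤ 2 * ‖φ‖ / ε := by
      rw [le_div_iff₀ hε]
      nlinarith
    linarith
end

section
/- Let U be a nonprincipal ultrafilter on ℕ which is not a Q-point. Then there exists an L-orthogonal sequence (e_n) in C({0,1}^ℕ) that converges along U, in the weak topology of C({0,1}^ℕ), to the constant function 1; that is, lim_U φ(e_n) = φ(1) for every continuous linear functional φ on C({0,1}^ℕ). -/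
/-!
Write the partition witnessing that `U` is not a Q-point as the fibres of a finite-to-one map
`p : ℕ → ℕ`. To `n` attach the clopen set `Z n` (`blockCylinder p n`) of sequences whose first
`true` coordinate from `p n` on is `p n + i`, where `i` is the rank of `n` in its fibre, and put
`e n = 1 - 2 • 𝟙_{Z n}` (`blockSign p n`).

Since `Z n` only involves coordinates `≥ p n → ∞` and is neither empty nor everything, `e n` takes
each of the values `±1` arbitrarily close to any given point for large `n`; evaluating `g + e n`
near a maximum point of `|g|` gives L-orthogonality.

The sets `Z n` with `n` in one fibre are pairwise disjoint, so `∑ |φ 𝟙_{Z n}| ≤ ‖φ‖` over each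
fibre, and `{n | ε ≤ |φ 𝟙_{Z n}|}` meets every fibre in at most `‖φ‖ / ε` points. If this set
were in `U`, splitting it by rank within the fibres and then adding one point to each fibre it
misses would produce a set in `U` meeting every fibre in exactly one point.
-/

open Filter Topology Set Function

section Fibers

variable {α ι : Type*}

theorem exists_eq_preimage_singleton_of_iUnion_eq_univ {A : ι → Set α}
    (hdisj : Pairwise (onFun Disjoint A)) (hcover : ⋃ i, A i = univ) :
    ∃ p : α → ι, A = fun i => p ⁻¹' {i} := by
  choose p hp using fun a => mem_iUnion.mp (hcover ▸ mem_univ a : a ∈ ⋃ i, A i)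
  refine ⟨p, funext fun i => Set.ext fun a => ⟨fun ha => ?_, fun h => h ▸ hp a⟩⟩
  by_contra hne
  exact (hdisj hne).ne_of_mem (hp a) ha rfl

theorem Ultrafilter.exists_forall_ncard_inter_fiber_eq_one {U : Ultrafilter α} {p : α → ι}
    (hp : Surjective p) {B : Set α} (hB : B ∈ U)
    (hsub : ∀ i, (B ∩ p ⁻¹' {i}).Subsingleton) :
    ∃ B' ∈ U, ∀ i, (B' ∩ p ⁻¹' {i}).ncard = 1 := by
  have hsel : ∀ i, ∃ a, p a = i ∧ ((B ∩ p ⁻¹' {i}).Nonempty → a ∈ B) := fun i => by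
    by_cases h : (B ∩ p ⁻¹' {i}).Nonempty
    · obtain ⟨a, haB, ha⟩ := h
      exact ⟨a, ha, fun _ => haB⟩
    · obtain ⟨a, ha⟩ := hp i
      exact ⟨a, ha, fun h' => absurd h' h⟩
  choose d hd hdB using hsel
  refine ⟨B ∪ range d, U.mem_of_superset hB subset_union_left, fun i => ncard_eq_one.mpr
    ⟨d i, eq_singleton_iff_unique_mem.mpr ⟨⟨Or.inr ⟨i, rfl⟩, hd i⟩, ?_⟩⟩⟩
  rintro a ⟨haB | ⟨j, rfl⟩, ha⟩
  · exact hsub i ⟨haB, ha⟩ ⟨hdB i ⟨a, haB, ha⟩, hd i⟩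
  · rw [← ha, hd]

theorem Ultrafilter.exists_forall_subsingleton_inter_fiber {U : Ultrafilter ℕ}
    {p : ℕ → ι} (hp : ∀ i, (p ⁻¹' {i}).Finite) {B : Set ℕ} (hB : B ∈ U) {M : ℕ}
    (hM : ∀ i, (B ∩ p ⁻¹' {i}).ncard ≤ M) :
    ∃ B' ∈ U, ∀ i, (B' ∩ p ⁻¹' {i}).Subsingleton := by
  classical
  set rank : ℕ → ℕ := fun n => Nat.count (fun m => m ∈ B ∧ p m = p n) n
  have hrank : ∀ n ∈ B, rank n < M := fun n hn => by
    have hfin : (B ∩ p ⁻¹' {p n}).Finite := (hp _).subset inter_subset_right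
    calc rank n < hfin.toFinset.card :=
          Nat.count_lt_card (p := fun m => m ∈ B ∧ p m = p n) hfin ⟨hn, rfl⟩
      _ = (B ∩ p ⁻¹' {p n}).ncard := (ncard_eq_toFinset_card _ hfin).symm
      _ ≤ M := hM _
  have hcover : (⋃ j ∈ Iio M, {n ∈ B | rank n = j}) ∈ U :=
    U.mem_of_superset hB fun n hn => mem_biUnion (hrank n hn) ⟨hn, rfl⟩
  obtain ⟨j, -, hj⟩ := (Ultrafilter.finite_biUnion_mem_iff (finite_Iio M)).mp hcover
  refine ⟨_, hj, fun i a ⟨⟨haB, haj⟩, ha⟩ b ⟨⟨hbB, hbj⟩, hb⟩ => ?_⟩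
  simp only [mem_preimage, mem_singleton_iff] at ha hb
  simp only [rank, ha, hb] at haj hbj
  exact Nat.count_injective ⟨haB, ha⟩ ⟨hbB, hb⟩ (haj.trans hbj.symm)

theorem Ultrafilter.exists_lt_ncard_inter_fiber {U : Ultrafilter ℕ} {p : ℕ → ι}
    (hfin : ∀ i, (p ⁻¹' {i}).Finite) (hsurj : Surjective p)
    (hU : ∀ B ∈ U, ∃ i, (B ∩ p ⁻¹' {i}).ncard ≠ 1) {B : Set ℕ} (hB : B ∈ U) (M : ℕ) :
    ∃ i, M < (B ∩ p ⁻¹' {i}).ncard := by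
  by_contra! hM
  obtain ⟨B', hB', hsub⟩ := U.exists_forall_subsingleton_inter_fiber hfin hB hM
  obtain ⟨B'', hB'', hone⟩ := U.exists_forall_ncard_inter_fiber_eq_one hsurj hB' hsub
  obtain ⟨i, hi⟩ := hU B'' hB''
  exact hi (hone i)

end Fibers

section Dual

variable {X : Type*} [TopologicalSpace X] [CompactSpace X]

theorem sum_abs_apply_charFn_le {ι : Type*} {s : ι → Set X} (hs : ∀ i, IsClopen (s i))
    {T : Finset ι} (hT : (T : Set ι).PairwiseDisjoint s) (φ : StrongDual ℝ C(X, ℝ)) :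
    ∑ i ∈ T, |φ (LocallyConstant.charFn ℝ (hs i))| ≤ ‖φ‖ := by
  set σ : ι → ℝ := fun i => SignType.sign (φ (LocallyConstant.charFn ℝ (hs i)))
  set f : C(X, ℝ) := ∑ i ∈ T, σ i • (LocallyConstant.charFn ℝ (hs i) : C(X, ℝ))
  have hσ : ∀ i, |σ i| ≤ 1 := fun i => by
    simp only [σ]
    rcases SignType.sign (φ (LocallyConstant.charFn ℝ (hs i))) with _ | _ | _ <;> simp
  have hf : ‖f‖ ≤ 1 := by
    refine (ContinuousMap.norm_le _ zero_le_one).mpr fun x => ?_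
    have hfx : f x = ∑ i ∈ T, σ i * (s i).indicator (1 : X → ℝ) x := by
      simp [f, LocallyConstant.coe_charFn]
    calc ‖f x‖ ≤ ∑ i ∈ T, |σ i * (s i).indicator (1 : X → ℝ) x| := by
          rw [hfx, Real.norm_eq_abs]; exact Finset.abs_sum_le_sum_abs _ T
      _ ≤ ∑ i ∈ T, (s i).indicator (1 : X → ℝ) x := by
          refine Finset.sum_le_sum fun i _ => ?_
          have h0 : 0 ≤ (s i).indicator (1 : X → ℝ) x :=
            indicator_nonneg (fun _ _ => zero_le_one) x
          rw [abs_mul, abs_of_nonneg h0]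
          exact mul_le_of_le_one_left h0 (hσ i)
      _ = (⋃ i ∈ T, s i).indicator (1 : X → ℝ) x :=
          (Finset.indicator_biUnion_apply T s hT x).symm
      _ ≤ 1 := indicator_le_self' (fun _ _ => zero_le_one) x
  calc ∑ i ∈ T, |φ (LocallyConstant.charFn ℝ (hs i))| = φ f := by
        simp [f, map_sum, map_smul, σ, sign_mul_self]
    _ ≤ ‖φ‖ * ‖f‖ := (le_abs_self _).trans (φ.le_opNorm f)
    _ ≤ ‖φ‖ := mul_le_of_le_one_right (norm_nonneg φ) hf

theorem Ultrafilter.tendsto_apply_charFn_zero {α ι : Type*} {U : Ultrafilter α} {p : α → ι}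
    (hU : ∀ B ∈ U, ∀ M : ℕ, ∃ i, M < (B ∩ p ⁻¹' {i}).ncard) {s : α → Set X}
    (hs : ∀ a, IsClopen (s a)) (hdisj : ∀ a b, p a = p b → a ≠ b → Disjoint (s a) (s b))
    (φ : StrongDual ℝ C(X, ℝ)) :
    Tendsto (fun a => φ (LocallyConstant.charFn ℝ (hs a))) U (𝓝 0) := by
  refine Metric.tendsto_nhds.mpr fun ε hε => ?_
  by_contra hcon
  have hC : {a | ε ≤ |φ (LocallyConstant.charFn ℝ (hs a))|} ∈ U := by
    filter_upwards [U.eventually_not.mpr hcon] with a ha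
    simpa [Real.dist_eq] using ha
  obtain ⟨i, hi⟩ := hU _ hC ⌊‖φ‖ / ε⌋₊
  set C := {a | ε ≤ |φ (LocallyConstant.charFn ℝ (hs a))|} ∩ p ⁻¹' {i}
  have hCfin : C.Finite := finite_of_ncard_pos (Nat.zero_lt_of_lt hi)
  have hT : (hCfin.toFinset : Set α).PairwiseDisjoint s := fun a ha b hb hab => by
    simp only [Finite.coe_toFinset] at ha hb
    exact hdisj a b (ha.2.trans hb.2.symm) hab
  have hsum : hCfin.toFinset.card * ε ≤ ‖φ‖ := calc
    hCfin.toFinset.card * ε = ∑ _a ∈ hCfin.toFinset, ε := by simp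
    _ ≤ ∑ a ∈ hCfin.toFinset, |φ (LocallyConstant.charFn ℝ (hs a))| :=
        Finset.sum_le_sum fun a ha => ((Finite.mem_toFinset _).mp ha).1
    _ ≤ ‖φ‖ := sum_abs_apply_charFn_le hs hT φ
  have : C.ncard ≤ ⌊‖φ‖ / ε⌋₊ := by
    rw [ncard_eq_toFinset_card _ hCfin]
    exact Nat.le_floor ((le_div_iff₀ hε).mpr hsum)
  exact this.not_gt hi

theorem tendsto_norm_add_of_forall_exists_tendsto [Nonempty X] {f : ℕ → C(X, ℝ)}
    (hf : ∀ n, ‖f n‖ ≤ 1)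
    (hattain : ∀ x (c : ℝ), |c| = 1 → ∃ y : ℕ → X, Tendsto y atTop (𝓝 x) ∧ ∀ n, f n (y n) = c)
    (g : C(X, ℝ)) : Tendsto (fun n => ‖g + f n‖) atTop (𝓝 (1 + ‖g‖)) := by
  obtain ⟨x, -, hx⟩ :=
    isCompact_univ.exists_isMaxOn univ_nonempty (continuous_abs.comp g.continuous).continuousOn
  have hgx : ‖g‖ = |g x| := le_antisymm
    ((ContinuousMap.norm_le _ (abs_nonneg _)).mpr fun y => hx (mem_univ y)) (g.norm_coe_le_norm x)
  set c : ℝ := if 0 ≤ g x then 1 else -1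
  have hc : |c| = 1 := by simp only [c]; split_ifs <;> simp
  have hgc : |g x + c| = 1 + ‖g‖ := by
    simp only [c, hgx]
    split_ifs with h
    · rw [abs_of_nonneg h, abs_of_nonneg (by linarith)]; ring
    · rw [abs_of_neg (not_le.mp h), abs_of_neg (by linarith)]; ring
  obtain ⟨y, hy, hfy⟩ := hattain x c hc
  have hlim : Tendsto (fun n => |g (y n) + c|) atTop (𝓝 (1 + ‖g‖)) :=
    hgc ▸ ((continuous_abs.comp (g.continuous.add continuous_const)).tendsto x).comp hy
  refine tendsto_of_tendsto_of_tendsto_of_le_of_le hlim tendsto_const_nhds (fun n => ?_) fun n => ?_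
  · simpa [hfy n] using (g + f n).norm_coe_le_norm (y n)
  · linarith [norm_add_le g (f n), hf n]

end Dual

section Cantor

def firstTrueFrom (a i : ℕ) : Set (ℕ → Bool) :=
  {x | x (a + i) = true ∧ ∀ j < i, x (a + j) = false}

theorem isClopen_firstTrueFrom (a i : ℕ) : IsClopen (firstTrueFrom a i) := by
  have hcoord : ∀ m b, IsClopen {x : ℕ → Bool | x m = b} := fun m b =>
    (isClopen_discrete {b}).preimage (continuous_apply m)
  have : firstTrueFrom a i =
      {x | x (a + i) = true} ∩ ⋂ j ∈ Finset.range i, {x | x (a + j) = false} := by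
    ext x; simp [firstTrueFrom]
  rw [this]
  exact (hcoord _ _).inter (isClopen_biInter_finset fun j _ => hcoord _ _)

theorem disjoint_firstTrueFrom {a i i' : ℕ} (h : i ≠ i') :
    Disjoint (firstTrueFrom a i) (firstTrueFrom a i') := by
  rw [Set.disjoint_left]
  rintro x ⟨hi, hlt⟩ ⟨hi', hlt'⟩
  rcases h.lt_or_gt with h | h
  · simp [hlt' i h] at hi
  · simp [hlt i' h] at hi'

theorem exists_eqOn_Iio_mem_firstTrueFrom_iff (x : ℕ → Bool) (a i : ℕ) (b : Bool) :
    ∃ y : ℕ → Bool, EqOn y x (Iio a) ∧ (y ∈ firstTrueFrom a i ↔ b = true) := by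
  refine ⟨fun m => if m < a then x m else b && decide (m = a + i), fun m hm => if_pos hm, ?_⟩
  cases b
  · simp [firstTrueFrom]
  · simpa [firstTrueFrom] using fun j hj => hj.ne

theorem tendsto_nhds_of_eqOn_Iio {γ β : Type*} [TopologicalSpace β] {l : Filter γ}
    {y : γ → ℕ → β} {x : ℕ → β} {a : γ → ℕ} (ha : Tendsto a l atTop)
    (hy : ∀ n, EqOn (y n) x (Iio (a n))) : Tendsto y l (𝓝 x) :=
  tendsto_pi_nhds.mpr fun m => tendsto_const_nhds.congr' <|
    (ha.eventually_gt_atTop m).mono fun n hn => (hy n hn).symm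

def blockCylinder (p : ℕ → ℕ) (n : ℕ) : Set (ℕ → Bool) :=
  firstTrueFrom (p n) (Nat.count (p · = p n) n)

theorem isClopen_blockCylinder (p : ℕ → ℕ) (n : ℕ) : IsClopen (blockCylinder p n) :=
  isClopen_firstTrueFrom _ _

theorem disjoint_blockCylinder {p : ℕ → ℕ} {m n : ℕ} (hp : p m = p n) (hmn : m ≠ n) :
    Disjoint (blockCylinder p m) (blockCylinder p n) := by
  simp only [blockCylinder, hp]
  exact disjoint_firstTrueFrom fun h => hmn (Nat.count_injective (p := (p · = p n)) hp rfl h)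

noncomputable def blockSign (p : ℕ → ℕ) (n : ℕ) : C(ℕ → Bool, ℝ) :=
  1 - (2 : ℝ) • (LocallyConstant.charFn ℝ (isClopen_blockCylinder p n) : C(ℕ → Bool, ℝ))

open scoped Classical in
theorem blockSign_apply (p : ℕ → ℕ) (n : ℕ) (x : ℕ → Bool) :
    blockSign p n x = if x ∈ blockCylinder p n then -1 else 1 := by
  simp only [blockSign, ContinuousMap.sub_apply, ContinuousMap.smul_apply, smul_eq_mul,
    ContinuousMap.one_apply, LocallyConstant.coe_continuousMap, LocallyConstant.coe_charFn,
    indicator]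
  split_ifs <;> norm_num

theorem norm_blockSign_le (p : ℕ → ℕ) (n : ℕ) : ‖blockSign p n‖ ≤ 1 :=
  (ContinuousMap.norm_le _ zero_le_one).mpr fun x => by
    rw [blockSign_apply]; split_ifs <;> simp

theorem exists_tendsto_blockSign_apply_eq {p : ℕ → ℕ} (hp : Tendsto p atTop atTop)
    (x : ℕ → Bool) (c : ℝ) (hc : |c| = 1) :
    ∃ y : ℕ → ℕ → Bool, Tendsto y atTop (𝓝 x) ∧ ∀ n, blockSign p n (y n) = c := by
  choose y hyx hy using fun n =>
    exists_eqOn_Iio_mem_firstTrueFrom_iff x (p n) (Nat.count (p · = p n) n) (decide (c = -1))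
  refine ⟨y, tendsto_nhds_of_eqOn_Iio hp hyx, fun n => ?_⟩
  rw [blockSign_apply, blockCylinder, hy n]
  rcases (abs_eq zero_le_one).mp hc with rfl | rfl <;> norm_num

end Cantor

theorem stmt14_general (U : Ultrafilter ℕ)
    (hnQ : ¬ ∀ A : ℕ → Set ℕ, (∀ n, (A n).Finite) → (∀ n, (A n).Nonempty) →
      Pairwise (Function.onFun Disjoint A) → (⋃ n, A n) = Set.univ →
      ∃ B ∈ U, ∀ n, (B ∩ A n).ncard = 1) :
    ∃ e : ℕ → C(ℕ → Bool, ℝ),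
      (∀ n, ‖e n‖ ≤ 1) ∧
      (∀ g : C(ℕ → Bool, ℝ),
        Filter.Tendsto (fun n => ‖g + e n‖) Filter.atTop (nhds (1 + ‖g‖))) ∧
      ∀ φ : StrongDual ℝ C(ℕ → Bool, ℝ),
        Filter.Tendsto (fun n => φ (e n)) (U : Filter ℕ) (nhds (φ 1)) := by
  push Not at hnQ
  obtain ⟨A, hfin, hne, hdisj, hcover, hnsel⟩ := hnQ
  obtain ⟨p, rfl⟩ := exists_eq_preimage_singleton_of_iUnion_eq_univ hdisj hcover
  have hp : Tendsto p atTop atTop :=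
    Nat.cofinite_eq_atTop ▸ Tendsto.cofinite_of_finite_preimage_singleton hfin
  refine ⟨blockSign p, norm_blockSign_le p, tendsto_norm_add_of_forall_exists_tendsto
    (norm_blockSign_le p) (exists_tendsto_blockSign_apply_eq hp), fun φ => ?_⟩
  have hχ := U.tendsto_apply_charFn_zero
    (fun B hB => U.exists_lt_ncard_inter_fiber hfin hne hnsel hB)
    (isClopen_blockCylinder p) (fun _ _ => disjoint_blockCylinder) φ
  simpa [blockSign, map_sub] using (tendsto_const_nhds (x := φ 1)).sub (hχ.const_mul 2)

/-- Let `U` be a nonprincipal ultrafilter on `ℕ` which is not a `Q`-point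
(a `Q`-point is an ultrafilter such that for every partition of `ℕ` into nonempty finite
sets there is a set in the ultrafilter meeting each piece in exactly one point). Then there
is an `L`-orthogonal sequence `(e n)` in `C({0,1}^ℕ)` converging along `U`, in the weak
topology of `C({0,1}^ℕ)`, to the constant function `1`. -/
theorem stmt14 (U : Ultrafilter ℕ)
    (hnp : ∀ n : ℕ, (U : Filter ℕ) ≠ pure n)
    (hnQ : ¬ ∀ A : ℕ → Set ℕ, (∀ n, (A n).Finite) → (∀ n, (A n).Nonempty) →
      Pairwise (Function.onFun Disjoint A) → (⋃ n, A n) = Set.univ →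
      ∃ B ∈ U, ∀ n, (B ∩ A n).ncard = 1) :
    ∃ e : ℕ → C(ℕ → Bool, ℝ),
      (∀ n, ‖e n‖ ≤ 1) ∧
      (∀ g : C(ℕ → Bool, ℝ),
        Filter.Tendsto (fun n => ‖g + e n‖) Filter.atTop (nhds (1 + ‖g‖))) ∧
      ∀ φ : StrongDual ℝ C(ℕ → Bool, ℝ),
        Filter.Tendsto (fun n => φ (e n)) (U : Filter ℕ) (nhds (φ 1)) :=
  stmt14_general U hnQ
end
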